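/- arXiv:2308.05561 — 6 statements merged into one kernel-verified Lean document; each statement's English description precedes it below -/
import Mathlib

section
/- If α₁, α₂, α₃ are three pairwise distinct secants lying in a common parallel family (i.e. writing αₘ = {iₘ, jₘ}, one has i₁ + j₁ = i₂ + j₂ = i₃ + j₃ in ZMod n), then some ordering of α₁, α₂, α₃ is a forbidden triple. -/
/-- Secants `α₁ = {b₁,c₁}`, `α₂ = {b₂,c₂}`, `α₃ = {b₃,c₃}` of the regular `n`-gon
(vertices identified with `ZMod n`) form a *forbidden triple* if their endpoint sets
are pairwise disjoint and there are `a : ZMod n` and naturals `p₁ < p₂ < p₃`,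
`q₁ < q₂ < q₃` with `p₃ + q₃ ≤ n`, `bₖ = a + pₖ` and `cₖ = a - qₖ`. -/
def IsForbiddenTriple {n : ℕ} (α₁ α₂ α₃ : Sym2 (ZMod n)) : Prop :=
  ∃ (b c : Fin 3 → ZMod n) (a : ZMod n) (p q : Fin 3 → ℕ),
    α₁ = s(b 0, c 0) ∧ α₂ = s(b 1, c 1) ∧ α₃ = s(b 2, c 2) ∧
    (∀ k l, k ≠ l → ({b k, c k} : Set (ZMod n)) ∩ {b l, c l} = ∅) ∧
    StrictMono p ∧ StrictMono q ∧ p 2 + q 2 ≤ n ∧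
    (∀ k, b k = a + (p k : ZMod n)) ∧ (∀ k, c k = a - (q k : ZMod n))

/-- The parallel family of a secant: the sum of its two endpoints in `ZMod n`. -/
def secantSum {n : ℕ} : Sym2 (ZMod n) → ZMod n :=
  Sym2.lift ⟨fun i j => i + j, fun _ _ => add_comm _ _⟩

lemma exists_m_aux {n : ℕ} (hn : 3 ≤ n) (a : ZMod n) (r : ℕ) (hr : r ≤ 1)
    (α : Sym2 (ZMod n)) (hα : secantSum α = 2 * a + (r : ZMod n)) :
    ∃ m : ℕ, r ≤ m ∧ 2 * m ≤ n + r ∧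
      α = s(a + (m : ZMod n), a - ((m - r : ℕ) : ZMod n)) := by
  haveI : NeZero n := ⟨by omega⟩
  induction α using Sym2.ind with
  | _ x y =>
    simp only [secantSum, Sym2.lift_mk] at hα
    set v := (x - a).val with hvdef
    set w := (y - a).val with hwdef
    have hv : ((v : ℕ) : ZMod n) = x - a := ZMod.natCast_zmod_val _
    have hw : ((w : ℕ) : ZMod n) = y - a := ZMod.natCast_zmod_val _
    have hvlt : v < n := ZMod.val_lt _
    have hwlt : w < n := ZMod.val_lt _
    have hsum : ((v + w : ℕ) : ZMod n) = ((r : ℕ) : ZMod n) := by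
      push_cast
      rw [hv, hw]
      linear_combination hα
    have hmod : (v + w) % n = r := by
      have h := (ZMod.natCast_eq_natCast_iff' (v + w) r n).mp hsum
      rwa [Nat.mod_eq_of_lt (show r < n by omega)] at h
    have hcases : v + w = r ∨ v + w = n + r := by
      rcases lt_or_ge (v + w) n with h' | h'
      · left; rwa [Nat.mod_eq_of_lt h'] at hmod
      · right
        rw [Nat.mod_eq_sub_mod h', Nat.mod_eq_of_lt (by omega)] at hmod
        omega
    rcases hcases with hc | hc
    · interval_cases r
      · -- r = 0, so v = w = 0, x = y = a
        have hx : x = a := by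
          have h0 : x - a = 0 := by rw [← hv, show v = 0 by omega]; simp
          linear_combination h0
        have hy : y = a := by
          have h0 : y - a = 0 := by rw [← hw, show w = 0 by omega]; simp
          linear_combination h0
        exact ⟨0, le_refl 0, by omega, by simp [hx, hy]⟩
      · -- r = 1, so {v, w} = {0, 1}
        refine ⟨1, le_refl 1, by omega, ?_⟩
        simp only [Nat.cast_one, Nat.sub_self, Nat.cast_zero, sub_zero]
        rcases (show v = 0 ∧ w = 1 ∨ v = 1 ∧ w = 0 by omega) with ⟨hv0, hw1⟩ | ⟨hv1, hw0⟩
        · have hx : x = a := by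
            have h0 : x - a = 0 := by rw [← hv, hv0]; simp
            linear_combination h0
          have hy : y = a + 1 := by
            have h0 : y - a = 1 := by rw [← hw, hw1]; simp
            linear_combination h0
          rw [hx, hy, Sym2.eq_swap]
        · have hx : x = a + 1 := by
            have h0 : x - a = 1 := by rw [← hv, hv1]; simp
            linear_combination h0
          have hy : y = a := by
            have h0 : y - a = 0 := by rw [← hw, hw0]; simp
            linear_combination h0
          rw [hx, hy]
    · rcases le_total v w with hle | hle
      · refine ⟨v, by omega, by omega, ?_⟩
        have hx : x = a + (v : ZMod n) := by rw [hv]; ring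
        have hy : y = a - ((v - r : ℕ) : ZMod n) := by
          have h1 : ((n - (v - r) : ℕ) : ZMod n) = y - a := by
            rw [show n - (v - r) = w by omega]; exact hw
          rw [Nat.cast_sub (by omega), ZMod.natCast_self, zero_sub] at h1
          linear_combination -h1
        rw [hx, hy]
      · refine ⟨w, by omega, by omega, ?_⟩
        have hy : y = a + (w : ZMod n) := by rw [hw]; ring
        have hx : x = a - ((w - r : ℕ) : ZMod n) := by
          have h1 : ((n - (w - r) : ℕ) : ZMod n) = x - a := by
            rw [show n - (w - r) = v by omega]; exact hv
          rw [Nat.cast_sub (by omega), ZMod.natCast_self, zero_sub] at h1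
          linear_combination -h1
        rw [hx, hy, Sym2.eq_swap]

lemma disj_aux {n : ℕ} (hn : 3 ≤ n) (a : ZMod n) (r u v : ℕ) (hr : r ≤ 1)
    (hru : r ≤ u) (hrv : r ≤ v) (hun : 2 * u ≤ n + r) (hvn : 2 * v ≤ n + r)
    (huv : u ≠ v) :
    ({a + (u : ZMod n), a - ((u - r : ℕ) : ZMod n)} : Set (ZMod n)) ∩
      {a + (v : ZMod n), a - ((v - r : ℕ) : ZMod n)} = ∅ := by
  haveI : NeZero n := ⟨by omega⟩
  have hu' : u < n := by omega
  have hv' : v < n := by omega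
  have castinj : ∀ s t : ℕ, s < n → t < n → ((s : ZMod n) = (t : ZMod n)) → s = t := by
    intro s t hs ht h
    have h' := (ZMod.natCast_eq_natCast_iff' s t n).mp h
    rwa [Nat.mod_eq_of_lt hs, Nat.mod_eq_of_lt ht] at h'
  have castneg : ∀ s t : ℕ, ((s : ZMod n) = -(t : ZMod n)) → n ∣ (s + t) := by
    intro s t h
    have h' : ((s + t : ℕ) : ZMod n) = 0 := by push_cast; rw [h]; ring
    exact (ZMod.natCast_eq_zero_iff _ _).mp h'
  have h1 : a + (u : ZMod n) ≠ a + (v : ZMod n) := by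
    intro h; exact huv (castinj u v hu' hv' (by linear_combination h))
  have h2 : a + (u : ZMod n) ≠ a - ((v - r : ℕ) : ZMod n) := by
    intro h
    have hd := castneg u (v - r) (by linear_combination h)
    have hb : u + (v - r) ≤ n := by omega
    rcases eq_or_lt_of_le hb with h' | h'
    · omega
    · have h0 := Nat.eq_zero_of_dvd_of_lt hd h'
      omega
  have h3 : a - ((u - r : ℕ) : ZMod n) ≠ a + (v : ZMod n) := by
    intro h
    have hd := castneg v (u - r) (by linear_combination -h)
    have hb : v + (u - r) ≤ n := by omega
    rcases eq_or_lt_of_le hb with h' | h'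
    · omega
    · have h0 := Nat.eq_zero_of_dvd_of_lt hd h'
      omega
  have h4 : a - ((u - r : ℕ) : ZMod n) ≠ a - ((v - r : ℕ) : ZMod n) := by
    intro h
    have h' := castinj (u - r) (v - r) (by omega) (by omega) (by linear_combination -h)
    omega
  rw [Set.eq_empty_iff_forall_notMem]
  intro z hz
  simp only [Set.mem_inter_iff, Set.mem_insert_iff, Set.mem_singleton_iff] at hz
  obtain ⟨h5 | h5, h6 | h6⟩ := hz <;> subst h5
  · exact h1 h6
  · exact h2 h6
  · exact h3 h6
  · exact h4 h6

/-- If three pairwise distinct secants lie in a common parallel family, then some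
ordering of them is a forbidden triple. -/
theorem three_parallel_secants_forbidden {n : ℕ} (hn : 3 ≤ n)
    (α₁ α₂ α₃ : Sym2 (ZMod n))
    (hdist : α₁ ≠ α₂ ∧ α₁ ≠ α₃ ∧ α₂ ≠ α₃)
    (hpar : secantSum α₁ = secantSum α₂ ∧ secantSum α₂ = secantSum α₃) :
    ∃ σ : Equiv.Perm (Fin 3),
      IsForbiddenTriple (![α₁, α₂, α₃] (σ 0)) (![α₁, α₂, α₃] (σ 1))
        (![α₁, α₂, α₃] (σ 2)) := by
  haveI : NeZero n := ⟨by omega⟩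
  obtain ⟨h12, h13, h23⟩ := hdist
  obtain ⟨hp12, hp23⟩ := hpar
  obtain ⟨a, r, hr, hsar⟩ : ∃ (a : ZMod n) (r : ℕ), r ≤ 1 ∧
      secantSum α₁ = 2 * a + (r : ZMod n) := by
    refine ⟨(((secantSum α₁).val / 2 : ℕ) : ZMod n), (secantSum α₁).val % 2, by omega, ?_⟩
    have hval : ((2 * ((secantSum α₁).val / 2) + (secantSum α₁).val % 2 : ℕ) : ZMod n)
        = secantSum α₁ := by
      rw [Nat.div_add_mod]
      exact ZMod.natCast_zmod_val _
    refine hval.symm.trans ?_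
    push_cast
    ring
  have e1 : secantSum α₁ = 2 * a + (r : ZMod n) := hsar
  have e2 : secantSum α₂ = 2 * a + (r : ZMod n) := by rw [← hp12]; exact e1
  have e3 : secantSum α₃ = 2 * a + (r : ZMod n) := by rw [← hp23]; exact e2
  obtain ⟨m1, hm1r, hm1n, hm1⟩ := exists_m_aux hn a r hr α₁ e1
  obtain ⟨m2, hm2r, hm2n, hm2⟩ := exists_m_aux hn a r hr α₂ e2
  obtain ⟨m3, hm3r, hm3n, hm3⟩ := exists_m_aux hn a r hr α₃ e3
  set M : Fin 3 → ℕ := ![m1, m2, m3] with hM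
  have hrepr : ∀ i, ![α₁, α₂, α₃] i =
      s(a + (M i : ZMod n), a - ((M i - r : ℕ) : ZMod n)) := by
    intro i
    fin_cases i
    · simpa [hM] using hm1
    · simpa [hM] using hm2
    · simpa [hM] using hm3
  have hMr : ∀ i, r ≤ M i := by
    intro i; fin_cases i <;> simp [hM] <;> assumption
  have hMn : ∀ i, 2 * M i ≤ n + r := by
    intro i; fin_cases i <;> simp [hM] <;> omega
  have d12 : m1 ≠ m2 := by intro h; apply h12; rw [hm1, hm2, h]
  have d13 : m1 ≠ m3 := by intro h; apply h13; rw [hm1, hm3, h]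
  have d23 : m2 ≠ m3 := by intro h; apply h23; rw [hm2, hm3, h]
  have d21 : m2 ≠ m1 := fun h => d12 h.symm
  have d31 : m3 ≠ m1 := fun h => d13 h.symm
  have d32 : m3 ≠ m2 := fun h => d23 h.symm
  have hMinj : Function.Injective M := by
    intro i j hij
    fin_cases i <;> fin_cases j <;>
      first
        | rfl
        | exact absurd (by simpa [hM] using hij) d12
        | exact absurd (by simpa [hM] using hij) d13
        | exact absurd (by simpa [hM] using hij) d23
        | exact absurd (by simpa [hM] using hij) d21
        | exact absurd (by simpa [hM] using hij) d31
        | exact absurd (by simpa [hM] using hij) d32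
  set σ := Tuple.sort M with hσ
  have hPmono : StrictMono (M ∘ σ) :=
    (Tuple.monotone_sort M).strictMono_of_injective (hMinj.comp σ.injective)
  refine ⟨σ, ?_⟩
  unfold IsForbiddenTriple
  refine ⟨fun k => a + ((M (σ k) : ℕ) : ZMod n),
    fun k => a - ((M (σ k) - r : ℕ) : ZMod n), a,
    fun k => M (σ k), fun k => M (σ k) - r,
    hrepr (σ 0), hrepr (σ 1), hrepr (σ 2), ?_, ?_, ?_, ?_,
    fun k => rfl, fun k => rfl⟩
  · intro k l hkl
    have hne' : M (σ k) ≠ M (σ l) := fun h => hkl (σ.injective (hMinj h))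
    exact disj_aux hn a r _ _ hr (hMr _) (hMr _) (hMn _) (hMn _) hne'
  · exact hPmono
  · intro i j hij
    have h1 : M (σ i) < M (σ j) := hPmono hij
    have h2 := hMr (σ i)
    show M (σ i) - r < M (σ j) - r
    omega
  · have h1 := hMn (σ 2)
    have h2 := hMr (σ 2)
    show M (σ 2) + (M (σ 2) - r) ≤ n
    omega
end

section
/- Let n ≥ 3, let M be an Msaft, and suppose the secant {i,j} belongs to M (possibly i = j). Then at least one of the secants {i, j+1} and {i+1, j} belongs to M, and at least one of the secants {i−1, j} and {i, j−1} belongs to M (all arithmetic in ZMod n). -/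
/-- A set of secants avoids forbidden triples if no three of its members form one. -/
def AvoidsForbiddenTriples {n : ℕ} (M : Set (Sym2 (ZMod n))) : Prop :=
  ∀ α₁ ∈ M, ∀ α₂ ∈ M, ∀ α₃ ∈ M, ¬ IsForbiddenTriple α₁ α₂ α₃

/-- An *Msaft* is a maximal set of secants avoiding forbidden triples. -/
def IsMsaft {n : ℕ} (M : Set (Sym2 (ZMod n))) : Prop :=
  AvoidsForbiddenTriples M ∧
    ∀ M' : Set (Sym2 (ZMod n)), AvoidsForbiddenTriples M' → M ⊆ M' → M' = M

namespace MsaftAux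

variable {n : ℕ}

lemma cast_nz {m : ℕ} (h1 : 0 < m) (h2 : m < n) : (m : ZMod n) ≠ 0 := by
  intro h
  rw [ZMod.natCast_eq_zero_iff] at h
  exact absurd (Nat.le_of_dvd h1 h) (by omega)

lemma add_add_ne (a : ZMod n) {x y : ℕ} (h : x < y) (hb : y - x < n) :
    a + (x : ZMod n) ≠ a + (y : ZMod n) := by
  intro h'
  have hx : (x : ZMod n) = y := add_left_cancel h'
  have : ((y - x : ℕ) : ZMod n) = 0 := by rw [Nat.cast_sub h.le, hx, sub_self]
  exact cast_nz (by omega) hb this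

lemma sub_sub_ne (a : ZMod n) {x y : ℕ} (h : x < y) (hb : y - x < n) :
    a - (x : ZMod n) ≠ a - (y : ZMod n) := by
  intro h'
  have hx : (x : ZMod n) = y := sub_right_inj.mp h'
  have : ((y - x : ℕ) : ZMod n) = 0 := by rw [Nat.cast_sub h.le, hx, sub_self]
  exact cast_nz (by omega) hb this

lemma add_sub_ne (a : ZMod n) {x y : ℕ} (h1 : 0 < x + y) (h2 : x + y < n) :
    a + (x : ZMod n) ≠ a - (y : ZMod n) := by
  intro h'
  have : ((x + y : ℕ) : ZMod n) = 0 := by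
    push_cast
    linear_combination h'
  exact cast_nz h1 h2 this

lemma pair_inter_empty {x y z w : ZMod n} (h1 : x ≠ z) (h2 : x ≠ w) (h3 : y ≠ z) (h4 : y ≠ w) :
    ({x, y} : Set (ZMod n)) ∩ {z, w} = ∅ := by
  ext t
  simp only [Set.mem_inter_iff, Set.mem_insert_iff, Set.mem_singleton_iff, Set.mem_empty_iff_false,
    iff_false, not_and]
  rintro (rfl | rfl) <;> rintro (rfl | rfl) <;> simp_all

lemma strictMono3 {p0 p1 p2 : ℕ} (h1 : p0 < p1) (h2 : p1 < p2) :
    StrictMono ![p0, p1, p2] := by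
  intro a b hab
  fin_cases a <;> fin_cases b <;> simp_all <;> omega

lemma mk_triple (a : ZMod n) {p0 p1 p2 q0 q1 q2 : ℕ}
    (hp1 : p0 < p1) (hp2 : p1 < p2) (hq1 : q0 < q1) (hq2 : q1 < q2) (hsum : p2 + q2 ≤ n) :
    IsForbiddenTriple s(a + (p0:ZMod n), a - (q0:ZMod n)) s(a + (p1:ZMod n), a - (q1:ZMod n))
      s(a + (p2:ZMod n), a - (q2:ZMod n)) := by
  have hn : 4 ≤ n := by omega
  refine ⟨fun k => a + ((![p0,p1,p2] k : ℕ) : ZMod n),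
          fun k => a - ((![q0,q1,q2] k : ℕ) : ZMod n), a, ![p0,p1,p2], ![q0,q1,q2],
          by simp, by simp, by simp, ?_, strictMono3 hp1 hp2, strictMono3 hq1 hq2,
          by simp; omega, fun k => rfl, fun k => rfl⟩
  -- disjointness
  have b01 : a + (p0:ZMod n) ≠ a + (p1:ZMod n) := add_add_ne a hp1 (by omega)
  have b02 : a + (p0:ZMod n) ≠ a + (p2:ZMod n) := add_add_ne a (hp1.trans hp2) (by omega)
  have b12 : a + (p1:ZMod n) ≠ a + (p2:ZMod n) := add_add_ne a hp2 (by omega)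
  have c01 : a - (q0:ZMod n) ≠ a - (q1:ZMod n) := sub_sub_ne a hq1 (by omega)
  have c02 : a - (q0:ZMod n) ≠ a - (q2:ZMod n) := sub_sub_ne a (hq1.trans hq2) (by omega)
  have c12 : a - (q1:ZMod n) ≠ a - (q2:ZMod n) := sub_sub_ne a hq2 (by omega)
  have x01 : a + (p0:ZMod n) ≠ a - (q1:ZMod n) := add_sub_ne a (by omega) (by omega)
  have x02 : a + (p0:ZMod n) ≠ a - (q2:ZMod n) := add_sub_ne a (by omega) (by omega)
  have x10 : a + (p1:ZMod n) ≠ a - (q0:ZMod n) := add_sub_ne a (by omega) (by omega)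
  have x12 : a + (p1:ZMod n) ≠ a - (q2:ZMod n) := add_sub_ne a (by omega) (by omega)
  have x20 : a + (p2:ZMod n) ≠ a - (q0:ZMod n) := add_sub_ne a (by omega) (by omega)
  have x21 : a + (p2:ZMod n) ≠ a - (q1:ZMod n) := add_sub_ne a (by omega) (by omega)
  intro k l hkl
  fin_cases k <;> fin_cases l <;>
    first
      | exact absurd rfl hkl
      | (simp only [Matrix.cons_val_zero, Matrix.cons_val_one, Matrix.head_cons,
          Matrix.cons_val_two, Matrix.tail_cons]
         first
           | exact pair_inter_empty b01 x01 x10.symm c01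
           | exact pair_inter_empty b02 x02 x20.symm c02
           | exact pair_inter_empty b12 x12 x21.symm c12
           | exact pair_inter_empty b01.symm x10 x01.symm c01.symm
           | exact pair_inter_empty b02.symm x20 x02.symm c02.symm
           | exact pair_inter_empty b12.symm x21 x12.symm c12.symm)

lemma triple_decomp {α₁ α₂ α₃ : Sym2 (ZMod n)} (h : IsForbiddenTriple α₁ α₂ α₃) :
    ∃ (a : ZMod n) (p0 p1 p2 q0 q1 q2 : ℕ),
      p0 < p1 ∧ p1 < p2 ∧ q0 < q1 ∧ q1 < q2 ∧ p2 + q2 ≤ n ∧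
      α₁ = s(a + (p0:ZMod n), a - (q0:ZMod n)) ∧
      α₂ = s(a + (p1:ZMod n), a - (q1:ZMod n)) ∧
      α₃ = s(a + (p2:ZMod n), a - (q2:ZMod n)) := by
  obtain ⟨b, c, a, p, q, h1, h2, h3, _, hp, hq, hs, hb, hc⟩ := h
  refine ⟨a, p 0, p 1, p 2, q 0, q 1, q 2, hp (by decide), hp (by decide),
    hq (by decide), hq (by decide), hs, ?_, ?_, ?_⟩ <;>
    simp [h1, h2, h3, hb, hc]

lemma chords_ne (a : ZMod n) {px qx py qy : ℕ} (h1 : px < py) (h2 : py - px < n)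
    (h3 : 0 < px + qy) (h4 : px + qy < n) :
    s(a + (px:ZMod n), a - (qx:ZMod n)) ≠ s(a + (py:ZMod n), a - (qy:ZMod n)) := by
  intro hEq
  rw [Sym2.eq_iff] at hEq
  rcases hEq with ⟨h, -⟩ | ⟨h, -⟩
  · exact add_add_ne a h1 h2 h
  · exact add_sub_ne a h3 h4 h

lemma no_triple {M : Set (Sym2 (ZMod n))} (hav : AvoidsForbiddenTriples M)
    {X Y Z : Sym2 (ZMod n)} (hX : X ∈ M) (hY : Y ∈ M) (hZ : Z ∈ M)
    (a : ZMod n) {p0 p1 p2 q0 q1 q2 : ℕ}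
    (hp1 : p0 < p1) (hp2 : p1 < p2) (hq1 : q0 < q1) (hq2 : q1 < q2) (hsum : p2 + q2 ≤ n)
    (e1 : X = s(a + (p0:ZMod n), a - (q0:ZMod n)))
    (e2 : Y = s(a + (p1:ZMod n), a - (q1:ZMod n)))
    (e3 : Z = s(a + (p2:ZMod n), a - (q2:ZMod n))) : False :=
  hav X hX Y hY Z hZ (by rw [e1, e2, e3]; exact mk_triple a hp1 hp2 hq1 hq2 hsum)

lemma pick_slot {M : Set (Sym2 (ZMod n))} (hav : AvoidsForbiddenTriples M)
    {β : Sym2 (ZMod n)}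
    (ht : ∃ α₁ ∈ insert β M, ∃ α₂ ∈ insert β M, ∃ α₃ ∈ insert β M,
          IsForbiddenTriple α₁ α₂ α₃) :
    ∃ (a : ZMod n) (p0 p1 p2 q0 q1 q2 : ℕ),
      p0 < p1 ∧ p1 < p2 ∧ q0 < q1 ∧ q1 < q2 ∧ p2 + q2 ≤ n ∧
      ((β = s(a + (p0:ZMod n), a - (q0:ZMod n)) ∧
         s(a + (p1:ZMod n), a - (q1:ZMod n)) ∈ M ∧ s(a + (p2:ZMod n), a - (q2:ZMod n)) ∈ M) ∨
       (β = s(a + (p1:ZMod n), a - (q1:ZMod n)) ∧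
         s(a + (p0:ZMod n), a - (q0:ZMod n)) ∈ M ∧ s(a + (p2:ZMod n), a - (q2:ZMod n)) ∈ M) ∨
       (β = s(a + (p2:ZMod n), a - (q2:ZMod n)) ∧
         s(a + (p0:ZMod n), a - (q0:ZMod n)) ∈ M ∧ s(a + (p1:ZMod n), a - (q1:ZMod n)) ∈ M)) := by
  obtain ⟨α₁, m1, α₂, m2, α₃, m3, hT⟩ := ht
  obtain ⟨a, p0, p1, p2, q0, q1, q2, hp1, hp2, hq1, hq2, hsum, e1, e2, e3⟩ := triple_decomp hT
  have ne01 : s(a + (p0:ZMod n), a - (q0:ZMod n)) ≠ s(a + (p1:ZMod n), a - (q1:ZMod n)) :=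
    chords_ne a hp1 (by omega) (by omega) (by omega)
  have ne02 : s(a + (p0:ZMod n), a - (q0:ZMod n)) ≠ s(a + (p2:ZMod n), a - (q2:ZMod n)) :=
    chords_ne a (hp1.trans hp2) (by omega) (by omega) (by omega)
  have ne12 : s(a + (p1:ZMod n), a - (q1:ZMod n)) ≠ s(a + (p2:ZMod n), a - (q2:ZMod n)) :=
    chords_ne a hp2 (by omega) (by omega) (by omega)
  rw [Set.mem_insert_iff] at m1 m2 m3
  refine ⟨a, p0, p1, p2, q0, q1, q2, hp1, hp2, hq1, hq2, hsum, ?_⟩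
  rcases m1 with hb1 | m1
  · rcases m2 with hb2 | m2
    · exact absurd (e1.symm.trans (hb1.trans (hb2.symm.trans e2))) ne01
    · rcases m3 with hb3 | m3
      · exact absurd (e1.symm.trans (hb1.trans (hb3.symm.trans e3))) ne02
      · exact Or.inl ⟨hb1.symm.trans e1, e2 ▸ m2, e3 ▸ m3⟩
  · rcases m2 with hb2 | m2
    · rcases m3 with hb3 | m3
      · exact absurd (e2.symm.trans (hb2.trans (hb3.symm.trans e3))) ne12
      · exact Or.inr (Or.inl ⟨hb2.symm.trans e2, e1 ▸ m1, e3 ▸ m3⟩)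
    · rcases m3 with hb3 | m3
      · exact Or.inr (Or.inr ⟨hb3.symm.trans e3, e1 ▸ m1, e2 ▸ m2⟩)
      · exact absurd hT (hav α₁ m1 α₂ m2 α₃ m3)
lemma sym2_congr {x y u v : ZMod n} (h1 : x = u) (h2 : y = v) : s(x, y) = s(u, v) := by
  rw [h1, h2]

lemma sym2_congr_swap {x y u v : ZMod n} (h1 : x = v) (h2 : y = u) : s(x, y) = s(u, v) := by
  rw [h1, h2, Sym2.eq_swap]

lemma one_sided {M : Set (Sym2 (ZMod n))} (hn : 3 ≤ n) (hav : AvoidsForbiddenTriples M)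
    {i j : ZMod n} (hs : s(i, j) ∈ M)
    (ht : ∃ α₁ ∈ insert s(i, j + 1) M, ∃ α₂ ∈ insert s(i, j + 1) M,
          ∃ α₃ ∈ insert s(i, j + 1) M, IsForbiddenTriple α₁ α₂ α₃) :
    ∃ d σ : ℕ, 1 ≤ d ∧ d + 1 ≤ n ∧ j = i + (d : ZMod n) ∧ 1 ≤ σ ∧ σ ≤ d ∧
      s(j, i + (σ : ZMod n)) ∈ M ∧
      ((∃ z₁ z₂ : ℕ, σ < z₁ ∧ z₁ ≤ z₂ ∧ z₂ + 1 ≤ d ∧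
          s(i + (z₁ : ZMod n), i + (z₂ : ZMod n)) ∈ M) ∨
       (∃ z₁ z₂ : ℕ, 1 ≤ z₁ ∧ z₁ ≤ z₂ ∧ z₂ + 1 + d ≤ n ∧
          s(j + (z₁ : ZMod n), j + (z₂ : ZMod n)) ∈ M)) := by
  have hzn : ((n : ℕ) : ZMod n) = 0 := ZMod.natCast_self n
  obtain ⟨a, p0, p1, p2, q0, q1, q2, hp1, hp2, hq1, hq2, hsum, hcase⟩ := pick_slot hav ht
  rcases hcase with ⟨hβ, hY, hZ⟩ | ⟨hβ, hX, hZ⟩ | ⟨hβ, hX, hY⟩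
  · -- slot 0
    rw [Sym2.eq_iff] at hβ
    rcases hβ with ⟨hi, hj1⟩ | ⟨hi, hj1⟩
    · -- orient B : i = a + p0, j + 1 = a - q0
      rcases Nat.lt_or_ge q1 (q0 + 2) with hc | hc
      · -- failure F3k0 : q1 = q0 + 1
        have hq1e : q1 = q0 + 1 := by omega
        have hj : j = a - ((q1 : ℕ) : ZMod n) := by
          rw [hq1e]; push_cast; linear_combination hj1
        refine ⟨n - (q1 + p0), p1 - p0, by omega, by omega, ?_, by omega, by omega, ?_, ?_⟩
        · rw [hi, hj, Nat.cast_sub (by omega : q1 + p0 ≤ n)]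
          push_cast; linear_combination -hzn
        · refine Set.mem_of_eq_of_mem (sym2_congr_swap hj ?_) hY
          rw [hi, Nat.cast_sub (by omega : p0 ≤ p1)]; push_cast; ring
        · refine Or.inl ⟨p2 - p0, n - (p0 + q2), by omega, by omega, by omega,
            Set.mem_of_eq_of_mem (sym2_congr ?_ ?_) hZ⟩
          · rw [hi, Nat.cast_sub (by omega : p0 ≤ p2)]; push_cast; ring
          · rw [hi, Nat.cast_sub (by omega : p0 + q2 ≤ n)]; push_cast
            linear_combination hzn
      · -- success : grow q0
        exact (show False by
          refine no_triple hav hs hY hZ a (p0 := p0) (p1 := p1) (p2 := p2)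
            (q0 := q0 + 1) (q1 := q1) (q2 := q2) hp1 hp2 (by omega) hq2 hsum
            (sym2_congr hi ?_) rfl rfl
          push_cast; linear_combination hj1).elim
    · -- orient A : i = a - q0, j + 1 = a + p0
      rcases Nat.lt_or_ge p0 1 with hc | hc
      · -- p0 = 0
        have hp0 : p0 = 0 := by omega
        have hja : j = a - 1 := by
          rw [hp0] at hj1; push_cast at hj1; linear_combination hj1
        rcases Nat.lt_or_ge q0 1 with hd | hd
        · -- q0 = 0
          have hq0 : q0 = 0 := by omega
          have hia : i = a := by rw [hq0] at hi; push_cast at hi; linear_combination hi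
          rcases Nat.lt_or_ge q1 2 with he | he
          · -- failure F2 : q1 = 1
            have hq1e : q1 = 1 := by omega
            refine ⟨n - 1, p1, by omega, by omega, ?_, by omega, by omega, ?_, ?_⟩
            · rw [hia, hja, Nat.cast_sub (by omega : 1 ≤ n)]
              push_cast; linear_combination -hzn
            · refine Set.mem_of_eq_of_mem (sym2_congr_swap ?_ ?_) hY
              · rw [hja, hq1e]; push_cast; ring
              · rw [hia]
            · refine Or.inl ⟨p2, n - q2, by omega, by omega, by omega,
                Set.mem_of_eq_of_mem (sym2_congr ?_ ?_) hZ⟩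
              · rw [hia]
              · rw [hia, Nat.cast_sub (by omega : q2 ≤ n)]; push_cast
                linear_combination hzn
          · -- success, q' = (1, q1, q2)
            exact (show False by
              refine no_triple hav hs hY hZ a (p0 := 0) (p1 := p1) (p2 := p2)
                (q0 := 1) (q1 := q1) (q2 := q2) (by omega) hp2 (by omega) hq2 hsum
                (sym2_congr ?_ ?_) rfl rfl
              · rw [hia]; push_cast; ring
              · rw [hja]; push_cast; ring).elim
        · -- q0 ≥ 1 : success, base a - 1
          exact (show False by
            refine no_triple hav hs hY hZ (a - 1) (p0 := 0) (p1 := p1 + 1) (p2 := p2 + 1)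
              (q0 := q0 - 1) (q1 := q1 - 1) (q2 := q2 - 1) (by omega) (by omega)
              (by omega) (by omega) (by omega) (sym2_congr_swap ?_ ?_)
              (sym2_congr ?_ ?_) (sym2_congr ?_ ?_)
            · rw [hi, Nat.cast_sub (by omega : 1 ≤ q0)]; push_cast; ring
            · rw [hja]; push_cast; ring
            · push_cast; ring
            · rw [Nat.cast_sub (by omega : 1 ≤ q1)]; push_cast; ring
            · push_cast; ring
            · rw [Nat.cast_sub (by omega : 1 ≤ q2)]; push_cast; ring).elim
      · -- p0 ≥ 1 : success, shrink p0
        exact (show False by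
          refine no_triple hav hs hY hZ a (p0 := p0 - 1) (p1 := p1) (p2 := p2)
            (q0 := q0) (q1 := q1) (q2 := q2) (by omega) hp2 hq1 hq2 hsum
            (sym2_congr_swap hi ?_) rfl rfl
          rw [Nat.cast_sub (by omega : 1 ≤ p0)]; push_cast; linear_combination hj1).elim
  · -- slot 1
    rw [Sym2.eq_iff] at hβ
    rcases hβ with ⟨hi, hj1⟩ | ⟨hi, hj1⟩
    · -- orient B : i = a + p1, j + 1 = a - q1
      rcases Nat.lt_or_ge q2 (q1 + 2) with hc | hc
      · -- failure F3k1 : q2 = q1 + 1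
        have hq2e : q2 = q1 + 1 := by omega
        have hj : j = a - ((q2 : ℕ) : ZMod n) := by
          rw [hq2e]; push_cast; linear_combination hj1
        refine ⟨n - (q2 + p1), p2 - p1, by omega, by omega, ?_, by omega, by omega, ?_, ?_⟩
        · rw [hi, hj, Nat.cast_sub (by omega : q2 + p1 ≤ n)]
          push_cast; linear_combination -hzn
        · refine Set.mem_of_eq_of_mem (sym2_congr_swap hj ?_) hZ
          rw [hi, Nat.cast_sub (by omega : p1 ≤ p2)]; push_cast; ring
        · refine Or.inr ⟨q2 - q0, q2 + p0, by omega, by omega, by omega,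
            Set.mem_of_eq_of_mem (sym2_congr_swap ?_ ?_) hX⟩
          · rw [hj, Nat.cast_sub (by omega : q0 ≤ q2)]; push_cast; ring
          · rw [hj]; push_cast; ring
      · -- success : grow q1
        exact (show False by
          refine no_triple hav hX hs hZ a (p0 := p0) (p1 := p1) (p2 := p2)
            (q0 := q0) (q1 := q1 + 1) (q2 := q2) hp1 hp2 (by omega) (by omega) hsum
            rfl (sym2_congr hi ?_) rfl
          push_cast; linear_combination hj1).elim
    · -- orient A : i = a - q1, j + 1 = a + p1
      rcases Nat.lt_or_ge p1 (p0 + 2) with hc | hc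
      · -- failure F1k1 : p1 = p0 + 1
        have hp1e : p1 = p0 + 1 := by omega
        have hj : j = a + ((p0 : ℕ) : ZMod n) := by
          rw [hp1e] at hj1; push_cast at hj1; linear_combination hj1
        refine ⟨q1 + p0, q1 - q0, by omega, by omega, ?_, by omega, by omega, ?_, ?_⟩
        · rw [hi, hj]; push_cast; ring
        · refine Set.mem_of_eq_of_mem (sym2_congr hj ?_) hX
          rw [hi, Nat.cast_sub (by omega : q0 ≤ q1)]; push_cast; ring
        · refine Or.inr ⟨p2 - p0, n - (p0 + q2), by omega, by omega, by omega,
            Set.mem_of_eq_of_mem (sym2_congr ?_ ?_) hZ⟩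
          · rw [hj, Nat.cast_sub (by omega : p0 ≤ p2)]; push_cast; ring
          · rw [hj, Nat.cast_sub (by omega : p0 + q2 ≤ n)]; push_cast
            linear_combination hzn
      · -- success : shrink p1
        exact (show False by
          refine no_triple hav hX hs hZ a (p0 := p0) (p1 := p1 - 1) (p2 := p2)
            (q0 := q0) (q1 := q1) (q2 := q2) (by omega) (by omega) hq1 hq2 hsum
            rfl (sym2_congr_swap hi ?_) rfl
          rw [Nat.cast_sub (by omega : 1 ≤ p1)]; push_cast; linear_combination hj1).elim
  · -- slot 2
    rw [Sym2.eq_iff] at hβ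
    rcases hβ with ⟨hi, hj1⟩ | ⟨hi, hj1⟩
    · -- orient B : i = a + p2, j + 1 = a - q2
      rcases Nat.lt_or_ge (p2 + q2) n with hc | hc
      · -- success : grow q2
        exact (show False by
          refine no_triple hav hX hY hs a (p0 := p0) (p1 := p1) (p2 := p2)
            (q0 := q0) (q1 := q1) (q2 := q2 + 1) hp1 hp2 hq1 (by omega) (by omega)
            rfl rfl (sym2_congr hi ?_)
          push_cast; linear_combination hj1).elim
      · -- p2 + q2 = n
        have hpq : p2 + q2 = n := by omega
        have hpq0 : ((p2 : ℕ) : ZMod n) + ((q2 : ℕ) : ZMod n) = 0 := by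
          have h2 : (((p2 + q2 : ℕ)) : ZMod n) = 0 := by rw [hpq]; exact hzn
          push_cast at h2; linear_combination h2
        have hia : i = a - ((q2 : ℕ) : ZMod n) := by
          rw [hi]; linear_combination hpq0
        rcases Nat.lt_or_ge p2 (p1 + 2) with hc2 | hc2
        · -- failure F4 : p2 = p1 + 1
          have hp2e : p2 = p1 + 1 := by omega
          have hp2c : ((p2 : ℕ) : ZMod n) = ((p1 : ℕ) : ZMod n) + 1 := by
            rw [hp2e]; push_cast; ring
          have hj : j = a + ((p1 : ℕ) : ZMod n) := by
            linear_combination hj1 - hpq0 + hp2c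
          refine ⟨n - 1, q2 - q1, by omega, by omega, ?_, by omega, by omega, ?_, ?_⟩
          · rw [hj, hia, Nat.cast_sub (by omega : 1 ≤ n)]; push_cast
            linear_combination hpq0 - hp2c - hzn
          · refine Set.mem_of_eq_of_mem (sym2_congr hj ?_) hY
            rw [hia, Nat.cast_sub (by omega : q1 ≤ q2)]; push_cast; ring
          · refine Or.inl ⟨q2 - q0, q2 + p0, by omega, by omega, by omega,
              Set.mem_of_eq_of_mem (sym2_congr_swap ?_ ?_) hX⟩
            · rw [hia, Nat.cast_sub (by omega : q0 ≤ q2)]; push_cast; ring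
            · rw [hia]; push_cast; ring
        · -- success : rebase at a + p2
          exact (show False by
            refine no_triple hav hs hY hX (a + ((p2 : ℕ) : ZMod n))
              (p0 := 0) (p1 := q2 - q1) (p2 := q2 - q0)
              (q0 := 1) (q1 := p2 - p1) (q2 := p2 - p0) (by omega) (by omega)
              (by omega) (by omega) (by omega)
              (sym2_congr ?_ ?_) (sym2_congr_swap ?_ ?_) (sym2_congr_swap ?_ ?_)
            · rw [hi]; push_cast; ring
            · push_cast; linear_combination hj1 - hpq0
            · rw [Nat.cast_sub (by omega : p1 ≤ p2)]; push_cast; ring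
            · rw [Nat.cast_sub (by omega : q1 ≤ q2)]; push_cast; linear_combination -hpq0
            · rw [Nat.cast_sub (by omega : p0 ≤ p2)]; push_cast; ring
            · rw [Nat.cast_sub (by omega : q0 ≤ q2)]; push_cast; linear_combination -hpq0).elim
    · -- orient A : i = a - q2, j + 1 = a + p2
      rcases Nat.lt_or_ge p2 (p1 + 2) with hc | hc
      · -- failure F1k2 : p2 = p1 + 1
        have hp2e : p2 = p1 + 1 := by omega
        have hj : j = a + ((p1 : ℕ) : ZMod n) := by
          rw [hp2e] at hj1; push_cast at hj1; linear_combination hj1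
        refine ⟨q2 + p1, q2 - q1, by omega, by omega, ?_, by omega, by omega, ?_, ?_⟩
        · rw [hi, hj]; push_cast; ring
        · refine Set.mem_of_eq_of_mem (sym2_congr hj ?_) hY
          rw [hi, Nat.cast_sub (by omega : q1 ≤ q2)]; push_cast; ring
        · refine Or.inl ⟨q2 - q0, q2 + p0, by omega, by omega, by omega,
            Set.mem_of_eq_of_mem (sym2_congr_swap ?_ ?_) hX⟩
          · rw [hi, Nat.cast_sub (by omega : q0 ≤ q2)]; push_cast; ring
          · rw [hi]; push_cast; ring
      · -- success : shrink p2
        exact (show False by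
          refine no_triple hav hX hY hs a (p0 := p0) (p1 := p1) (p2 := p2 - 1)
            (q0 := q0) (q1 := q1) (q2 := q2) hp1 (by omega) hq1 hq2 (by omega)
            rfl rfl (sym2_congr_swap hi ?_)
          rw [Nat.cast_sub (by omega : 1 ≤ p2)]; push_cast; linear_combination hj1).elim

lemma combine {M : Set (Sym2 (ZMod n))} (hn : 3 ≤ n) (hav : AvoidsForbiddenTriples M)
    {i j : ZMod n} (hs : s(i, j) ∈ M) (d₁ σ₁ d₂ σ₂ : ℕ)
    (hd₁ : 1 ≤ d₁) (hd₁n : d₁ + 1 ≤ n) (hij : j = i + (d₁ : ZMod n))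
    (hσ₁ : 1 ≤ σ₁) (hσ₁d : σ₁ ≤ d₁) (hear₁ : s(j, i + (σ₁ : ZMod n)) ∈ M)
    (hcomp₁ : (∃ z₁ z₂ : ℕ, σ₁ < z₁ ∧ z₁ ≤ z₂ ∧ z₂ + 1 ≤ d₁ ∧
        s(i + (z₁ : ZMod n), i + (z₂ : ZMod n)) ∈ M) ∨
      (∃ z₁ z₂ : ℕ, 1 ≤ z₁ ∧ z₁ ≤ z₂ ∧ z₂ + 1 + d₁ ≤ n ∧
        s(j + (z₁ : ZMod n), j + (z₂ : ZMod n)) ∈ M))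
    (hd₂ : 1 ≤ d₂) (hd₂n : d₂ + 1 ≤ n) (hji : i = j + (d₂ : ZMod n))
    (hσ₂ : 1 ≤ σ₂) (hσ₂d : σ₂ ≤ d₂) (hear₂ : s(i, j + (σ₂ : ZMod n)) ∈ M)
    (hcomp₂ : (∃ z₁ z₂ : ℕ, σ₂ < z₁ ∧ z₁ ≤ z₂ ∧ z₂ + 1 ≤ d₂ ∧
        s(j + (z₁ : ZMod n), j + (z₂ : ZMod n)) ∈ M) ∨
      (∃ z₁ z₂ : ℕ, 1 ≤ z₁ ∧ z₁ ≤ z₂ ∧ z₂ + 1 + d₂ ≤ n ∧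
        s(i + (z₁ : ZMod n), i + (z₂ : ZMod n)) ∈ M)) : False := by
  have hzn : ((n : ℕ) : ZMod n) = 0 := ZMod.natCast_self n
  have hddc : ((d₁ : ℕ) : ZMod n) + ((d₂ : ℕ) : ZMod n) = 0 := by
    linear_combination -hij - hji
  have hdd : d₁ + d₂ = n := by
    have h0 : (((d₁ + d₂ : ℕ)) : ZMod n) = 0 := by push_cast; linear_combination hddc
    obtain ⟨k, hk⟩ := (ZMod.natCast_eq_zero_iff _ n).mp h0
    have h2 : n * 2 ≤ n * k ∨ k = 0 ∨ k = 1 := by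
      rcases k with _ | _ | k
      · tauto
      · tauto
      · exact Or.inl (Nat.mul_le_mul_left n (by omega))
    rcases h2 with h2 | h2 | h2
    · omega
    · subst h2; omega
    · subst h2; omega
  rcases hcomp₁ with ⟨z₁, z₂, hz1, hz2, hz3, hZ⟩ | ⟨z₁, z₂, hz1, hz2, hz3, hZ⟩
  · -- comp₁ type A : triple (Z, ear₁, ear₂)
    refine no_triple hav hZ hear₁ hear₂ (i + (z₁ : ZMod n))
      (p0 := z₂ - z₁) (p1 := d₁ - z₁) (p2 := d₁ + σ₂ - z₁)
      (q0 := 0) (q1 := z₁ - σ₁) (q2 := z₁)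
      (by omega) (by omega) (by omega) (by omega) (by omega)
      (sym2_congr_swap ?_ ?_) (sym2_congr ?_ ?_) (sym2_congr_swap ?_ ?_)
    · push_cast; ring
    · rw [Nat.cast_sub (by omega : z₁ ≤ z₂)]; push_cast; ring
    · rw [hij, Nat.cast_sub (by omega : z₁ ≤ d₁)]; push_cast; ring
    · rw [Nat.cast_sub (by omega : σ₁ ≤ z₁)]; push_cast; ring
    · push_cast; ring
    · rw [hij, Nat.cast_sub (by omega : z₁ ≤ d₁ + σ₂)]; push_cast; ring
  rcases hcomp₂ with ⟨w₁, w₂, hw1, hw2, hw3, hW⟩ | ⟨w₁, w₂, hw1, hw2, hw3, hW⟩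
  · -- comp₁ B, comp₂ A : triple (W, ear₂, ear₁)
    refine no_triple hav hW hear₂ hear₁ (j + (w₁ : ZMod n))
      (p0 := w₂ - w₁) (p1 := d₂ - w₁) (p2 := d₂ + σ₁ - w₁)
      (q0 := 0) (q1 := w₁ - σ₂) (q2 := w₁)
      (by omega) (by omega) (by omega) (by omega) (by omega)
      (sym2_congr_swap ?_ ?_) (sym2_congr ?_ ?_) (sym2_congr_swap ?_ ?_)
    · push_cast; ring
    · rw [Nat.cast_sub (by omega : w₁ ≤ w₂)]; push_cast; ring
    · rw [hji, Nat.cast_sub (by omega : w₁ ≤ d₂)]; push_cast; ring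
    · rw [Nat.cast_sub (by omega : σ₂ ≤ w₁)]; push_cast; ring
    · push_cast; ring
    · rw [hji, Nat.cast_sub (by omega : w₁ ≤ d₂ + σ₁)]; push_cast; ring
  · -- comp₁ B, comp₂ B : triple (W, s(i,j), Z)
    refine no_triple hav hW hs hZ (i + (w₁ : ZMod n))
      (p0 := w₂ - w₁) (p1 := d₁ - w₁) (p2 := d₁ + z₁ - w₁)
      (q0 := 0) (q1 := w₁) (q2 := w₁ + d₂ - z₂)
      (by omega) (by omega) (by omega) (by omega) (by omega)
      (sym2_congr_swap ?_ ?_) (sym2_congr_swap ?_ ?_) (sym2_congr ?_ ?_)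
    · push_cast; ring
    · rw [Nat.cast_sub (by omega : w₁ ≤ w₂)]; push_cast; ring
    · push_cast; ring
    · rw [hij, Nat.cast_sub (by omega : w₁ ≤ d₁)]; push_cast; ring
    · rw [hij, Nat.cast_sub (by omega : w₁ ≤ d₁ + z₁)]; push_cast; ring
    · rw [hij, Nat.cast_sub (by omega : z₂ ≤ w₁ + d₂)]; push_cast
      linear_combination hddc

lemma forbidden_map_neg {α₁ α₂ α₃ : Sym2 (ZMod n)} (h : IsForbiddenTriple α₁ α₂ α₃) :
    IsForbiddenTriple (α₁.map (fun x => -x)) (α₂.map (fun x => -x)) (α₃.map (fun x => -x)) := by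
  obtain ⟨a, p0, p1, p2, q0, q1, q2, hp1, hp2, hq1, hq2, hsum, e1, e2, e3⟩ := triple_decomp h
  rw [e1, e2, e3, Sym2.map_pair_eq, Sym2.map_pair_eq, Sym2.map_pair_eq]
  have k1 : ∀ (p q : ℕ), s(-(a + (p : ZMod n)), -(a - (q : ZMod n))) =
      s((-a) + (q : ZMod n), (-a) - (p : ZMod n)) := fun p q =>
    sym2_congr_swap (by ring) (by ring)
  rw [k1, k1, k1]
  exact mk_triple (-a) hq1 hq2 hp1 hp2 (by omega)

lemma map_neg_invol (γ : Sym2 (ZMod n)) :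
    (γ.map (fun x => -x)).map (fun x => -x) = γ := by
  induction γ using Sym2.ind with
  | _ x y => rw [Sym2.map_pair_eq, Sym2.map_pair_eq, neg_neg, neg_neg]

lemma avoids_map_neg {M : Set (Sym2 (ZMod n))} (h : AvoidsForbiddenTriples M) :
    AvoidsForbiddenTriples ((fun γ : Sym2 (ZMod n) => γ.map (fun x => -x)) '' M) := by
  rintro α₁ ⟨β₁, hb1, rfl⟩ α₂ ⟨β₂, hb2, rfl⟩ α₃ ⟨β₃, hb3, rfl⟩ hT
  have h2 := forbidden_map_neg hT
  rw [map_neg_invol, map_neg_invol, map_neg_invol] at h2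
  exact h β₁ hb1 β₂ hb2 β₃ hb3 h2

lemma image_map_neg_invol (S : Set (Sym2 (ZMod n))) :
    (fun γ : Sym2 (ZMod n) => γ.map (fun x => -x)) ''
      ((fun γ : Sym2 (ZMod n) => γ.map (fun x => -x)) '' S) = S := by
  rw [← Set.image_comp]
  have : ((fun γ : Sym2 (ZMod n) => γ.map (fun x => -x)) ∘
      (fun γ : Sym2 (ZMod n) => γ.map (fun x => -x))) = id := by
    funext γ; exact map_neg_invol γ
  rw [this, Set.image_id]

lemma msaft_map_neg {M : Set (Sym2 (ZMod n))} (h : IsMsaft M) :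
    IsMsaft ((fun γ : Sym2 (ZMod n) => γ.map (fun x => -x)) '' M) := by
  refine ⟨avoids_map_neg h.1, ?_⟩
  intro M'' hav'' hsub
  have hMN : M ⊆ (fun γ : Sym2 (ZMod n) => γ.map (fun x => -x)) '' M'' := by
    intro x hx
    exact ⟨x.map (fun y => -y), hsub ⟨x, hx, rfl⟩, map_neg_invol x⟩
  have hNM := h.2 _ (avoids_map_neg hav'') hMN
  calc M'' = (fun γ : Sym2 (ZMod n) => γ.map (fun x => -x)) ''
        ((fun γ : Sym2 (ZMod n) => γ.map (fun x => -x)) '' M'') :=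
      (image_map_neg_invol M'').symm
    _ = _ := by rw [hNM]

lemma move_up {M : Set (Sym2 (ZMod n))} (hn : 3 ≤ n)
    (hM : IsMsaft M) (i j : ZMod n) (hij : s(i, j) ∈ M) :
    s(i, j + 1) ∈ M ∨ s(i + 1, j) ∈ M := by
  by_cases h1 : s(i, j + 1) ∈ M
  · exact Or.inl h1
  by_cases h2 : s(i + 1, j) ∈ M
  · exact Or.inr h2
  exfalso
  have mk_ht : ∀ β : Sym2 (ZMod n), β ∉ M →
      ∃ α₁ ∈ insert β M, ∃ α₂ ∈ insert β M, ∃ α₃ ∈ insert β M,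
        IsForbiddenTriple α₁ α₂ α₃ := by
    intro β hβ
    have hne : insert β M ≠ M := fun he => hβ (he ▸ Set.mem_insert _ _)
    have hnav : ¬ AvoidsForbiddenTriples (insert β M) := fun hav =>
      hne (hM.2 _ hav (Set.subset_insert _ _))
    by_contra hth
    exact hnav (fun α₁ m1 α₂ m2 α₃ m3 hT => hth ⟨α₁, m1, α₂, m2, α₃, m3, hT⟩)
  have ht1 := mk_ht _ h1
  have ht2 := mk_ht (s(j, i + 1)) (by rwa [Sym2.eq_swap])
  have hji : s(j, i) ∈ M := by rwa [Sym2.eq_swap]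
  obtain ⟨d₁, σ₁, a1, a2, a3, a4, a5, a6, a7⟩ := one_sided hn hM.1 hij ht1
  obtain ⟨d₂, σ₂, b1, b2, b3, b4, b5, b6, b7⟩ := one_sided hn hM.1 hji ht2
  exact combine hn hM.1 hij d₁ σ₁ d₂ σ₂ a1 a2 a3 a4 a5 a6 a7 b1 b2 b3 b4 b5 b6 b7

end MsaftAux

/-- Moving lemma: if `{i,j}` belongs to an Msaft `M`, then at least one of
`{i,j+1}`, `{i+1,j}` belongs to `M`, and at least one of `{i-1,j}`, `{i,j-1}`
belongs to `M`. -/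
theorem msaft_move {n : ℕ} (hn : 3 ≤ n) (M : Set (Sym2 (ZMod n)))
    (hM : IsMsaft M) (i j : ZMod n) (hij : s(i, j) ∈ M) :
    (s(i, j + 1) ∈ M ∨ s(i + 1, j) ∈ M) ∧
      (s(i - 1, j) ∈ M ∨ s(i, j - 1) ∈ M) := by
  constructor
  · exact MsaftAux.move_up hn hM i j hij
  · have hM' := MsaftAux.msaft_map_neg hM
    have hij' : s(-i, -j) ∈ (fun γ : Sym2 (ZMod n) => γ.map (fun x => -x)) '' M :=
      ⟨s(i, j), hij, by show Sym2.map _ s(i,j) = _; rw [Sym2.map_pair_eq]⟩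
    have hmem : ∀ γ : Sym2 (ZMod n),
        γ.map (fun x => -x) ∈ (fun γ : Sym2 (ZMod n) => γ.map (fun x => -x)) '' M →
        γ ∈ M := by
      rintro γ ⟨δ, hδ, heq⟩
      have : δ = γ := by
        have := congrArg (fun β : Sym2 (ZMod n) => β.map (fun x => -x)) heq
        simpa [MsaftAux.map_neg_invol] using this
      exact this ▸ hδ
    rcases MsaftAux.move_up hn hM' (-i) (-j) hij' with h | h
    · refine Or.inr (hmem _ ?_)
      have he : (s(i, j - 1) : Sym2 (ZMod n)).map (fun x => -x) = s(-i, -j + 1) := by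
        rw [Sym2.map_pair_eq]
        exact MsaftAux.sym2_congr rfl (by ring)
      rwa [he]
    · refine Or.inl (hmem _ ?_)
      have he : (s(i - 1, j) : Sym2 (ZMod n)).map (fun x => -x) = s(-i + 1, -j) := by
        rw [Sym2.map_pair_eq]
        exact MsaftAux.sym2_congr (by ring) rfl
      rwa [he]
end

section
/- Fix n ≥ 3 and let M be an Msaft. Then for every k ∈ ZMod n, M contains exactly two secants {i,j} with i + j = k; in particular, M has cardinality 2n. -/
namespace MsaftAux

/-- The chord with endpoints `a + l` and `a + r`. -/
def chord {n : ℕ} (a : ZMod n) (l r : ℤ) : Sym2 (ZMod n) :=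
  s(a + (l : ZMod n), a + (r : ZMod n))

lemma chord_swap {n : ℕ} (a : ZMod n) (l r : ℤ) : chord a l r = chord a r l :=
  Sym2.eq_swap

lemma chord_subn {n : ℕ} (a : ZMod n) (l r : ℤ) : chord a (l - n) r = chord a l r := by
  unfold chord
  congr 2
  push_cast
  simp [ZMod.natCast_self]

lemma secantSum_chord {n : ℕ} (a : ZMod n) (l r : ℤ) :
    secantSum (chord a l r) = a + a + (l : ZMod n) + (r : ZMod n) := by
  show (a + (l : ZMod n)) + (a + (r : ZMod n)) = _
  ring

lemma cast_ne_cast {n : ℕ} {X Y : ℤ} (h1 : X ≠ Y) (h2 : |X - Y| < n) :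
    (X : ZMod n) ≠ (Y : ZMod n) := by
  intro h
  have h0 : ((X - Y : ℤ) : ZMod n) = 0 := by push_cast; rw [h]; ring
  have hd : (n : ℤ) ∣ (X - Y) := (ZMod.intCast_zmod_eq_zero_iff_dvd _ n).mp h0
  have : (n : ℤ) ≤ |X - Y| := Int.le_of_dvd (abs_pos.mpr (by omega)) ((dvd_abs _ _).mpr hd)
  exact absurd h2 (not_lt.mpr this)

lemma add_cast_ne {n : ℕ} (a : ZMod n) {X Y : ℤ} (h1 : X ≠ Y) (h2 : |X - Y| < n) :
    a + (X : ZMod n) ≠ a + (Y : ZMod n) := by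
  intro h
  exact cast_ne_cast h1 h2 (by exact add_left_cancel h)

lemma strictMono3_s5 {f : Fin 3 → ℕ} (h01 : f 0 < f 1) (h12 : f 1 < f 2) : StrictMono f := by
  intro x y h
  fin_cases x <;> fin_cases y <;> simp_all [Fin.lt_def] <;> omega

lemma pair_disj {n : ℕ} (a : ZMod n) (X1 Y1 X2 Y2 : ℤ)
    (h : X1 ≠ X2 ∧ X1 ≠ Y2 ∧ Y1 ≠ X2 ∧ Y1 ≠ Y2 ∧
      |X1 - X2| < n ∧ |X1 - Y2| < n ∧ |Y1 - X2| < n ∧ |Y1 - Y2| < n) :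
    ({a + (X1 : ZMod n), a + (Y1 : ZMod n)} : Set (ZMod n)) ∩
      {a + (X2 : ZMod n), a + (Y2 : ZMod n)} = ∅ := by
  obtain ⟨h1, h2, h3, h4, b1, b2, b3, b4⟩ := h
  rw [Set.eq_empty_iff_forall_notMem]
  rintro x ⟨hx1, hx2⟩
  simp only [Set.mem_insert_iff, Set.mem_singleton_iff] at hx1 hx2
  rcases hx1 with h | h <;> rcases hx2 with h' | h' <;> rw [h] at h'
  · exact add_cast_ne a h1 b1 h'
  · exact add_cast_ne a h2 b2 h'
  · exact add_cast_ne a h3 b3 h'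
  · exact add_cast_ne a h4 b4 h'

lemma cast_add_toNat {n : ℕ} (a : ZMod n) (X Y : ℤ) (h : Y ≤ X) :
    a + (X : ZMod n) = a + (Y : ZMod n) + (((X - Y).toNat : ℕ) : ZMod n) := by
  have hcast : (((X - Y).toNat : ℕ) : ZMod n) = ((X - Y : ℤ) : ZMod n) := by
    rw [← Int.cast_natCast, Int.toNat_of_nonneg (by omega)]
  rw [hcast]; push_cast; ring

lemma cast_sub_toNat {n : ℕ} (a : ZMod n) (X Y : ℤ) (h : X ≤ Y) :
    a + (X : ZMod n) = a + (Y : ZMod n) - (((Y - X).toNat : ℕ) : ZMod n) := by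
  have hcast : (((Y - X).toNat : ℕ) : ZMod n) = ((Y - X : ℤ) : ZMod n) := by
    rw [← Int.cast_natCast, Int.toNat_of_nonneg (by omega)]
  rw [hcast]; push_cast; ring

/-- L1: a strictly nested integer chain of arcs gives a forbidden triple. -/
lemma forbidden_of_chain {n : ℕ} (a : ZMod n) (l1 r1 l2 r2 l3 r3 : ℤ)
    (h32 : l3 < l2) (h21 : l2 < l1) (h11 : l1 ≤ r1) (h12 : r1 < r2) (h23 : r2 < r3)
    (hspan : r3 - l3 ≤ n) :
    IsForbiddenTriple (chord a l1 r1) (chord a l2 r2) (chord a l3 r3) := by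
  refine ⟨![a + (r1 : ZMod n), a + (r2 : ZMod n), a + (r3 : ZMod n)],
    ![a + (l1 : ZMod n), a + (l2 : ZMod n), a + (l3 : ZMod n)], a + (l1 : ZMod n),
    ![(r1 - l1).toNat, (r2 - l1).toNat, (r3 - l1).toNat],
    ![(l1 - l1).toNat, (l1 - l2).toNat, (l1 - l3).toNat],
    chord_swap a l1 r1, chord_swap a l2 r2, chord_swap a l3 r3, ?_, ?_, ?_, ?_, ?_, ?_⟩
  · intro k m hkm
    fin_cases k <;> fin_cases m <;>
      first
      | exact absurd rfl hkm
      | exact pair_disj a _ _ _ _ (by simp only [abs_sub_lt_iff]; omega)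
  · exact strictMono3_s5 (show (r1 - l1).toNat < (r2 - l1).toNat by omega)
      (show (r2 - l1).toNat < (r3 - l1).toNat by omega)
  · exact strictMono3_s5 (show (l1 - l1).toNat < (l1 - l2).toNat by omega)
      (show (l1 - l2).toNat < (l1 - l3).toNat by omega)
  · show (r3 - l1).toNat + (l1 - l3).toNat ≤ n
    omega
  · intro m
    fin_cases m
    · exact cast_add_toNat a r1 l1 (by omega)
    · exact cast_add_toNat a r2 l1 (by omega)
    · exact cast_add_toNat a r3 l1 (by omega)
  · intro m
    fin_cases m
    · exact cast_sub_toNat a l1 l1 (by omega)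
    · exact cast_sub_toNat a l2 l1 (by omega)
    · exact cast_sub_toNat a l3 l1 (by omega)

/-- L2: a forbidden triple yields an integer chain. -/
lemma chain_of_forbidden {n : ℕ} {α₁ α₂ α₃ : Sym2 (ZMod n)}
    (h : IsForbiddenTriple α₁ α₂ α₃) :
    ∃ (a : ZMod n) (l r : Fin 3 → ℤ),
      α₁ = chord a (l 0) (r 0) ∧ α₂ = chord a (l 1) (r 1) ∧ α₃ = chord a (l 2) (r 2) ∧
      l 2 < l 1 ∧ l 1 < l 0 ∧ l 0 ≤ r 0 ∧ r 0 < r 1 ∧ r 1 < r 2 ∧ r 2 - l 2 ≤ n := by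
  obtain ⟨b, c, a, p, q, e1, e2, e3, _hdisj, hp, hq, hpq, hb, hc⟩ := h
  refine ⟨a, fun m => -(q m : ℤ), fun m => (p m : ℤ), ?_, ?_, ?_, ?_, ?_, ?_, ?_, ?_, ?_⟩
  · rw [e1, chord_swap]; unfold chord
    rw [hb 0, hc 0]; push_cast; ring_nf
  · rw [e2, chord_swap]; unfold chord
    rw [hb 1, hc 1]; push_cast; ring_nf
  · rw [e3, chord_swap]; unfold chord
    rw [hb 2, hc 2]; push_cast; ring_nf
  · show -(q 2 : ℤ) < -(q 1 : ℤ); have := hq (show (1:Fin 3) < 2 by decide); omega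
  · show -(q 1 : ℤ) < -(q 0 : ℤ); have := hq (show (0:Fin 3) < 1 by decide); omega
  · show -(q 0 : ℤ) ≤ (p 0 : ℤ); omega
  · show (p 0 : ℤ) < (p 1 : ℤ); have := hp (show (0:Fin 3) < 1 by decide); omega
  · show (p 1 : ℤ) < (p 2 : ℤ); have := hp (show (1:Fin 3) < 2 by decide); omega
  · show (p 2 : ℤ) - -(q 2 : ℤ) ≤ n; omega

end MsaftAux

namespace MsaftAux

variable {n : ℕ}

/-- No three arcs of members of `M` form a strictly nested chain. -/
def NoChain (M : Set (Sym2 (ZMod n))) (x₀ : ZMod n) : Prop :=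
  ∀ l1 r1 l2 r2 l3 r3 : ℤ, chord x₀ l1 r1 ∈ M → chord x₀ l2 r2 ∈ M → chord x₀ l3 r3 ∈ M →
    l3 < l2 → l2 < l1 → l1 ≤ r1 → r1 < r2 → r2 < r3 → r3 - (n:ℤ) ≤ l3 → False

lemma noChain_of_avoids {M : Set (Sym2 (ZMod n))} (hA : AvoidsForbiddenTriples M)
    (x₀ : ZMod n) : NoChain M x₀ := by
  intro l1 r1 l2 r2 l3 r3 h1 h2 h3 a1 a2 a3 a4 a5 a6
  exact hA _ h1 _ h2 _ h3 (forbidden_of_chain x₀ l1 r1 l2 r2 l3 r3 a1 a2 a3 a4 a5 (by omega))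

/-- Type 1 blocking data for family chord `i`: a nested pair strictly outside `U_i`. -/
def T1 (M : Set (Sym2 (ZMod n))) (x₀ : ZMod n) (ε i : ℕ) : Prop :=
  ∃ la ra lb rb : ℤ, chord x₀ la ra ∈ M ∧ chord x₀ lb rb ∈ M ∧
    lb < la ∧ la < -(i:ℤ) ∧ (ε:ℤ) + i < ra ∧ ra < rb ∧ rb - lb ≤ n

/-- Type 2: a nested pair with `U_i` strictly in between. -/
def T2 (M : Set (Sym2 (ZMod n))) (x₀ : ZMod n) (ε i : ℕ) : Prop :=
  ∃ la ra lb rb : ℤ, chord x₀ la ra ∈ M ∧ chord x₀ lb rb ∈ M ∧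
    -(i:ℤ) < la ∧ la ≤ ra ∧ ra < (ε:ℤ) + i ∧ lb < -(i:ℤ) ∧ (ε:ℤ) + i < rb ∧ rb - lb ≤ n

/-- Type 3: a nested pair strictly inside `U_i`. -/
def T3 (M : Set (Sym2 (ZMod n))) (x₀ : ZMod n) (ε i : ℕ) : Prop :=
  ∃ la ra lb rb : ℤ, chord x₀ la ra ∈ M ∧ chord x₀ lb rb ∈ M ∧
    -(i:ℤ) < lb ∧ lb < la ∧ la ≤ ra ∧ ra < rb ∧ rb < (ε:ℤ) + i

section Rules

variable {M : Set (Sym2 (ZMod n))} {x₀ : ZMod n} {ε : ℕ}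
variable (hnc : NoChain M x₀)

lemma X1 (hε : ε ≤ 1) {i : ℕ} (h : T2 M x₀ ε i) (hi : i = 0) : False := by
  obtain ⟨la, ra, lb, rb, _, _, h1, h2, h3, _⟩ := h; omega

lemma X23 (hε : ε ≤ 1) {i : ℕ} (h : T3 M x₀ ε i) (hi : i ≤ 1) : False := by
  obtain ⟨la, ra, lb, rb, _, _, h1, h2, h3, h4, h5⟩ := h; omega

lemma X46 {I : ℕ} (hI : n ≤ ε + 2*I + 1) {i : ℕ} (h : T1 M x₀ ε i) (hi : I ≤ i + 1) :
    False := by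
  obtain ⟨la, ra, lb, rb, _, _, h1, h2, h3, h4, h5⟩ := h; omega

lemma X5 {I : ℕ} (hI : n ≤ ε + 2*I + 1) {i : ℕ} (h : T2 M x₀ ε i) (hi : I ≤ i) :
    False := by
  obtain ⟨la, ra, lb, rb, _, _, h1, h2, h3, h4, h5, h6⟩ := h; omega

include hnc

lemma R12 {i i' : ℕ} (h : T1 M x₀ ε i) (h' : T2 M x₀ ε i') (hii : i' ≤ i + 1) : False := by
  obtain ⟨la, ra, lb, rb, hma, hmb, c1, c2, c3, c4, c5⟩ := h
  obtain ⟨la', ra', lb', rb', hma', hmb', d1, d2, d3, d4, d5, d6⟩ := h'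
  exact hnc la' ra' la ra lb rb hma' hma hmb (by omega) (by omega) (by omega)
    (by omega) (by omega) (by omega)

lemma R13 {i i' : ℕ} (h : T1 M x₀ ε i) (h' : T3 M x₀ ε i') (hii : i' ≤ i + 2) : False := by
  obtain ⟨la, ra, lb, rb, hma, hmb, c1, c2, c3, c4, c5⟩ := h
  obtain ⟨la', ra', lb', rb', hma', hmb', d1, d2, d3, d4, d5⟩ := h'
  exact hnc la' ra' lb' rb' lb rb hma' hmb' hmb (by omega) (by omega) (by omega)
    (by omega) (by omega) (by omega)

lemma R31 {i i' : ℕ} (h : T3 M x₀ ε i) (h' : T1 M x₀ ε i') (hii : i ≤ i' + 1) : False := by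
  obtain ⟨la, ra, lb, rb, hma, hmb, c1, c2, c3, c4, c5⟩ := h
  obtain ⟨la', ra', lb', rb', hma', hmb', d1, d2, d3, d4, d5⟩ := h'
  -- chain: A ⊂ B ⊂ A' ; span of A' is < span of B' ≤ n
  exact hnc la ra lb rb la' ra' hma hmb hma' (by omega) (by omega) (by omega)
    (by omega) (by omega) (by omega)

lemma R32 {i i' : ℕ} (h : T3 M x₀ ε i) (h' : T2 M x₀ ε i') (hii : i ≤ i' + 1) : False := by
  obtain ⟨la, ra, lb, rb, hma, hmb, c1, c2, c3, c4, c5⟩ := h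
  obtain ⟨la', ra', lb', rb', hma', hmb', d1, d2, d3, d4, d5, d6⟩ := h'
  exact hnc la ra lb rb lb' rb' hma hmb hmb' (by omega) (by omega) (by omega)
    (by omega) (by omega) (by omega)

lemma R21 {i i' : ℕ} (h : T2 M x₀ ε i) (h' : T1 M x₀ ε i') (hii : i ≤ i' + 1) : False := by
  obtain ⟨la, ra, lb, rb, hma, hmb, c1, c2, c3, c4, c5, c6⟩ := h
  obtain ⟨la', ra', lb', rb', hma', hmb', d1, d2, d3, d4, d5⟩ := h'
  exact hnc la ra la' ra' lb' rb' hma hma' hmb' (by omega) (by omega) (by omega)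
    (by omega) (by omega) (by omega)

end Rules

end MsaftAux

namespace MsaftAux

variable {n : ℕ}

lemma forbidden_ne {α β γ : Sym2 (ZMod n)} (h : IsForbiddenTriple α β γ) :
    α ≠ β ∧ α ≠ γ ∧ β ≠ γ := by
  obtain ⟨b, c, a, p, q, e1, e2, e3, hdisj, -, -, -, -, -⟩ := h
  have key : ∀ k m : Fin 3, k ≠ m → s(b k, c k) = s(b m, c m) → False := by
    intro k m hkm heq
    rw [Sym2.eq_iff] at heq
    have hmem : b k ∈ ({b k, c k} : Set (ZMod n)) ∩ {b m, c m} := by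
      constructor
      · exact Set.mem_insert _ _
      · rcases heq with ⟨h1, -⟩ | ⟨h1, -⟩
        · rw [h1]; exact Set.mem_insert _ _
        · rw [h1]; right; rfl
    rw [hdisj k m hkm] at hmem
    exact hmem
  refine ⟨?_, ?_, ?_⟩
  · rw [e1, e2]; exact fun h => key 0 1 (by decide) h
  · rw [e1, e3]; exact fun h => key 0 2 (by decide) h
  · rw [e2, e3]; exact fun h => key 1 2 (by decide) h

lemma chord_shift {a x₀ : ZMod n} {δ : ℤ} (ha : ∀ X : ℤ, a + (X : ZMod n) = x₀ + ((δ + X : ℤ) : ZMod n))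
    (X Y : ℤ) : chord a X Y = chord x₀ (δ + X) (δ + Y) := by
  unfold chord; rw [ha X, ha Y]

/-- Matching a chord of the family against an arc representation. -/
lemma match_shift {x₀ : ZMod n} {ε i : ℕ} {a : ZMod n} {l r : ℤ} (hn3 : 3 ≤ n)
    (hlr0 : 0 ≤ r - l) (hlrn : r - l ≤ n) (hrange : ε + 2*i ≤ n)
    (heq : chord a l r = chord x₀ (-(i:ℤ)) ((ε:ℤ)+i)) :
    ∃ δ : ℤ, (∀ X : ℤ, a + (X : ZMod n) = x₀ + ((δ + X : ℤ) : ZMod n)) ∧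
      ((δ + l = -(i:ℤ) ∧ δ + r = (ε:ℤ) + i) ∨
       (δ + l = (ε:ℤ) + i ∧ δ + r = (n:ℤ) - i)) := by
  have hr2 : (ε:ℤ) + 2*i ≤ n := by exact_mod_cast hrange
  have hnpos : (0:ℤ) < n := by omega
  have base : ∀ δ' : ℤ, a = x₀ + (δ' : ZMod n) →
      (∀ X : ℤ, a + (X : ZMod n) = x₀ + ((δ' + X : ℤ) : ZMod n)) := by
    intro δ' h X; rw [h]; push_cast; ring
  have shiftn : ∀ δ' : ℤ, a = x₀ + (δ' : ZMod n) → a = x₀ + ((δ' + n : ℤ) : ZMod n) := by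
    intro δ' h; rw [h]; push_cast; rw [ZMod.natCast_self]; ring
  have shiftn' : ∀ δ' : ℤ, a = x₀ + (δ' : ZMod n) → a = x₀ + ((δ' - n : ℤ) : ZMod n) := by
    intro δ' h; rw [h]; push_cast; rw [ZMod.natCast_self]; ring
  unfold chord at heq
  rw [Sym2.eq_iff] at heq
  rcases heq with ⟨h1, h2⟩ | ⟨h1, h2⟩
  · -- a + l = x₀ - i, a + r = x₀ + ε + i
    have ha : a = x₀ + ((-(i:ℤ) - l : ℤ) : ZMod n) := by
      push_cast at h1 ⊢; linear_combination h1
    have h3 : ((-(i:ℤ) - l + r : ℤ) : ZMod n) = (((ε:ℤ) + i : ℤ) : ZMod n) := by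
      have hb := base _ ha r
      rw [hb] at h2
      exact add_left_cancel h2
    have hc : (((-(i:ℤ) - l + r) - ((ε:ℤ) + i) : ℤ) : ZMod n) = 0 := by
      push_cast at h3 ⊢; linear_combination h3
    obtain ⟨e, he⟩ := (ZMod.intCast_zmod_eq_zero_iff_dvd _ n).mp hc
    have hb1 : -(n:ℤ) ≤ n * e := by rw [← he]; omega
    have hb2 : (n:ℤ) * e ≤ n := by rw [← he]; omega
    have he1 : e ≤ 1 := le_of_mul_le_mul_left (by linarith) hnpos
    have he2 : -1 ≤ e := le_of_mul_le_mul_left (by linarith) hnpos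
    have hecases : e = -1 ∨ e = 0 ∨ e = 1 := by omega
    rcases hecases with rfl | rfl | rfl
    · -- ε + 2i = n, r = l
      refine ⟨(ε:ℤ) + i - l, ?_, Or.inr ⟨by ring, by omega⟩⟩
      refine base _ ?_
      have h'' := shiftn _ ha
      rw [(by omega : (-(i:ℤ) - l + (n:ℤ)) = (ε:ℤ) + i - l)] at h''
      exact h''
    · exact ⟨-(i:ℤ) - l, base _ ha, Or.inl ⟨by ring, by omega⟩⟩
    · -- ε = i = 0, r - l = n
      refine ⟨(ε:ℤ) + i - l, ?_, Or.inr ⟨by ring, by omega⟩⟩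
      refine base _ ?_
      rw [(by omega : ((ε:ℤ) + i - l) = -(i:ℤ) - l)]
      exact ha
  · -- a + l = x₀ + ε + i, a + r = x₀ - i
    have ha : a = x₀ + (((ε:ℤ) + i - l : ℤ) : ZMod n) := by
      push_cast at h1 ⊢; linear_combination h1
    have h3 : (((ε:ℤ) + i - l + r : ℤ) : ZMod n) = ((-(i:ℤ) : ℤ) : ZMod n) := by
      have hb := base _ ha r
      rw [hb] at h2
      exact add_left_cancel h2
    have hc : ((((ε:ℤ) + i - l + r) + i : ℤ) : ZMod n) = 0 := by
      push_cast at h3 ⊢; linear_combination h3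
    obtain ⟨e, he⟩ := (ZMod.intCast_zmod_eq_zero_iff_dvd _ n).mp hc
    have hb1 : (0:ℤ) ≤ n * e := by rw [← he]; omega
    have hb2 : (n:ℤ) * e ≤ 2 * n := by rw [← he]; omega
    have he1 : e ≤ 2 := le_of_mul_le_mul_left (by linarith) hnpos
    have he2 : 0 ≤ e := le_of_mul_le_mul_left (by linarith) hnpos
    have hecases : e = 0 ∨ e = 1 ∨ e = 2 := by omega
    rcases hecases with rfl | rfl | rfl
    · -- ε = i = 0, r = l
      refine ⟨-(i:ℤ) - l, ?_, Or.inl ⟨by omega, by omega⟩⟩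
      refine base _ ?_
      rw [(by omega : (-(i:ℤ) - l) = (ε:ℤ) + i - l)]
      exact ha
    · exact ⟨(ε:ℤ) + i - l, base _ ha, Or.inr ⟨by ring, by omega⟩⟩
    · -- ε + 2i = n, r - l = n
      refine ⟨-(i:ℤ) - l, ?_, Or.inl ⟨by ring, by omega⟩⟩
      refine base _ ?_
      have h'' := shiftn' _ ha
      rw [(by omega : ((ε:ℤ) + i - l - (n:ℤ)) = -(i:ℤ) - l)] at h''
      exact h''

end MsaftAux

namespace MsaftAux

variable {n : ℕ}

lemma blocked (hn3 : 3 ≤ n) {M : Set (Sym2 (ZMod n))} (hM : IsMsaft M) (x₀ : ZMod n)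
    {ε I i : ℕ} (hI1 : ε + 2*I ≤ n) (hi : i ≤ I)
    (hni : chord x₀ (-(i:ℤ)) ((ε:ℤ)+i) ∉ M) :
    T1 M x₀ ε i ∨ T2 M x₀ ε i ∨ T3 M x₀ ε i := by
  have hrange : ε + 2*i ≤ n := by omega
  have hnA : ¬ AvoidsForbiddenTriples (insert (chord x₀ (-(i:ℤ)) ((ε:ℤ)+i)) M) := by
    intro hA
    exact hni (by
      have := hM.2 _ hA (Set.subset_insert _ _)
      rw [← this]; exact Set.mem_insert _ _)
  unfold AvoidsForbiddenTriples at hnA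
  push_neg at hnA
  obtain ⟨α₁, h1, α₂, h2, α₃, h3, hT⟩ := hnA
  obtain ⟨hne12, hne13, hne23⟩ := forbidden_ne hT
  obtain ⟨a, L, R, e1, e2, e3, c1, c2, c3, c4, c5, c6⟩ := chain_of_forbidden hT
  rw [Set.mem_insert_iff] at h1 h2 h3
  rcases h1 with h1 | hm1
  · -- α₁ is the family chord : innermost
    have hm2 : α₂ ∈ M := h2.resolve_left (fun h => hne12 (h1.trans h.symm))
    have hm3 : α₃ ∈ M := h3.resolve_left (fun h => hne13 (h1.trans h.symm))
    have heq : chord a (L 0) (R 0) = chord x₀ (-(i:ℤ)) ((ε:ℤ)+i) := by rw [← e1, h1]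
    obtain ⟨δ, hδ, hUV⟩ := match_shift hn3 (by omega) (by omega) hrange heq
    have hmem2 : chord x₀ (δ + L 1) (δ + R 1) ∈ M := by
      rw [← chord_shift hδ (L 1) (R 1), ← e2]; exact hm2
    have hmem3 : chord x₀ (δ + L 2) (δ + R 2) ∈ M := by
      rw [← chord_shift hδ (L 2) (R 2), ← e3]; exact hm3
    rcases hUV with ⟨hu1, hu2⟩ | ⟨hv1, hv2⟩
    · exact Or.inl ⟨δ + L 1, δ + R 1, δ + L 2, δ + R 2, hmem2, hmem3,
        by omega, by omega, by omega, by omega, by omega⟩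
    · refine Or.inr (Or.inr ⟨δ + R 2 - n, δ + L 2, δ + R 1 - n, δ + L 1, ?_, ?_,
        by omega, by omega, by omega, by omega, by omega⟩)
      · rw [chord_subn, chord_swap]; exact hmem3
      · rw [chord_subn, chord_swap]; exact hmem2
  rcases h2 with h2 | hm2
  · -- α₂ is the family chord : middle
    have hm3 : α₃ ∈ M := h3.resolve_left (fun h => hne23 (h2.trans h.symm))
    have heq : chord a (L 1) (R 1) = chord x₀ (-(i:ℤ)) ((ε:ℤ)+i) := by rw [← e2, h2]
    obtain ⟨δ, hδ, hUV⟩ := match_shift hn3 (by omega) (by omega) hrange heq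
    have hmem1 : chord x₀ (δ + L 0) (δ + R 0) ∈ M := by
      rw [← chord_shift hδ (L 0) (R 0), ← e1]; exact hm1
    have hmem3 : chord x₀ (δ + L 2) (δ + R 2) ∈ M := by
      rw [← chord_shift hδ (L 2) (R 2), ← e3]; exact hm3
    rcases hUV with ⟨hu1, hu2⟩ | ⟨hv1, hv2⟩
    · exact Or.inr (Or.inl ⟨δ + L 0, δ + R 0, δ + L 2, δ + R 2, hmem1, hmem3,
        by omega, by omega, by omega, by omega, by omega, by omega⟩)
    · refine Or.inr (Or.inl ⟨δ + R 2 - n, δ + L 2, δ + R 0 - n, δ + L 0, ?_, ?_,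
        by omega, by omega, by omega, by omega, by omega, by omega⟩)
      · rw [chord_subn, chord_swap]; exact hmem3
      · rw [chord_subn, chord_swap]; exact hmem1
  rcases h3 with h3 | hm3
  · -- α₃ is the family chord : outermost
    have heq : chord a (L 2) (R 2) = chord x₀ (-(i:ℤ)) ((ε:ℤ)+i) := by rw [← e3, h3]
    obtain ⟨δ, hδ, hUV⟩ := match_shift hn3 (by omega) (by omega) hrange heq
    have hmem1 : chord x₀ (δ + L 0) (δ + R 0) ∈ M := by
      rw [← chord_shift hδ (L 0) (R 0), ← e1]; exact hm1
    have hmem2 : chord x₀ (δ + L 1) (δ + R 1) ∈ M := by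
      rw [← chord_shift hδ (L 1) (R 1), ← e2]; exact hm2
    rcases hUV with ⟨hu1, hu2⟩ | ⟨hv1, hv2⟩
    · exact Or.inr (Or.inr ⟨δ + L 0, δ + R 0, δ + L 1, δ + R 1, hmem1, hmem2,
        by omega, by omega, by omega, by omega, by omega⟩)
    · refine Or.inl ⟨δ + R 1 - n, δ + L 1, δ + R 0 - n, δ + L 0, ?_, ?_,
        by omega, by omega, by omega, by omega, by omega⟩
      · rw [chord_subn, chord_swap]; exact hmem2
      · rw [chord_subn, chord_swap]; exact hmem1
  · exact absurd (hM.1 _ hm1 _ hm2 _ hm3) (fun h => h hT)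

end MsaftAux

namespace MsaftAux

variable {n : ℕ}

/-- If at most one family chord is in M, we reach a contradiction. -/
lemma family_lower (hn3 : 3 ≤ n) {M : Set (Sym2 (ZMod n))} (hM : IsMsaft M) (x₀ : ZMod n)
    {ε I : ℕ} (hε : ε ≤ 1) (hI1 : ε + 2*I ≤ n) (hI2 : n ≤ ε + 2*I + 1) (hI0 : 1 ≤ I)
    (Hm : ∀ i j : ℕ, i < j → j ≤ I →
      chord x₀ (-(i:ℤ)) ((ε:ℤ)+i) ∉ M ∨ chord x₀ (-(j:ℤ)) ((ε:ℤ)+j) ∉ M) : False := by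
  have hnc : NoChain M x₀ := noChain_of_avoids hM.1 x₀
  have hblocked : ∀ i, i ≤ I → chord x₀ (-(i:ℤ)) ((ε:ℤ)+i) ∉ M →
      T1 M x₀ ε i ∨ T2 M x₀ ε i ∨ T3 M x₀ ε i := fun i hi h => blocked hn3 hM x₀ hI1 hi h
  have W2up : ∀ c j, I - j ≤ c → j ≤ I → T2 M x₀ ε j →
      (∀ m, j < m → m ≤ I → chord x₀ (-(m:ℤ)) ((ε:ℤ)+m) ∉ M) → False := by
    intro c
    induction c with
    | zero => intro j hc hj h2 _; exact X5 hI2 h2 (by omega)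
    | succ c ih =>
      intro j hc hj h2 hmiss
      by_cases hji : I ≤ j
      · exact X5 hI2 h2 hji
      · rcases hblocked (j+1) (by omega) (hmiss (j+1) (by omega) (by omega)) with t1 | t2 | t3
        · exact R21 hnc h2 t1 (by omega)
        · exact ih (j+1) (by omega) (by omega) t2 (fun m hm1 hm2 => hmiss m (by omega) hm2)
        · exact R32 hnc t3 h2 (by omega)
  have W2dn : ∀ j, j ≤ I → T2 M x₀ ε j →
      (∀ m, m < j → chord x₀ (-(m:ℤ)) ((ε:ℤ)+m) ∉ M) → False := by
    intro j
    induction j with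
    | zero => intro _ h2 _; exact X1 hε h2 rfl
    | succ j ih =>
      intro hj h2 hmiss
      rcases hblocked j (by omega) (hmiss j (by omega)) with t1 | t2 | t3
      · exact R12 hnc t1 h2 (by omega)
      · exact ih (by omega) t2 (fun m hm => hmiss m (by omega))
      · exact R32 hnc t3 h2 (by omega)
  have W1 : ∀ c j, I - j ≤ c → j ≤ I → T1 M x₀ ε j → False := by
    intro c
    induction c with
    | zero => intro j hc hj h1; exact X46 hI2 h1 (by omega)
    | succ c ih =>
      intro j hc hj h1
      by_cases hji : I ≤ j + 1
      · exact X46 hI2 h1 hji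
      · by_cases hj1 : chord x₀ (-((j+1 : ℕ):ℤ)) ((ε:ℤ)+(j+1 : ℕ)) ∈ M
        · have hm2 : chord x₀ (-((j+2 : ℕ):ℤ)) ((ε:ℤ)+(j+2 : ℕ)) ∉ M := by
            rcases Hm (j+1) (j+2) (by omega) (by omega) with h | h
            · exact absurd hj1 h
            · exact h
          rcases hblocked (j+2) (by omega) hm2 with t1 | t2 | t3
          · exact ih (j+2) (by omega) (by omega) t1
          · refine W2up (I - (j+2)) (j+2) (by omega) (by omega) t2 (fun m hma hmb => ?_)
            rcases Hm (j+1) m (by omega) (by omega) with h | h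
            · exact absurd hj1 h
            · exact h
          · exact R13 hnc h1 t3 (by omega)
        · rcases hblocked (j+1) (by omega) hj1 with t1 | t2 | t3
          · exact ih (j+1) (by omega) (by omega) t1
          · exact R12 hnc h1 t2 (by omega)
          · exact R13 hnc h1 t3 (by omega)
  have W3 : ∀ j, j ≤ I → T3 M x₀ ε j → False := by
    intro j
    induction j using Nat.strong_induction_on with
    | _ j ih =>
      intro hj h3
      by_cases hj1 : j ≤ 1
      · exact X23 hε h3 hj1
      · by_cases hjm : chord x₀ (-((j-1 : ℕ):ℤ)) ((ε:ℤ)+(j-1 : ℕ)) ∈ M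
        · have hm2 : chord x₀ (-((j-2 : ℕ):ℤ)) ((ε:ℤ)+(j-2 : ℕ)) ∉ M := by
            rcases Hm (j-2) (j-1) (by omega) (by omega) with h | h
            · exact h
            · exact absurd hjm h
          rcases hblocked (j-2) (by omega) hm2 with t1 | t2 | t3
          · exact R13 hnc t1 h3 (by omega)
          · refine W2dn (j-2) (by omega) t2 (fun m hm => ?_)
            rcases Hm m (j-1) (by omega) (by omega) with h | h
            · exact h
            · exact absurd hjm h
          · exact ih (j-2) (by omega) (by omega) t3
        · rcases hblocked (j-1) (by omega) hjm with t1 | t2 | t3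
          · exact R31 hnc h3 t1 (by omega)
          · exact R32 hnc h3 t2 (by omega)
          · exact ih (j-1) (by omega) (by omega) t3
  by_cases h0 : chord x₀ (-((0 : ℕ):ℤ)) ((ε:ℤ)+(0 : ℕ)) ∈ M
  · by_cases hI : chord x₀ (-((I : ℕ):ℤ)) ((ε:ℤ)+(I : ℕ)) ∈ M
    · rcases Hm 0 I (by omega) (le_refl I) with h | h
      · exact h h0
      · exact h hI
    · rcases hblocked I (le_refl I) hI with t1 | t2 | t3
      · exact X46 hI2 t1 (by omega)
      · exact X5 hI2 t2 (le_refl I)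
      · exact W3 I (le_refl I) t3
  · rcases hblocked 0 (by omega) h0 with t1 | t2 | t3
    · exact W1 I 0 (by omega) (by omega) t1
    · exact X1 hε t2 rfl
    · exact X23 hε t3 (by omega)

end MsaftAux

namespace MsaftAux

variable {n : ℕ}

lemma int_eq_zero_or_le {N d : ℤ} (hd : N ∣ d) (h0 : d ≠ 0) : N ≤ |d| :=
  Int.le_of_dvd (abs_pos.mpr h0) ((dvd_abs _ _).mpr hd)

lemma fam_inj [NeZero n] (hn3 : 3 ≤ n) {x₀ : ZMod n} {ε I : ℕ}
    (hI1 : ε + 2*I ≤ n) (hI2 : n ≤ ε + 2*I + 1) {i j : ℕ} (hi : i ≤ I) (hj : j ≤ I)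
    (h : chord x₀ (-(i:ℤ)) ((ε:ℤ)+i) = chord x₀ (-(j:ℤ)) ((ε:ℤ)+j)) : i = j := by
  unfold chord at h
  rw [Sym2.eq_iff] at h
  rcases h with ⟨h1, -⟩ | ⟨h1, -⟩
  · have hc : ((((j:ℤ) - (i:ℤ) : ℤ)) : ZMod n) = 0 := by
      have := add_left_cancel h1; push_cast at this ⊢; linear_combination this
    have hdvd : (n:ℤ) ∣ ((j:ℤ) - (i:ℤ)) := (ZMod.intCast_zmod_eq_zero_iff_dvd _ n).mp hc
    by_contra hne
    have h0 : ((j:ℤ) - i) ≠ 0 := by omega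
    have := int_eq_zero_or_le hdvd h0
    rcases abs_cases ((j:ℤ) - i) with ⟨ha, -⟩ | ⟨ha, -⟩ <;> omega
  · have hc : ((((ε:ℤ) + (j:ℤ) + (i:ℤ) : ℤ)) : ZMod n) = 0 := by
      have := add_left_cancel h1; push_cast at this ⊢; linear_combination - this
    have hdvd : (n:ℤ) ∣ ((ε:ℤ) + j + i) := (ZMod.intCast_zmod_eq_zero_iff_dvd _ n).mp hc
    by_cases h0 : ((ε:ℤ) + j + i) = 0
    · omega
    · have := int_eq_zero_or_le hdvd h0
      rcases abs_cases ((ε:ℤ) + j + i) with ⟨ha, -⟩ | ⟨ha, -⟩ <;> omega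

lemma fam_mk [NeZero n] {x₀ : ZMod n} {ε : ℕ}
    (u v : ZMod n) (w w' : ℕ) (hw : ((w:ℕ) : ZMod n) = x₀ - u) (hw' : ((w':ℕ) : ZMod n) = x₀ - v)
    (hn : w + w' + ε = n) :
    s(u, v) = chord x₀ (-(w:ℤ)) ((ε:ℤ)+w) := by
  unfold chord
  have hu : u = x₀ + (Int.cast (-(w:ℤ)) : ZMod n) := by
    push_cast at hw ⊢; linear_combination hw
  have hv : v = x₀ + (Int.cast ((ε:ℤ)+(w:ℤ)) : ZMod n) := by
    have hz : ((w + w' + ε : ℕ) : ZMod n) = 0 := by rw [hn]; exact ZMod.natCast_self n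
    push_cast at hw' hz ⊢
    linear_combination hw' - hz
  rw [← hu, ← hv]

lemma fam_surj [NeZero n] (hn3 : 3 ≤ n) {x₀ : ZMod n} {ε I : ℕ} (k : ZMod n)
    (hsum : x₀ + x₀ + ((ε:ℕ) : ZMod n) = k) (hε : ε ≤ 1)
    (hI1 : ε + 2*I ≤ n) (hI2 : n ≤ ε + 2*I + 1)
    (γ : Sym2 (ZMod n)) (hγ : secantSum γ = k) :
    ∃ m : ℕ, m ≤ I ∧ γ = chord x₀ (-(m:ℤ)) ((ε:ℤ)+m) := by
  obtain ⟨⟨u, v⟩, hrep⟩ := Quot.exists_rep γ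
  have hγ' : u + v = k := by rw [← hγ, ← hrep]; rfl
  set w := (x₀ - u).val with hwdef
  set w' := (x₀ - v).val with hw'def
  have hw : ((w:ℕ) : ZMod n) = x₀ - u := by rw [hwdef, ZMod.natCast_val, ZMod.cast_id]
  have hw' : ((w':ℕ) : ZMod n) = x₀ - v := by rw [hw'def, ZMod.natCast_val, ZMod.cast_id]
  have hwlt : w < n := ZMod.val_lt _
  have hw'lt : w' < n := ZMod.val_lt _
  have hz : ((w + w' + ε : ℕ) : ZMod n) = 0 := by
    push_cast [hw, hw']
    linear_combination hsum - hγ'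
  have hdvd : n ∣ (w + w' + ε) := (ZMod.natCast_eq_zero_iff _ n).mp hz
  obtain ⟨e, he⟩ := hdvd
  have he01 : e = 0 ∨ e = 1 := by
    by_contra hcon
    push_neg at hcon
    have h2e : 2 ≤ e := by omega
    have : n * 2 ≤ n * e := Nat.mul_le_mul_left n h2e
    omega
  rcases he01 with rfl | rfl
  · -- w = w' = ε = 0 : degenerate
    have hw0 : w = 0 ∧ w' = 0 ∧ ε = 0 := by omega
    refine ⟨0, by omega, ?_⟩
    rw [← hrep]
    show s(u, v) = _
    unfold chord
    have hu : u = x₀ + (Int.cast (-((0:ℕ):ℤ)) : ZMod n) := by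
      have := hw; rw [hw0.1] at this; push_cast at this ⊢; linear_combination this
    have hv : v = x₀ + (Int.cast ((ε:ℤ)+((0:ℕ):ℤ)) : ZMod n) := by
      have := hw'; rw [hw0.2.1] at this
      push_cast [hw0.2.2] at this ⊢; linear_combination this
    rw [← hu, ← hv]
  · -- w + w' + ε = n
    have hn' : w + w' + ε = n := by omega
    by_cases hcmp : w ≤ w'
    · refine ⟨w, by omega, ?_⟩
      rw [← hrep]
      exact fam_mk u v w w' hw hw' hn'
    · refine ⟨w', by omega, ?_⟩
      rw [← hrep]
      have : s(v, u) = chord x₀ (-(w':ℤ)) ((ε:ℤ)+w') := fam_mk v u w' w hw' hw (by omega)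
      rw [← this]
      exact Sym2.eq_swap

end MsaftAux

namespace MsaftAux

variable {n : ℕ}

lemma family_exactly_two [NeZero n] (hn3 : 3 ≤ n) {M : Set (Sym2 (ZMod n))}
    (hM : IsMsaft M) (k : ZMod n) :
    ∃ α β, α ≠ β ∧ α ∈ M ∧ secantSum α = k ∧ β ∈ M ∧ secantSum β = k ∧
      (∀ γ ∈ M, secantSum γ = k → γ = α ∨ γ = β) := by
  set ε : ℕ := k.val % 2 with hεdef
  set x₀ : ZMod n := ((k.val / 2 : ℕ) : ZMod n) with hx₀def
  set I : ℕ := (n - ε) / 2 with hIdef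
  have hvlt : k.val < n := ZMod.val_lt k
  have hε : ε ≤ 1 := by omega
  have hI1 : ε + 2*I ≤ n := by omega
  have hI2 : n ≤ ε + 2*I + 1 := by omega
  have hI0 : 1 ≤ I := by omega
  have hsum : x₀ + x₀ + ((ε:ℕ) : ZMod n) = k := by
    have h1 : 2 * (k.val / 2) + k.val % 2 = k.val := Nat.div_add_mod k.val 2
    calc x₀ + x₀ + ((ε:ℕ) : ZMod n) = ((2*(k.val/2) + k.val%2 : ℕ) : ZMod n) := by
          rw [hx₀def, hεdef]; push_cast; ring
      _ = ((k.val : ℕ) : ZMod n) := by rw [h1]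
      _ = k := by rw [ZMod.natCast_val, ZMod.cast_id]
  have hsumi : ∀ m : ℕ, secantSum (chord x₀ (-(m:ℤ)) ((ε:ℤ)+m)) = k := by
    intro m
    rw [secantSum_chord]
    push_cast
    linear_combination hsum
  have hnc : NoChain M x₀ := noChain_of_avoids hM.1 x₀
  have tri : ∀ a b c : ℕ, a < b → b < c → c ≤ I →
      chord x₀ (-(a:ℤ)) ((ε:ℤ)+a) ∈ M → chord x₀ (-(b:ℤ)) ((ε:ℤ)+b) ∈ M →
      chord x₀ (-(c:ℤ)) ((ε:ℤ)+c) ∈ M → False := by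
    intro a b c hab hbc hc ha hb hcc
    exact hnc (-(a:ℤ)) ((ε:ℤ)+a) (-(b:ℤ)) ((ε:ℤ)+b) (-(c:ℤ)) ((ε:ℤ)+c) ha hb hcc
      (by omega) (by omega) (by omega) (by omega) (by omega) (by omega)
  -- lower bound: two distinct indices in M
  have hex : ∃ i j : ℕ, i < j ∧ j ≤ I ∧ chord x₀ (-(i:ℤ)) ((ε:ℤ)+i) ∈ M ∧
      chord x₀ (-(j:ℤ)) ((ε:ℤ)+j) ∈ M := by
    by_contra hcon
    push_neg at hcon
    refine family_lower hn3 hM x₀ hε hI1 hI2 hI0 (fun i j hij hjI => ?_)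
    by_cases h : chord x₀ (-(i:ℤ)) ((ε:ℤ)+i) ∈ M
    · exact Or.inr (hcon i j hij hjI h)
    · exact Or.inl h
  obtain ⟨i, j, hij, hjI, hiM, hjM⟩ := hex
  refine ⟨chord x₀ (-(i:ℤ)) ((ε:ℤ)+i), chord x₀ (-(j:ℤ)) ((ε:ℤ)+j), ?_, hiM, hsumi i,
    hjM, hsumi j, ?_⟩
  · intro h
    exact absurd (fam_inj hn3 hI1 hI2 (by omega) hjI h) (by omega)
  · intro γ hγM hγk
    obtain ⟨m, hmI, rfl⟩ := fam_surj hn3 k hsum hε hI1 hI2 γ hγk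
    rcases lt_trichotomy m i with h | h | h
    · exact absurd (tri m i j h hij hjI hγM hiM hjM) (fun h => h)
    · exact Or.inl (by rw [h])
    · rcases lt_trichotomy m j with h' | h' | h'
      · exact absurd (tri i m j h h' hjI hiM hγM hjM) (fun h => h)
      · exact Or.inr (by rw [h'])
      · exact absurd (tri i j m hij h' hmI hiM hjM hγM) (fun h => h)

end MsaftAux


/-- Every Msaft contains exactly two secants from each parallel family; in particular
it has cardinality `2 * n`. -/
theorem msaft_two_per_family {n : ℕ} (hn : 3 ≤ n) (M : Set (Sym2 (ZMod n)))
    (hM : IsMsaft M) :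
    (∀ k : ZMod n, {α ∈ M | secantSum α = k}.ncard = 2) ∧ M.ncard = 2 * n := by
  haveI : NeZero n := ⟨by omega⟩
  have key : ∀ k : ZMod n, {α ∈ M | secantSum α = k}.ncard = 2 := by
    intro k
    obtain ⟨α, β, hne, hα, hsα, hβ, hsβ, huniq⟩ := MsaftAux.family_exactly_two hn hM k
    have hset : {γ ∈ M | secantSum γ = k} = {α, β} := by
      ext γ
      simp only [Set.mem_setOf_eq, Set.mem_insert_iff, Set.mem_singleton_iff]
      constructor
      · rintro ⟨h1, h2⟩; exact huniq γ h1 h2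
      · rintro (rfl | rfl)
        · exact ⟨hα, hsα⟩
        · exact ⟨hβ, hsβ⟩
    rw [hset, Set.ncard_pair hne]
  refine ⟨key, ?_⟩
  classical
  have hfin : M.Finite := Set.toFinite M
  have h1 : M.ncard = hfin.toFinset.card := by
    rw [Set.ncard_eq_toFinset_card' M, Set.Finite.card_toFinset]
    · simp [Set.toFinset_card]
  have h2 : hfin.toFinset.card =
      ∑ k ∈ Finset.univ, (hfin.toFinset.filter (fun α => secantSum α = k)).card := by
    exact Finset.card_eq_sum_card_fiberwise (fun α _ => Finset.mem_univ _)
  have h3 : ∀ k : ZMod n, (hfin.toFinset.filter (fun α => secantSum α = k)).card = 2 := by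
    intro k
    have hc : ((hfin.toFinset.filter (fun α => secantSum α = k) : Finset _) : Set _)
        = {α ∈ M | secantSum α = k} := by
      ext γ
      simp only [Finset.coe_filter, Set.Finite.mem_toFinset, Set.mem_setOf_eq]
    rw [← Set.ncard_coe_finset, hc, key k]
  rw [h1, h2]
  rw [Finset.sum_congr rfl (fun k _ => h3 k)]
  rw [Finset.sum_const, Finset.card_univ, ZMod.card n, smul_eq_mul]
  omega
end

section
/- Fix n ≥ 3. A set M of secants is an Msaft if and only if M contains exactly two secants from each parallel family and there exists an injective function f : M → M such that f(α) is to the right of α for every α ∈ M (i.e. the underlying sets of secant walks are precisely the Msafts). -/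
/-- A secant `β` is *to the right* of a secant `α` if one can write `α = {i,j}` with
`β = {i, j+1}` or `β = {i+1, j}`. -/
def IsToRightOf {n : ℕ} (β α : Sym2 (ZMod n)) : Prop :=
  ∃ i j : ZMod n, α = s(i, j) ∧ (β = s(i, j + 1) ∨ β = s(i + 1, j))

namespace MsaftProof

variable {n : ℕ}

variable {n : ℕ}

def ch (n : ℕ) (x y : ℤ) : Sym2 (ZMod n) := s((x : ZMod n), (y : ZMod n))

lemma ch_comm (x y : ℤ) : ch n x y = ch n y x := Sym2.eq_swap

lemma zmod_int_eq_iff (a b : ℤ) : ((a : ZMod n) = (b : ZMod n)) ↔ (n:ℤ) ∣ (b - a) := by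
  rw [ZMod.intCast_eq_intCast_iff, Int.ModEq]
  constructor
  · intro h; exact Int.ModEq.dvd h
  · intro h; exact (Int.modEq_iff_dvd.mpr h).symm |>.symm

lemma ch_eq_iff (x y x' y' : ℤ) :
    ch n x y = ch n x' y' ↔ (((n:ℤ) ∣ x' - x ∧ (n:ℤ) ∣ y' - y) ∨ ((n:ℤ) ∣ y' - x ∧ (n:ℤ) ∣ x' - y)) := by
  unfold ch
  rw [Sym2.eq_iff, zmod_int_eq_iff, zmod_int_eq_iff, zmod_int_eq_iff, zmod_int_eq_iff]

lemma sum_ch (x y : ℤ) : secantSum (ch n x y) = ((x + y : ℤ) : ZMod n) := by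
  simp [secantSum, ch]

/-- Existence: every secant has an arc representative at every compatible level. -/
lemma arc_exists (hpos : 0 < n) (α : Sym2 (ZMod n)) (S : ℤ) (hS : ((S : ZMod n)) = secantSum α) :
    ∃ x y : ℤ, x ≤ y ∧ y ≤ x + n ∧ x + y = S ∧ ch n x y = α := by
  haveI : NeZero n := ⟨by omega⟩
  induction α using Sym2.inductionOn with
  | hf i j =>
    have hsum : ((S : ZMod n)) = i + j := by simpa [secantSum] using hS
    set x0 : ℤ := (i.val : ℤ) with hx0
    have hx0i : ((x0 : ZMod n)) = i := by
      simp [hx0, ZMod.natCast_val, ZMod.cast_id]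
    set w0 : ℤ := S - 2 * x0 with hw0
    set m : ℤ := w0 / (2 * n) with hm
    set w1 : ℤ := w0 % (2 * n) with hw1
    have h2n : (0:ℤ) < 2 * n := by positivity
    have hw1range : 0 ≤ w1 ∧ w1 < 2 * n := ⟨Int.emod_nonneg _ (by omega), Int.emod_lt_of_pos _ h2n⟩
    have hkey : w0 = 2 * (n * m) + w1 := by
      have := Int.mul_ediv_add_emod w0 (2*(n:ℤ))
      rw [← hm, ← hw1] at this; linarith
    set x1 : ℤ := x0 + n * m with hx1
    set y1 : ℤ := S - x1 with hy1
    have hx1i : ((x1 : ZMod n)) = i := by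
      rw [hx1]; push_cast; simp [hx0i]
    have hy1j : ((y1 : ZMod n)) = j := by
      have : ((y1 : ZMod n)) = (S : ZMod n) - (x1 : ZMod n) := by rw [hy1]; push_cast; ring
      rw [this, hx1i, hsum]; ring
    have hw1eq : y1 - x1 = w1 := by omega
    rcases le_or_gt w1 n with hc | hc
    · exact ⟨x1, y1, by omega, by omega, by omega, by rw [show ch n x1 y1 = s((x1:ZMod n),(y1:ZMod n)) from rfl, hx1i, hy1j]⟩
    · refine ⟨y1 - n, x1 + n, by omega, by omega, by omega, ?_⟩
      have h1 : (((y1 - n : ℤ) : ZMod n)) = j := by push_cast; simp [hy1j]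
      have h2 : (((x1 + n : ℤ) : ZMod n)) = i := by push_cast; simp [hx1i]
      rw [show ch n (y1-n) (x1+n) = s(((y1-n:ℤ):ZMod n),((x1+n:ℤ):ZMod n)) from rfl, h1, h2]
      exact Sym2.eq_swap

/-- Uniqueness: arcs of the same chord at the same level coincide. -/
lemma arc_unique (hpos : 0 < n) {x y x' y' : ℤ}
    (h1 : x ≤ y) (h2 : y ≤ x + n) (h1' : x' ≤ y') (h2' : y' ≤ x' + n)
    (hsum : x + y = x' + y') (hch : ch n x y = ch n x' y') : x = x' ∧ y = y' := by
  have hn : (0:ℤ) < n := by exact_mod_cast hpos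
  rw [ch_eq_iff] at hch
  rcases hch with ⟨⟨a, ha⟩, ⟨b, hb⟩⟩ | ⟨⟨a, ha⟩, ⟨b, hb⟩⟩
  · -- x' = x + na, y' = y + nb, a + b = 0
    have hab : (n:ℤ) * (a + b) = 0 := by linarith [ha, hb]
    have hab' : b = -a := by
      have : a + b = 0 := by
        rcases mul_eq_zero.mp hab with h | h
        · omega
        · exact h
      omega
    subst hab'
    -- widths: (y'-x') - (y-x) = n*(-a) - n*a = -2na, both in [0,n]
    have ha0 : a = 0 := by
      rcases lt_trichotomy a 0 with h | h | h
      · exfalso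
        have h1a : (n:ℤ) * a ≤ n * (-1) := by
          apply mul_le_mul_of_nonneg_left (by omega) hn.le
        linarith
      · exact h
      · exfalso
        have h1a : (n:ℤ) * 1 ≤ n * a := by
          apply mul_le_mul_of_nonneg_left (by omega) hn.le
        linarith
    subst ha0
    constructor <;> linarith [ha, hb]
  · -- y' = x + na, x' = y + nb, a + b = 0
    have hab : (n:ℤ) * (a + b) = 0 := by linarith [ha, hb]
    have hab' : b = -a := by
      have : a + b = 0 := by
        rcases mul_eq_zero.mp hab with h | h
        · omega
        · exact h
      omega
    subst hab'
    -- w + w' = 2na with 0 ≤ w, w' ≤ n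
    have ha01 : a = 0 ∨ a = 1 := by
      rcases lt_trichotomy a 0 with h | h | h
      · exfalso
        have h1a : (n:ℤ) * a ≤ n * (-1) := by
          apply mul_le_mul_of_nonneg_left (by omega) hn.le
        linarith
      · left; exact h
      · rcases lt_or_ge a 2 with h2a | h2a
        · right; omega
        · exfalso
          have h1a : (n:ℤ) * 2 ≤ n * a := by
            apply mul_le_mul_of_nonneg_left (by omega) hn.le
          linarith
    rcases ha01 with rfl | rfl
    · constructor <;> linarith [ha, hb]
    · constructor <;> linarith [ha, hb]
lemma cast_add_toNat (u v : ℤ) (h : u ≤ v) :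
    ((v : ZMod n)) = ((u:ZMod n)) + (((v - u).toNat : ℕ) : ZMod n) := by
  rw [show (((v - u).toNat : ℕ) : ZMod n) = (((v - u : ℤ)) : ZMod n) by
    rw [← Int.cast_natCast, Int.toNat_of_nonneg (by omega)]]
  push_cast; ring

lemma cast_sub_toNat (u v : ℤ) (h : v ≤ u) :
    ((v : ZMod n)) = ((u:ZMod n)) - (((u - v).toNat : ℕ) : ZMod n) := by
  rw [show (((u - v).toNat : ℕ) : ZMod n) = (((u - v : ℤ)) : ZMod n) by
    rw [← Int.cast_natCast, Int.toNat_of_nonneg (by omega)]]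
  push_cast; ring

lemma cast_ne_of_between (hpos : 0 < n) {u v : ℤ} (h1 : 0 < v - u) (h2 : v - u < n) :
    ((u : ZMod n)) ≠ ((v : ZMod n)) := by
  intro h
  rw [zmod_int_eq_iff] at h
  rcases h with ⟨t, ht⟩
  have hn : (0:ℤ) < n := by exact_mod_cast hpos
  rcases lt_trichotomy t 0 with h' | h' | h'
  · have : (n:ℤ) * t ≤ n * (-1) := mul_le_mul_of_nonneg_left (by omega) hn.le
    linarith
  · subst h'; linarith
  · have : (n:ℤ) * 1 ≤ n * t := mul_le_mul_of_nonneg_left (by omega) hn.le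
    linarith

/-- Lemma N, construction direction: three strictly nested strip arcs give a forbidden triple. -/
lemma forbidden_of_nested (hpos : 0 < n) {x1 y1 x2 y2 x3 y3 : ℤ}
    (h31 : x3 < x2) (h21 : x2 < x1) (hxy : x1 ≤ y1) (h12 : y1 < y2) (h23 : y2 < y3)
    (hw : y3 ≤ x3 + n) :
    IsForbiddenTriple (ch n x1 y1) (ch n x2 y2) (ch n x3 y3) := by
  refine ⟨![((y1:ZMod n)), ((y2:ZMod n)), ((y3:ZMod n))],
          ![((x1:ZMod n)), ((x2:ZMod n)), ((x3:ZMod n))],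
          ((x1 : ZMod n)),
          ![(y1-x1).toNat, (y2-x1).toNat, (y3-x1).toNat],
          ![(x1-x1).toNat, (x1-x2).toNat, (x1-x3).toNat], ?_, ?_, ?_, ?_, ?_, ?_, ?_, ?_, ?_⟩
  · show ch n x1 y1 = s(_, _); simp only [Matrix.cons_val_zero]; exact Sym2.eq_swap
  · show ch n x2 y2 = s(_, _); simp only [Matrix.cons_val_one, Matrix.head_cons]; exact Sym2.eq_swap
  · show ch n x3 y3 = s(_, _); simp only [Matrix.cons_val_two, Matrix.tail_cons, Matrix.head_cons]; exact Sym2.eq_swap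
  · -- disjointness
    intro k l hkl
    have key : ∀ u v : ℤ, (0 < v - u) → (v - u < n) → ((u : ZMod n)) ≠ ((v : ZMod n)) :=
      fun u v a b => cast_ne_of_between hpos a b
    fin_cases k <;> fin_cases l <;> simp_all <;>
    · rw [Set.eq_empty_iff_forall_notMem]
      rintro z ⟨hz1, hz2⟩
      simp only [Set.mem_insert_iff, Set.mem_singleton_iff] at hz1 hz2
      rcases hz1 with rfl | rfl <;> rcases hz2 with h | h <;>
        first
          | exact key _ _ (by omega) (by omega) h
          | exact key _ _ (by omega) (by omega) h.symm
  · -- StrictMono p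
    intro k l hkl
    fin_cases k <;> fin_cases l <;> simp_all <;> omega
  · -- StrictMono q
    intro k l hkl
    fin_cases k <;> fin_cases l <;> simp_all <;> omega
  · -- p 2 + q 2 ≤ n
    show (y3-x1).toNat + (x1-x3).toNat ≤ n
    omega
  · -- b k = a + p k
    intro k
    fin_cases k
    · exact cast_add_toNat x1 y1 (by omega)
    · exact cast_add_toNat x1 y2 (by omega)
    · exact cast_add_toNat x1 y3 (by omega)
  · -- c k = a - q k
    intro k
    fin_cases k
    · exact cast_sub_toNat x1 x1 (by omega)
    · exact cast_sub_toNat x1 x2 (by omega)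
    · exact cast_sub_toNat x1 x3 (by omega)

/-- Lemma N, destruction direction. -/
lemma nested_of_forbidden (hpos : 0 < n) {α1 α2 α3 : Sym2 (ZMod n)} (h : IsForbiddenTriple α1 α2 α3) :
    ∃ x1 y1 x2 y2 x3 y3 : ℤ, ch n x1 y1 = α1 ∧ ch n x2 y2 = α2 ∧ ch n x3 y3 = α3 ∧
      x3 < x2 ∧ x2 < x1 ∧ x1 ≤ y1 ∧ y1 < y2 ∧ y2 < y3 ∧ y3 ≤ x3 + n ∧
      α1 ≠ α2 ∧ α1 ≠ α3 ∧ α2 ≠ α3 := by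
  obtain ⟨b, c, a, p, q, h1, h2, h3, hdisj, hp, hq, hpq, hb, hc⟩ := h
  haveI : NeZero n := ⟨by omega⟩
  have hA : (((a.val : ℤ) : ZMod n)) = a := by
    push_cast
    rw [ZMod.natCast_val, ZMod.cast_id]
  set A : ℤ := (a.val : ℤ) with hAdef
  have hch : ∀ k : Fin 3, ch n (A - q k) (A + p k) = s(b k, c k) := by
    intro k
    have hx : (((A - q k : ℤ)) : ZMod n) = c k := by
      rw [hc k]; push_cast; rw [hA]
    have hy : (((A + p k : ℤ)) : ZMod n) = b k := by
      rw [hb k]; push_cast; rw [hA]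
    rw [show ch n (A - q k) (A + p k) = s((((A - q k : ℤ)) : ZMod n), (((A + p k : ℤ)) : ZMod n)) from rfl,
      hx, hy]
    exact Sym2.eq_swap
  have hne : ∀ k l : Fin 3, k ≠ l → s(b k, c k) ≠ s(b l, c l) := by
    intro k l hkl he
    have hbk : b k ∈ ({b l, c l} : Set (ZMod n)) := by
      have : b k ∈ ({b l, c l} : Set (ZMod n)) ∨ b k = c l ∧ c k = b l := by
        rw [Sym2.eq_iff] at he
        rcases he with ⟨h1', h2'⟩ | ⟨h1', h2'⟩
        · left; left; exact h1'
        · left; right; exact h1'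
      rcases this with h' | ⟨h', _⟩
      · exact h'
      · right; exact h'
    have := hdisj k l hkl
    have : b k ∈ ({b k, c k} : Set (ZMod n)) ∩ {b l, c l} := ⟨by left; rfl, hbk⟩
    rw [hdisj k l hkl] at this
    exact this
  have hp01 : p 0 < p 1 := hp (by decide)
  have hp12 : p 1 < p 2 := hp (by decide)
  have hq01 : q 0 < q 1 := hq (by decide)
  have hq12 : q 1 < q 2 := hq (by decide)
  refine ⟨A - q 0, A + p 0, A - q 1, A + p 1, A - q 2, A + p 2,
    by rw [hch 0, h1], by rw [hch 1, h2], by rw [hch 2, h3],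
    by omega, by omega, by omega, by omega, by omega, by omega,
    by rw [h1, h2]; exact hne 0 1 (by decide),
    by rw [h1, h3]; exact hne 0 2 (by decide),
    by rw [h2, h3]; exact hne 1 2 (by decide)⟩
/-- Any three distinct chords with the same secantSum give a contradiction with avoidance. -/
lemma sameClass_contra (hpos : 0 < n) {M : Set (Sym2 (ZMod n))} (hM : AvoidsForbiddenTriples M)
    {α β γ : Sym2 (ZMod n)} (hα : α ∈ M) (hβ : β ∈ M) (hγ : γ ∈ M)
    (hab : α ≠ β) (hac : α ≠ γ) (hbc : β ≠ γ)
    (h1 : secantSum α = secantSum β) (h2 : secantSum β = secantSum γ) : False := by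
  haveI : NeZero n := ⟨by omega⟩
  set S : ℤ := ((secantSum α).val : ℤ) with hSdef
  have hS : ((S : ZMod n)) = secantSum α := by
    rw [hSdef]; push_cast; rw [ZMod.natCast_val, ZMod.cast_id]
  obtain ⟨xa, ya, ha1, ha2, ha3, ha4⟩ := arc_exists hpos α S hS
  obtain ⟨xb, yb, hb1, hb2, hb3, hb4⟩ := arc_exists hpos β S (hS.trans h1)
  obtain ⟨xc, yc, hc1, hc2, hc3, hc4⟩ := arc_exists hpos γ S ((hS.trans h1).trans h2)
  -- widths are pairwise distinct
  have hwab : ya - xa ≠ yb - xb := by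
    intro h
    have hx : xa = xb := by omega
    have hy : ya = yb := by omega
    exact hab (by rw [← ha4, ← hb4, hx, hy])
  have hwac : ya - xa ≠ yc - xc := by
    intro h
    have hx : xa = xc := by omega
    have hy : ya = yc := by omega
    exact hac (by rw [← ha4, ← hc4, hx, hy])
  have hwbc : yb - xb ≠ yc - xc := by
    intro h
    have hx : xb = xc := by omega
    have hy : yb = yc := by omega
    exact hbc (by rw [← hb4, ← hc4, hx, hy])
  -- key: a sorted triple yields the contradiction
  have key : ∀ x1 y1 x2 y2 x3 y3 : ℤ, ch n x1 y1 ∈ M → ch n x2 y2 ∈ M → ch n x3 y3 ∈ M →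
      x1 ≤ y1 → y3 ≤ x3 + n → x1 + y1 = x2 + y2 → x2 + y2 = x3 + y3 →
      y1 - x1 < y2 - x2 → y2 - x2 < y3 - x3 → False := by
    intro x1 y1 x2 y2 x3 y3 m1 m2 m3 k1 k2 k3 k4 k5 k6
    exact hM _ m1 _ m2 _ m3
      (forbidden_of_nested hpos (by omega) (by omega) (by omega) (by omega) (by omega) (by omega))
  have ma : ch n xa ya ∈ M := by rw [ha4]; exact hα
  have mb : ch n xb yb ∈ M := by rw [hb4]; exact hβ
  have mc : ch n xc yc ∈ M := by rw [hc4]; exact hγ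
  rcases lt_trichotomy (ya - xa) (yb - xb) with w1 | w1 | w1
  · rcases lt_trichotomy (yb - xb) (yc - xc) with w2 | w2 | w2
    · exact key xa ya xb yb xc yc ma mb mc (by omega) (by omega) (by omega) (by omega) w1 w2
    · exact hwbc w2
    · rcases lt_trichotomy (ya - xa) (yc - xc) with w3 | w3 | w3
      · exact key xa ya xc yc xb yb ma mc mb (by omega) (by omega) (by omega) (by omega) w3 w2
      · exact hwac w3
      · exact key xc yc xa ya xb yb mc ma mb (by omega) (by omega) (by omega) (by omega) w3 w1
  · exact hwab w1
  · rcases lt_trichotomy (ya - xa) (yc - xc) with w2 | w2 | w2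
    · exact key xb yb xa ya xc yc mb ma mc (by omega) (by omega) (by omega) (by omega) w1 w2
    · exact hwac w2
    · rcases lt_trichotomy (yb - xb) (yc - xc) with w3 | w3 | w3
      · exact key xb yb xc yc xa ya mb mc ma (by omega) (by omega) (by omega) (by omega) w3 w2
      · exact hwbc w3
      · exact key xc yc xb yb xa ya mc mb ma (by omega) (by omega) (by omega) (by omega) w3 w1
section Backward

variable {M : Set (Sym2 (ZMod n))} {f : Sym2 (ZMod n) → Sym2 (ZMod n)}

lemma sum_right {β α : Sym2 (ZMod n)} (h : IsToRightOf β α) :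
    secantSum β = secantSum α + 1 := by
  obtain ⟨i, j, h1, h2 | h2⟩ := h <;> subst h1 <;> subst h2 <;> simp [secantSum] <;> ring

/-- Step lemma: the arc of `α` extends to an arc of the right-neighbor. -/
lemma step_arc (hpos : 0 < n) {α β : Sym2 (ZMod n)} (hr : IsToRightOf β α)
    {x y : ℤ} (hch : ch n x y = α) (h1 : x ≤ y) (h2 : y ≤ x + n) :
    ∃ x' y', ch n x' y' = β ∧ x ≤ x' ∧ y ≤ y' ∧ x' + y' = x + y + 1 ∧ x' ≤ y' ∧ y' ≤ x' + n := by
  obtain ⟨i, j, hα, hcase⟩ := hr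
  rw [hα] at hch
  have hxy1 : (((x+1 : ℤ)) : ZMod n) = ((x:ZMod n)) + 1 := by push_cast; ring
  have hyy1 : (((y+1 : ℤ)) : ZMod n) = ((y:ZMod n)) + 1 := by push_cast; ring
  have heq := (Sym2.eq_iff).mp hch
  rcases hcase with hβ | hβ
  · -- β = s(i, j+1)
    rcases heq with ⟨hxi, hyj⟩ | ⟨hxj, hyi⟩
    · rcases lt_or_eq_of_le h2 with hlt | heqn
      · refine ⟨x, y+1, ?_, le_refl x, by omega, by ring, by omega, by omega⟩
        rw [hβ, show ch n x (y+1) = s((x:ZMod n), (((y+1:ℤ)):ZMod n)) from rfl, hyy1, hxi, hyj]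
      · -- y = x + n, so i = j
        have hij : j = i := by
          rw [← hxi, ← hyj, zmod_int_eq_iff]
          exact ⟨-1, by omega⟩
        refine ⟨x+1, y, ?_, by omega, le_refl y, by ring, by omega, by omega⟩
        rw [hβ, show ch n (x+1) y = s((((x+1:ℤ)):ZMod n), (y:ZMod n)) from rfl, hxy1, hxi, hyj, hij]
        exact Sym2.eq_swap
    · rcases lt_or_eq_of_le h1 with hlt | heqn
      · refine ⟨x+1, y, ?_, by omega, le_refl y, by ring, by omega, by omega⟩
        rw [hβ, show ch n (x+1) y = s((((x+1:ℤ)):ZMod n), (y:ZMod n)) from rfl, hxy1, hxj, hyi]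
        exact Sym2.eq_swap
      · -- x = y, so i = j
        have hij : j = i := by rw [← hxj, ← hyi, heqn]
        refine ⟨x, y+1, ?_, le_refl x, by omega, by ring, by omega, by omega⟩
        rw [hβ, show ch n x (y+1) = s((x:ZMod n), (((y+1:ℤ)):ZMod n)) from rfl, hyy1, hxj, hyi, hij]
  · -- β = s(i+1, j)
    rcases heq with ⟨hxi, hyj⟩ | ⟨hxj, hyi⟩
    · rcases lt_or_eq_of_le h1 with hlt | heqn
      · refine ⟨x+1, y, ?_, by omega, le_refl y, by ring, by omega, by omega⟩
        rw [hβ, show ch n (x+1) y = s((((x+1:ℤ)):ZMod n), (y:ZMod n)) from rfl, hxy1, hxi, hyj]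
      · have hij : j = i := by rw [← hxi, ← hyj, heqn]
        refine ⟨x, y+1, ?_, le_refl x, by omega, by ring, by omega, by omega⟩
        rw [hβ, show ch n x (y+1) = s((x:ZMod n), (((y+1:ℤ)):ZMod n)) from rfl, hyy1, hxi, hyj, hij]
        exact Sym2.eq_swap
    · rcases lt_or_eq_of_le h2 with hlt | heqn
      · refine ⟨x, y+1, ?_, le_refl x, by omega, by ring, by omega, by omega⟩
        rw [hβ, show ch n x (y+1) = s((x:ZMod n), (((y+1:ℤ)):ZMod n)) from rfl, hyy1, hxj, hyi]
        exact Sym2.eq_swap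
      · have hij : j = i := by
          rw [← hyi, ← hxj, zmod_int_eq_iff]
          exact ⟨1, by omega⟩
        refine ⟨x+1, y, ?_, by omega, le_refl y, by ring, by omega, by omega⟩
        rw [hβ, show ch n (x+1) y = s((((x+1:ℤ)):ZMod n), (y:ZMod n)) from rfl, hxy1, hxj, hyi, hij]

lemma iter_mem (hmaps : Set.MapsTo f M M) : ∀ (t : ℕ) {α}, α ∈ M → f^[t] α ∈ M := by
  intro t
  induction t with
  | zero => intro α h; simpa using h
  | succ t ih =>
    intro α h
    rw [Function.iterate_succ_apply']
    exact hmaps (ih h)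

lemma iter_injOn (hmaps : Set.MapsTo f M M) (hinj : Set.InjOn f M) :
    ∀ (t : ℕ), Set.InjOn f^[t] M := by
  intro t
  induction t with
  | zero => intro a _ b _ h; simpa using h
  | succ t ih =>
    intro a ha b hb h
    rw [Function.iterate_succ_apply', Function.iterate_succ_apply'] at h
    exact ih ha hb (hinj (iter_mem hmaps t ha) (iter_mem hmaps t hb) h)

lemma iter_arc (hpos : 0 < n) (hmaps : Set.MapsTo f M M)
    (hright : ∀ α ∈ M, IsToRightOf (f α) α) : ∀ (t : ℕ) {α} (_ : α ∈ M) {x y : ℤ}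
    (_ : ch n x y = α) (_ : x ≤ y) (_ : y ≤ x + n),
    ∃ x' y', ch n x' y' = f^[t] α ∧ x ≤ x' ∧ y ≤ y' ∧ x' + y' = x + y + t ∧ x' ≤ y' ∧ y' ≤ x' + n := by
  intro t
  induction t with
  | zero => intro α hα x y hch h1 h2; exact ⟨x, y, by simpa using hch, le_refl _, le_refl _, by omega, h1, h2⟩
  | succ t ih =>
    intro α hα x y hch h1 h2
    obtain ⟨x', y', hch', hx', hy', hsum', h1', h2'⟩ := ih hα hch h1 h2
    obtain ⟨x'', y'', hch'', hx'', hy'', hsum'', h1'', h2''⟩ :=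
      step_arc hpos (hright _ (iter_mem hmaps t hα)) hch' h1' h2'
    rw [Function.iterate_succ_apply']
    exact ⟨x'', y'', hch'', le_trans hx' hx'', le_trans hy' hy'', by omega, h1'', h2''⟩

lemma iter_sum (hmaps : Set.MapsTo f M M) (hright : ∀ α ∈ M, IsToRightOf (f α) α) :
    ∀ (t : ℕ) {α}, α ∈ M → secantSum (f^[t] α) = secantSum α + (t : ZMod n) := by
  intro t
  induction t with
  | zero => intro α h; simp
  | succ t ih =>
    intro α h
    rw [Function.iterate_succ_apply', sum_right (hright _ (iter_mem hmaps t h)), ih h]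
    push_cast
    ring

end Backward
section Backward2

variable {M : Set (Sym2 (ZMod n))} {f : Sym2 (ZMod n) → Sym2 (ZMod n)}

lemma pair_resolve {c d z w u : Sym2 (ZMod n)} (hz : z = c ∨ z = d) (hw : w = c ∨ w = d)
    (hu : u = c ∨ u = d) (hzw : z ≠ w) (huw : u ≠ w) : u = z := by
  rcases hz with rfl|rfl <;> rcases hw with rfl|rfl <;> rcases hu with rfl|rfl <;> simp_all

lemma mem_pair_of (h2 : ∀ k : ZMod n, {α ∈ M | secantSum α = k}.ncard = 2)
    {c d z : Sym2 (ZMod n)} {k : ZMod n} (hset : {α ∈ M | secantSum α = k} = {c, d})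
    (hz : z ∈ M) (hzk : secantSum z = k) : z = c ∨ z = d := by
  have : z ∈ ({c, d} : Set (Sym2 (ZMod n))) := by rw [← hset]; exact ⟨hz, hzk⟩
  simpa using this

lemma sorted_walk_contra (hpos : 0 < n)
    (h2 : ∀ k : ZMod n, {α ∈ M | secantSum α = k}.ncard = 2)
    (hmaps : Set.MapsTo f M M) (hinj : Set.InjOn f M)
    (hright : ∀ α ∈ M, IsToRightOf (f α) α)
    {β γ δ : Sym2 (ZMod n)} (hβ : β ∈ M) (hγ : γ ∈ M) (hδ : δ ∈ M)
    {xb yb xg yg xd yd : ℤ}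
    (ab : ch n xb yb = β) (sb1 : xb ≤ yb) (sb2 : yb ≤ xb + n)
    (ag : ch n xg yg = γ) (sg1 : xg ≤ yg) (sg2 : yg ≤ xg + n)
    (ad : ch n xd yd = δ) (sd1 : xd ≤ yd) (sd2 : yd ≤ xd + n)
    (hS1 : xb + yb ≤ xg + yg) (hS2 : xg + yg ≤ xd + yd)
    (i1 : ¬(xb ≤ xg ∧ yb ≤ yg)) (i2 : ¬(xg ≤ xd ∧ yg ≤ yd)) (i3 : ¬(xb ≤ xd ∧ yb ≤ yd)) :
    False := by
  set t1 : ℕ := (xg + yg - (xb + yb)).toNat with ht1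
  set t2 : ℕ := (xd + yd - (xg + yg)).toNat with ht2
  have ht1' : (t1 : ℤ) = xg + yg - (xb + yb) := by omega
  have ht2' : (t2 : ℤ) = xd + yd - (xg + yg) := by omega
  have sumβ : secantSum β = ((xb + yb : ℤ) : ZMod n) := by rw [← ab, sum_ch]
  have sumγ : secantSum γ = ((xg + yg : ℤ) : ZMod n) := by rw [← ag, sum_ch]
  have sumδ : secantSum δ = ((xd + yd : ℤ) : ZMod n) := by rw [← ad, sum_ch]
  -- first leg
  obtain ⟨x', y', hch', hx', hy', hsum', hs1', hs2'⟩ :=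
    iter_arc hpos hmaps hright t1 hβ ab sb1 sb2
  have hβ'M : f^[t1] β ∈ M := iter_mem hmaps t1 hβ
  have hsumβ' : secantSum (f^[t1] β) = secantSum γ := by
    rw [iter_sum hmaps hright t1 hβ, sumβ, sumγ]
    rw [show ((t1 : ℕ) : ZMod n) = (((t1 : ℤ)) : ZMod n) by push_cast; ring, ht1']
    push_cast
    ring
  obtain ⟨c, d, hcd, hset⟩ := Set.ncard_eq_two.mp (h2 (secantSum γ))
  have hγp : γ = c ∨ γ = d := mem_pair_of h2 hset hγ rfl
  have hβ'p : f^[t1] β = c ∨ f^[t1] β = d := mem_pair_of h2 hset hβ'M hsumβ'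
  have hne1 : f^[t1] β ≠ γ := by
    intro h
    rw [h] at hch'
    have := arc_unique hpos hs1' hs2' sg1 sg2 (by omega) (hch'.trans ag.symm)
    exact i1 ⟨by omega, by omega⟩
  -- second leg from γ
  obtain ⟨x2, y2, hch2, hx2, hy2, hsum2, hs12, hs22⟩ :=
    iter_arc hpos hmaps hright t2 hγ ag sg1 sg2
  have hγ'M : f^[t2] γ ∈ M := iter_mem hmaps t2 hγ
  have hsumγ' : secantSum (f^[t2] γ) = secantSum δ := by
    rw [iter_sum hmaps hright t2 hγ, sumγ, sumδ]
    rw [show ((t2 : ℕ) : ZMod n) = (((t2 : ℤ)) : ZMod n) by push_cast; ring, ht2']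
    push_cast
    ring
  have hne2 : f^[t2] γ ≠ δ := by
    intro h
    rw [h] at hch2
    have := arc_unique hpos hs12 hs22 sd1 sd2 (by omega) (hch2.trans ad.symm)
    exact i2 ⟨by omega, by omega⟩
  -- second leg from f^[t1] β
  obtain ⟨x3, y3, hch3, hx3, hy3, hsum3, hs13, hs23⟩ :=
    iter_arc hpos hmaps hright t2 hβ'M hch' hs1' hs2'
  have hβ''M : f^[t2] (f^[t1] β) ∈ M := iter_mem hmaps t2 hβ'M
  have hsumβ'' : secantSum (f^[t2] (f^[t1] β)) = secantSum δ := by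
    rw [iter_sum hmaps hright t2 hβ'M, hsumβ', sumγ, sumδ]
    rw [show ((t2 : ℕ) : ZMod n) = (((t2 : ℤ)) : ZMod n) by push_cast; ring, ht2']
    push_cast
    ring
  obtain ⟨c', d', hcd', hset'⟩ := Set.ncard_eq_two.mp (h2 (secantSum δ))
  have hδp : δ = c' ∨ δ = d' := mem_pair_of h2 hset' hδ rfl
  have hγ'p : f^[t2] γ = c' ∨ f^[t2] γ = d' := mem_pair_of h2 hset' hγ'M hsumγ'
  have hβ''p : f^[t2] (f^[t1] β) = c' ∨ f^[t2] (f^[t1] β) = d' :=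
    mem_pair_of h2 hset' hβ''M hsumβ''
  have hne3 : f^[t2] (f^[t1] β) ≠ f^[t2] γ := by
    intro h
    exact hne1 (iter_injOn hmaps hinj t2 hβ'M hγ h)
  have hfinal : f^[t2] (f^[t1] β) = δ := pair_resolve hδp hγ'p hβ''p hne2.symm hne3
  rw [hfinal] at hch3
  have := arc_unique hpos hs13 hs23 sd1 sd2 (by omega) (hch3.trans ad.symm)
  exact i3 ⟨by omega, by omega⟩

theorem backward_avoid (hpos : 0 < n)
    (h2 : ∀ k : ZMod n, {α ∈ M | secantSum α = k}.ncard = 2)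
    (hmaps : Set.MapsTo f M M) (hinj : Set.InjOn f M)
    (hright : ∀ α ∈ M, IsToRightOf (f α) α) :
    AvoidsForbiddenTriples M := by
  intro α1 h1 α2 h2' α3 h3' hF
  obtain ⟨x1, y1, x2, y2, x3, y3, hc1, hc2, hc3, k1, k2, k3, k4, k5, k6, _, _, _⟩ :=
    nested_of_forbidden hpos hF
  have s11 : x1 ≤ y1 := by omega
  have s12 : y1 ≤ x1 + n := by omega
  have s21 : x2 ≤ y2 := by omega
  have s22 : y2 ≤ x2 + n := by omega
  have s31 : x3 ≤ y3 := by omega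
  have s32 : y3 ≤ x3 + n := by omega
  rcases le_total (x1+y1) (x2+y2) with a | a
  · rcases le_total (x2+y2) (x3+y3) with b | b
    · exact sorted_walk_contra hpos h2 hmaps hinj hright h1 h2' h3'
        hc1 s11 s12 hc2 s21 s22 hc3 s31 s32 a b
        (by omega) (by omega) (by omega)
    · rcases le_total (x1+y1) (x3+y3) with c | c
      · exact sorted_walk_contra hpos h2 hmaps hinj hright h1 h3' h2'
          hc1 s11 s12 hc3 s31 s32 hc2 s21 s22 c b
          (by omega) (by omega) (by omega)
      · exact sorted_walk_contra hpos h2 hmaps hinj hright h3' h1 h2'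
          hc3 s31 s32 hc1 s11 s12 hc2 s21 s22 c a
          (by omega) (by omega) (by omega)
  · rcases le_total (x1+y1) (x3+y3) with b | b
    · exact sorted_walk_contra hpos h2 hmaps hinj hright h2' h1 h3'
        hc2 s21 s22 hc1 s11 s12 hc3 s31 s32 a b
        (by omega) (by omega) (by omega)
    · rcases le_total (x2+y2) (x3+y3) with c | c
      · exact sorted_walk_contra hpos h2 hmaps hinj hright h2' h3' h1
          hc2 s21 s22 hc3 s31 s32 hc1 s11 s12 c b
          (by omega) (by omega) (by omega)
      · exact sorted_walk_contra hpos h2 hmaps hinj hright h3' h2' h1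
          hc3 s31 s32 hc2 s21 s22 hc1 s11 s12 c a
          (by omega) (by omega) (by omega)

theorem backward_maximal (hpos : 0 < n)
    (h2 : ∀ k : ZMod n, {α ∈ M | secantSum α = k}.ncard = 2) :
    ∀ M' : Set (Sym2 (ZMod n)), AvoidsForbiddenTriples M' → M ⊆ M' → M' = M := by
  intro M' hM' hsub
  ext β
  constructor
  · intro hβ
    by_contra hβM
    obtain ⟨c, d, hcd, hset⟩ := Set.ncard_eq_two.mp (h2 (secantSum β))
    have hc : c ∈ M ∧ secantSum c = secantSum β := by
      have : c ∈ {α ∈ M | secantSum α = secantSum β} := by rw [hset]; left; rfl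
      exact this
    have hd : d ∈ M ∧ secantSum d = secantSum β := by
      have : d ∈ {α ∈ M | secantSum α = secantSum β} := by rw [hset]; right; rfl
      exact this
    exact sameClass_contra hpos hM' (hsub hc.1) (hsub hd.1) hβ hcd
      (fun h => hβM (h ▸ hc.1)) (fun h => hβM (h ▸ hd.1))
      (hc.2.trans hd.2.symm) hd.2
  · intro h; exact hsub h

end Backward2
section Forward

/-- Arcs under strip constraints of the same chord: translate or flip form. -/
lemma arc_rel (hpos : 0 < n) {x y x0 y0 : ℤ}
    (h1 : x ≤ y) (h2 : y ≤ x + n) (h1' : x0 ≤ y0) (h2' : y0 ≤ x0 + n)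
    (hch : ch n x y = ch n x0 y0) :
    (∃ a : ℤ, x0 = x + a*n ∧ y0 = y + a*n) ∨ (∃ a : ℤ, x0 = y + a*n ∧ y0 = x + a*n + n) := by
  have hn : (0:ℤ) < n := by exact_mod_cast hpos
  rw [ch_eq_iff] at hch
  rcases hch with ⟨⟨a, ha⟩, ⟨b, hb⟩⟩ | ⟨⟨a, ha⟩, ⟨b, hb⟩⟩
  · -- x0 = x + na, y0 = y + nb with |b - a| ≤ 1
    have hkey : y0 - x0 - (y - x) = (n:ℤ)*b - n*a := by linarith [ha, hb]
    have hba : b - a = 0 ∨ b - a = 1 ∨ b - a = -1 := by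
      rcases lt_trichotomy (b-a) 0 with h | h | h
      · right; right
        rcases lt_or_ge (b-a) (-1) with h' | h'
        · exfalso
          have hh : (n:ℤ) * (b-a) ≤ n * (-2) := mul_le_mul_of_nonneg_left (by omega) hn.le
          have e1 : (n:ℤ) * (b - a) = n*b - n*a := by ring
          have e2 : (n:ℤ) * (-2) = -(2*n) := by ring
          linarith
        · omega
      · left; exact h
      · right; left
        rcases lt_or_ge 1 (b-a) with h' | h'
        · exfalso
          have hh : (n:ℤ) * 2 ≤ n * (b-a) := mul_le_mul_of_nonneg_left (by omega) hn.le
          have e1 : (n:ℤ) * (b - a) = n*b - n*a := by ring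
          have e2 : (n:ℤ) * 2 = 2*n := by ring
          linarith
        · omega
    rcases hba with h | h | h
    · left
      refine ⟨a, by linarith [ha, mul_comm a (n:ℤ)], ?_⟩
      have hab : b = a := by omega
      rw [hab] at hb
      linarith [hb, mul_comm a (n:ℤ)]
    · -- b = a + 1: width 0 → n, so x = y
      have hnb : (n:ℤ)*b - n*a = n := by
        have : b = a + 1 := by omega
        subst this; ring
      have hxy : x = y := by linarith
      right
      refine ⟨a, ?_, ?_⟩
      · linarith [ha, mul_comm a (n:ℤ), hxy]
      · have : b = a + 1 := by omega
        subst this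
        have e : (n:ℤ)*(a+1) = a*n + n := by ring
        rw [hxy]; linarith [hb, e]
    · -- b = a - 1: width n → 0, y = x + n
      have hnb : (n:ℤ)*b - n*a = -n := by
        have : b = a - 1 := by omega
        subst this; ring
      have hxy : y = x + n := by linarith
      right
      refine ⟨a - 1, ?_, ?_⟩
      · have e : ((a:ℤ)-1)*n = n*a - n := by ring
        linarith [ha, hxy, e]
      · have : b = a - 1 := by omega
        subst this
        have e : ((a:ℤ)-1)*n = n*(a-1) := by ring
        linarith [hb, hxy, e]
  · -- y0 = x + na, x0 = y + nb
    have hkey : (y0 - x0) + (y - x) = (n:ℤ)*a - n*b := by linarith [ha, hb]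
    have hab : a - b = 0 ∨ a - b = 1 ∨ a - b = 2 := by
      rcases lt_trichotomy (a-b) 0 with h | h | h
      · exfalso
        have hh : (n:ℤ) * (a-b) ≤ n * (-1) := mul_le_mul_of_nonneg_left (by omega) hn.le
        have e1 : (n:ℤ) * (a - b) = n*a - n*b := by ring
        linarith
      · left; exact h
      · rcases lt_or_ge (a-b) 3 with h' | h'
        · omega
        · exfalso
          have hh : (n:ℤ) * 3 ≤ n * (a-b) := mul_le_mul_of_nonneg_left (by omega) hn.le
          have e1 : (n:ℤ) * (a - b) = n*a - n*b := by ring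
          linarith
    rcases hab with h | h | h
    · -- widths both 0, x = y
      have hnab : (n:ℤ)*a - n*b = 0 := by
        have : a = b := by omega
        subst this; ring
      have hxy : x = y := by linarith
      left
      refine ⟨b, ?_, ?_⟩
      · linarith [hb, mul_comm b (n:ℤ), hxy]
      · have hab2 : (n:ℤ)*a = n*b := by
          have : a = b := by omega
          rw [this]
        linarith [ha, mul_comm b (n:ℤ), hxy, hab2]
    · right
      refine ⟨b, by linarith [hb, mul_comm b (n:ℤ)], ?_⟩
      have : a = b + 1 := by omega
      subst this
      have e : (n:ℤ)*(b+1) = b*n + n := by ring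
      linarith [ha, e]
    · -- widths both n
      have hnab : (n:ℤ)*a - n*b = 2*n := by
        have : a = b + 2 := by omega
        subst this; ring
      have hxy : y = x + n := by linarith
      left
      refine ⟨b + 1, ?_, ?_⟩
      · have e : ((b:ℤ)+1)*n = n*b + n := by ring
        linarith [hb, hxy, e]
      · have : a = b + 2 := by omega
        subst this
        have e : ((b:ℤ)+1)*n = n*(b+2) - n := by ring
        linarith [ha, hxy, e]

variable {M : Set (Sym2 (ZMod n))}

/-- Membership of an arc in the arc system of `M`. -/
def inX (n : ℕ) (M : Set (Sym2 (ZMod n))) (x y : ℤ) : Prop :=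
  x ≤ y ∧ y ≤ x + n ∧ ch n x y ∈ M

lemma inX_translate (hpos : 0 < n) {x y : ℤ} (h : inX n M x y) (a : ℤ) :
    inX n M (x + a*n) (y + a*n) := by
  obtain ⟨h1, h2, h3⟩ := h
  refine ⟨by omega, by omega, ?_⟩
  have : ch n (x + a*n) (y + a*n) = ch n x y := by
    rw [ch_eq_iff]; left; exact ⟨⟨-a, by ring⟩, ⟨-a, by ring⟩⟩
  rw [this]; exact h3

lemma inX_flip (hpos : 0 < n) {x y : ℤ} (h : inX n M x y) (a : ℤ) :
    inX n M (y + a*n) (x + a*n + n) := by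
  obtain ⟨h1, h2, h3⟩ := h
  refine ⟨by omega, by omega, ?_⟩
  have : ch n (y + a*n) (x + a*n + n) = ch n x y := by
    rw [ch_eq_iff]; right
    constructor
    · exact ⟨-a, by ring⟩
    · exact ⟨-(a+1), by push_cast; ring⟩
  rw [this]; exact h3

lemma avoidX (hpos : 0 < n) (hA : AvoidsForbiddenTriples M) {x1 y1 x2 y2 x3 y3 : ℤ}
    (h1 : inX n M x1 y1) (h2 : inX n M x2 y2) (h3 : inX n M x3 y3)
    (n1 : x3 < x2) (n2 : x2 < x1) (n3 : y1 < y2) (n4 : y2 < y3) : False :=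
  hA _ h1.2.2 _ h2.2.2 _ h3.2.2
    (forbidden_of_nested hpos n1 n2 h1.1 n3 n4 h3.2.1)

end Forward
section Forward2

variable {M : Set (Sym2 (ZMod n))}

/-- If a strip arc's chord is not in a maximal avoiding set, one of three blocking patterns holds. -/
lemma blocked (hpos : 0 < n) (hA : AvoidsForbiddenTriples M)
    (hMax : ∀ M' : Set (Sym2 (ZMod n)), AvoidsForbiddenTriples M' → M ⊆ M' → M' = M)
    {x0 y0 : ℤ} (hs1 : x0 ≤ y0) (hs2 : y0 ≤ x0 + n) (hnotM : ch n x0 y0 ∉ M) :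
    (∃ x2 y2, inX n M x2 y2 ∧ (∃ x1 y1, inX n M x1 y1 ∧ x2 < x1 ∧ y1 < y2) ∧ x0 < x2 ∧ y2 < y0)
    ∨ ((∃ x1 y1, inX n M x1 y1 ∧ x0 < x1 ∧ y1 < y0) ∧
       (∃ x3 y3, inX n M x3 y3 ∧ x3 < x0 ∧ y0 < y3))
    ∨ (∃ x2 y2, inX n M x2 y2 ∧ (∃ x3 y3, inX n M x3 y3 ∧ x3 < x2 ∧ y2 < y3) ∧ x2 < x0 ∧ y0 < y2) := by
  set c := ch n x0 y0 with hc
  have hnotav : ¬ AvoidsForbiddenTriples (insert c M) := by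
    intro hgood
    have := hMax _ hgood (Set.subset_insert _ _)
    exact hnotM (by rw [← this]; exact Set.mem_insert _ _)
  rw [AvoidsForbiddenTriples] at hnotav
  push_neg at hnotav
  obtain ⟨α1, m1, α2, m2, α3, m3, hF⟩ := hnotav
  obtain ⟨x1, y1, x2, y2, x3, y3, hc1, hc2, hc3, k1, k2, k3, k4, k5, k6, d12, d13, d23⟩ :=
    nested_of_forbidden hpos hF
  rw [Set.mem_insert_iff] at m1 m2 m3
  -- exactly one is c
  have hcases : (α1 = c ∧ α2 ∈ M ∧ α3 ∈ M) ∨ (α2 = c ∧ α1 ∈ M ∧ α3 ∈ M) ∨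
      (α3 = c ∧ α1 ∈ M ∧ α2 ∈ M) := by
    rcases m1 with e1 | e1
    · left
      refine ⟨e1, ?_, ?_⟩
      · rcases m2 with e2 | e2
        · exact absurd (e1.trans e2.symm) d12
        · exact e2
      · rcases m3 with e3 | e3
        · exact absurd (e1.trans e3.symm) d13
        · exact e3
    · rcases m2 with e2 | e2
      · right; left
        refine ⟨e2, e1, ?_⟩
        rcases m3 with e3 | e3
        · exact absurd (e2.trans e3.symm) d23
        · exact e3
      · rcases m3 with e3 | e3
        · right; right; exact ⟨e3, e1, e2⟩
        · exact absurd (hA _ e1 _ e2 _ e3) (by intro h; exact h hF)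
  have hX1 : x1 ≤ y1 := by omega
  rcases hcases with ⟨he, hm2, hm3⟩ | ⟨he, hm1, hm3⟩ | ⟨he, hm1, hm2⟩
  · -- α1 = c : designated arc (x1,y1)
    have hrel := arc_rel hpos hX1 (by omega) hs1 hs2 (by rw [hc1, he])
    have i2 : inX n M x2 y2 := ⟨by omega, by omega, by rw [hc2]; exact hm2⟩
    have i3 : inX n M x3 y3 := ⟨by omega, by omega, by rw [hc3]; exact hm3⟩
    rcases hrel with ⟨a, ha1, ha2⟩ | ⟨a, ha1, ha2⟩
    · right; right
      exact ⟨x2 + a*n, y2 + a*n, inX_translate hpos i2 a,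
        ⟨x3 + a*n, y3 + a*n, inX_translate hpos i3 a, by omega, by omega⟩, by omega, by omega⟩
    · left
      exact ⟨y2 + a*n, x2 + a*n + n, inX_flip hpos i2 a,
        ⟨y3 + a*n, x3 + a*n + n, inX_flip hpos i3 a, by omega, by omega⟩, by omega, by omega⟩
  · -- α2 = c : designated arc (x2,y2)
    have hrel := arc_rel (x := x2) (y := y2) hpos (by omega) (by omega) hs1 hs2 (by rw [hc2, he])
    have i1 : inX n M x1 y1 := ⟨by omega, by omega, by rw [hc1]; exact hm1⟩
    have i3 : inX n M x3 y3 := ⟨by omega, by omega, by rw [hc3]; exact hm3⟩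
    rcases hrel with ⟨a, ha1, ha2⟩ | ⟨a, ha1, ha2⟩
    · right; left
      exact ⟨⟨x1 + a*n, y1 + a*n, inX_translate hpos i1 a, by omega, by omega⟩,
        ⟨x3 + a*n, y3 + a*n, inX_translate hpos i3 a, by omega, by omega⟩⟩
    · right; left
      exact ⟨⟨y3 + a*n, x3 + a*n + n, inX_flip hpos i3 a, by omega, by omega⟩,
        ⟨y1 + a*n, x1 + a*n + n, inX_flip hpos i1 a, by omega, by omega⟩⟩
  · -- α3 = c : designated arc (x3,y3)
    have hrel := arc_rel (x := x3) (y := y3) hpos (by omega) (by omega) hs1 hs2 (by rw [hc3, he])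
    have i1 : inX n M x1 y1 := ⟨by omega, by omega, by rw [hc1]; exact hm1⟩
    have i2 : inX n M x2 y2 := ⟨by omega, by omega, by rw [hc2]; exact hm2⟩
    rcases hrel with ⟨a, ha1, ha2⟩ | ⟨a, ha1, ha2⟩
    · left
      exact ⟨x2 + a*n, y2 + a*n, inX_translate hpos i2 a,
        ⟨x1 + a*n, y1 + a*n, inX_translate hpos i1 a, by omega, by omega⟩, by omega, by omega⟩
    · right; right
      exact ⟨y2 + a*n, x2 + a*n + n, inX_flip hpos i2 a,
        ⟨y1 + a*n, x1 + a*n + n, inX_flip hpos i1 a, by omega, by omega⟩, by omega, by omega⟩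

end Forward2
section P1

variable {M : Set (Sym2 (ZMod n))}

lemma exists_arc_inX (hpos : 0 < n) {β : Sym2 (ZMod n)} (hβ : β ∈ M) :
    ∃ x y, inX n M x y := by
  haveI : NeZero n := ⟨by omega⟩
  obtain ⟨x, y, h1, h2, _, h4⟩ := arc_exists hpos β ((secantSum β).val : ℤ)
    (by push_cast; rw [ZMod.natCast_val, ZMod.cast_id])
  exact ⟨x, y, h1, h2, by rw [h4]; exact hβ⟩

/-- (P1): every class of a maximal avoiding nonempty-context set contains two distinct chords. -/
lemma exists_two_in_class (hn : 3 ≤ n) (hA : AvoidsForbiddenTriples M)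
    (hMax : ∀ M' : Set (Sym2 (ZMod n)), AvoidsForbiddenTriples M' → M ⊆ M' → M' = M)
    (k : ZMod n) :
    ∃ c d : Sym2 (ZMod n), c ≠ d ∧ c ∈ M ∧ d ∈ M ∧ secantSum c = k ∧ secantSum d = k := by
  haveI : NeZero n := ⟨by omega⟩
  have hpos : 0 < n := by omega
  by_contra hcon
  push_neg at hcon
  have hsub : ∀ c d : Sym2 (ZMod n), c ∈ M → d ∈ M →
      secantSum c = k → secantSum d = k → c = d := by
    intro c d hc hd hkc hkd
    by_contra hne
    exact (hcon c d hne hc hd hkc) hkd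
  set K : ℤ := (k.val : ℤ) with hKdef
  have hKcast : ((K : ZMod n)) = k := by
    rw [hKdef]; push_cast; rw [ZMod.natCast_val, ZMod.cast_id]
  have hK0 : 0 ≤ K := by positivity
  have hKn : K < n := by
    rw [hKdef]; exact_mod_cast ZMod.val_lt k
  -- candidate construction
  have cand : ∀ v : ℤ, 0 ≤ v → v ≤ n → (2 ∣ K - v) →
      ∃ x y : ℤ, x + y = K ∧ y - x = v ∧ x ≤ y ∧ y ≤ x + n := by
    rintro v h0 h1 ⟨t, ht⟩
    exact ⟨t, K - t, by ring, by omega, by omega, by omega⟩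
  have candsum : ∀ x y : ℤ, x + y = K → secantSum (ch n x y) = k := by
    intro x y hxy
    rw [sum_ch, hxy, hKcast]
  -- M is nonempty
  have hMne : ∃ β, β ∈ M := by
    by_contra hemp
    push_neg at hemp
    obtain ⟨x0, y0, hxy0, hw0, hst1, hst2⟩ := cand (K - 2*(K/2)) (by omega) (by omega) (by omega)
    have hnot : ch n x0 y0 ∉ M := hemp _
    rcases blocked hpos hA hMax hst1 hst2 hnot with
      ⟨x2, y2, hX2, _, _, _⟩ | ⟨⟨x1, y1, hX1, _, _⟩, _⟩ | ⟨x2, y2, hX2, _, _, _⟩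
    · exact hemp _ hX2.2.2
    · exact hemp _ hX1.2.2
    · exact hemp _ hX2.2.2
  obtain ⟨β0, hβ0⟩ := hMne
  obtain ⟨xw, yw, hXw⟩ := exists_arc_inX hpos hβ0
  -- the outer envelope value e at level K
  obtain ⟨e, ⟨xs, ys, hXs, hts1, hts2⟩, hemax⟩ :=
    Int.exists_greatest_of_bdd (P := fun t => ∃ x y, inX n M x y ∧ t ≤ K - 2*x ∧ t ≤ 2*y - K)
      ⟨(n : ℤ), by
        rintro z ⟨x, y, hX, h1, h2⟩
        have := hX.1; have := hX.2.1; omega⟩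
      ⟨min (K - 2*xw) (2*yw - K), xw, yw, hXw, min_le_left _ _, min_le_right _ _⟩
  have hepar : 2 ∣ (K - e) := by
    have hnot : ¬ (e + 1 ≤ K - 2*xs ∧ e + 1 ≤ 2*ys - K) := by
      intro ⟨h1, h2⟩
      have := hemax (e+1) ⟨xs, ys, hXs, h1, h2⟩
      omega
    omega
  have heub : e ≤ n := by
    have := hXs.1; have := hXs.2.1; omega
  -- the inner envelope value Imin at level K
  obtain ⟨im, ⟨xm, ym, hXm, htm1, htm2⟩, himin⟩ :=
    Int.exists_least_of_bdd (P := fun t => ∃ x y, inX n M x y ∧ 2*y - K ≤ t ∧ K - 2*x ≤ t)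
      ⟨0, by
        rintro z ⟨x, y, hX, h1, h2⟩
        have := hX.1; omega⟩
      ⟨max (K - 2*xw) (2*yw - K), xw, yw, hXw, le_max_right _ _, le_max_left _ _⟩
  have himpar : 2 ∣ (K - im) := by
    have hnot : ¬ (2*ym - K ≤ im - 1 ∧ K - 2*xm ≤ im - 1) := by
      intro ⟨h1, h2⟩
      have := himin (im - 1) ⟨xm, ym, hXm, h1, h2⟩
      omega
    omega
  have him0 : 0 ≤ im := by
    have := hXm.1; omega
  set vmin : ℤ := K - 2*(K/2) with hvmin
  have hvmin01 : vmin = 0 ∨ vmin = 1 := by omega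
  have hvminpar : 2 ∣ K - vmin := by omega
  -- Step 2 : e ≥ vmin
  have hevmin : vmin ≤ e := by
    by_contra hlt
    push_neg at hlt
    have helt : e ≤ vmin - 2 := by omega
    obtain ⟨x0, y0, hxy0, hw0, hst1, hst2⟩ := cand vmin (by omega) (by omega) hvminpar
    have hnot : ch n x0 y0 ∉ M := by
      intro hmem
      have : vmin ≤ e := hemax vmin ⟨x0, y0, ⟨hst1, hst2, hmem⟩, by omega, by omega⟩
      omega
    rcases blocked hpos hA hMax hst1 hst2 hnot with
      ⟨x2, y2, hX2, ⟨x1, y1, hX1, hn1, hn2⟩, hi1, hi2⟩ |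
      ⟨⟨x1, y1, hX1, hi1, hi2⟩, ⟨x3, y3, hX3, ho1, ho2⟩⟩ |
      ⟨x2, y2, hX2, ⟨x3, y3, hX3, ho1, ho2⟩, hc1, hc2⟩
    · have := hX1.1; have := hX2.1; omega
    · have : vmin + 2 ≤ e := hemax (vmin+2) ⟨x3, y3, hX3, by omega, by omega⟩
      omega
    · have : vmin + 2 ≤ e := hemax (vmin+2) ⟨x2, y2, hX2, by omega, by omega⟩
      omega
  -- Step 3 : the chord of width e at level K is in M
  obtain ⟨xe, ye, hxye, hwe, hste1, hste2⟩ := cand e (by omega) heub hepar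
  have hceM : ch n xe ye ∈ M := by
    by_contra hnot
    rcases blocked hpos hA hMax hste1 hste2 hnot with
      ⟨x2, y2, hX2, ⟨x1, y1, hX1, hn1, hn2⟩, hi1, hi2⟩ |
      ⟨⟨x1, y1, hX1, hi1, hi2⟩, ⟨x3, y3, hX3, ho1, ho2⟩⟩ |
      ⟨x2, y2, hX2, ⟨x3, y3, hX3, ho1, ho2⟩, hc1, hc2⟩
    · -- A1 ⋐ A2 ⋐ A* : forbidden
      exact avoidX hpos hA hX1 hX2 ⟨hXs.1, hXs.2.1, hXs.2.2⟩
        (by omega) hn1 hn2 (by omega)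
    · have : e + 2 ≤ e := hemax (e+2) ⟨x3, y3, hX3, by omega, by omega⟩
      omega
    · have : e + 2 ≤ e := hemax (e+2) ⟨x2, y2, hX2, by omega, by omega⟩
      omega
  -- helper: candidates with width ≠ e are not in M
  have hnotM_of_ne : ∀ {x y : ℤ}, x + y = K → x ≤ y → y ≤ x + n → y - x ≠ e →
      ch n x y ∉ M := by
    intro x y hxy h1 h2 hne hmem
    have heq := hsub _ _ hmem hceM (candsum _ _ hxy) (candsum _ _ hxye)
    have := arc_unique hpos h1 h2 hste1 hste2 (by omega) heq
    omega
  -- Step 4 : e < vmin + 2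
  have hesmall : e ≤ vmin + 1 := by
    by_contra hbig
    push_neg at hbig
    rcases le_or_gt im (e - 2) with h4a | h4b
    · -- candidate of width im
      have him_vmin : vmin ≤ im := by omega
      obtain ⟨x0, y0, hxy0, hw0, hst1, hst2⟩ := cand im (by omega) (by omega) himpar
      have hnot : ch n x0 y0 ∉ M := hnotM_of_ne hxy0 hst1 hst2 (by omega)
      rcases blocked hpos hA hMax hst1 hst2 hnot with
        ⟨x2, y2, hX2, ⟨x1, y1, hX1, hn1, hn2⟩, hi1, hi2⟩ |
        ⟨⟨x1, y1, hX1, hi1, hi2⟩, ⟨x3, y3, hX3, ho1, ho2⟩⟩ |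
        ⟨x2, y2, hX2, ⟨x3, y3, hX3, ho1, ho2⟩, hc1, hc2⟩
      · have : im ≤ im - 2 := himin (im - 2) ⟨x2, y2, hX2, by omega, by omega⟩
        omega
      · have : im ≤ im - 2 := himin (im - 2) ⟨x1, y1, hX1, by omega, by omega⟩
        omega
      · -- Am ⋐ A2 ⋐ A3
        exact avoidX hpos hA hXm hX2 hX3 (by omega) (by omega) (by omega) (by omega)
    · -- candidate of width e - 2
      obtain ⟨x0, y0, hxy0, hw0, hst1, hst2⟩ := cand (e-2) (by omega) (by omega) (by omega)
      have hnot : ch n x0 y0 ∉ M := hnotM_of_ne hxy0 hst1 hst2 (by omega)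
      rcases blocked hpos hA hMax hst1 hst2 hnot with
        ⟨x2, y2, hX2, ⟨x1, y1, hX1, hn1, hn2⟩, hi1, hi2⟩ |
        ⟨⟨x1, y1, hX1, hi1, hi2⟩, ⟨x3, y3, hX3, ho1, ho2⟩⟩ |
        ⟨x2, y2, hX2, ⟨x3, y3, hX3, ho1, ho2⟩, hc1, hc2⟩
      · have : im ≤ e - 4 := himin (e - 4) ⟨x2, y2, hX2, by omega, by omega⟩
        omega
      · have : im ≤ e - 4 := himin (e - 4) ⟨x1, y1, hX1, by omega, by omega⟩
        omega
      · have : e + 2 ≤ e := hemax (e+2) ⟨x3, y3, hX3, by omega, by omega⟩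
        omega
  have heeq : e = vmin := by omega
  -- Step 6 : candidate of width vmin + 2
  obtain ⟨x0, y0, hxy0, hw0, hst1, hst2⟩ := cand (vmin + 2) (by omega) (by omega) (by omega)
  have hnot : ch n x0 y0 ∉ M := hnotM_of_ne hxy0 hst1 hst2 (by omega)
  rcases blocked hpos hA hMax hst1 hst2 hnot with
    ⟨x2, y2, hX2, ⟨x1, y1, hX1, hn1, hn2⟩, hi1, hi2⟩ |
    ⟨⟨x1, y1, hX1, hi1, hi2⟩, ⟨x3, y3, hX3, ho1, ho2⟩⟩ |
    ⟨x2, y2, hX2, ⟨x3, y3, hX3, ho1, ho2⟩, hc1, hc2⟩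
  · have := hX1.1; have := hX2.1; omega
  · have : vmin + 4 ≤ e := hemax (vmin + 4) ⟨x3, y3, hX3, by omega, by omega⟩
    omega
  · have : vmin + 4 ≤ e := hemax (vmin + 4) ⟨x2, y2, hX2, by omega, by omega⟩
    omega

end P1
section Walk

variable {M : Set (Sym2 (ZMod n))}

lemma right_of_arcs (hpos : 0 < n) {x y x' y' : ℤ}
    (h : (x' = x ∧ y' = y + 1) ∨ (x' = x + 1 ∧ y' = y)) :
    IsToRightOf (ch n x' y') (ch n x y) := by
  refine ⟨((x : ZMod n)), ((y : ZMod n)), rfl, ?_⟩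
  rcases h with ⟨h1, h2⟩ | ⟨h1, h2⟩
  · left
    rw [h1, h2]
    show s(((x:ℤ):ZMod n), (((y+1:ℤ)):ZMod n)) = s(((x:ℤ):ZMod n), ((y:ℤ):ZMod n)+1)
    rw [show (((y+1:ℤ)):ZMod n) = ((y:ℤ):ZMod n)+1 by push_cast; ring]
  · right
    rw [h1, h2]
    show s((((x+1:ℤ)):ZMod n), ((y:ℤ):ZMod n)) = s(((x:ℤ):ZMod n)+1, ((y:ℤ):ZMod n))
    rw [show (((x+1:ℤ)):ZMod n) = ((x:ℤ):ZMod n)+1 by push_cast; ring]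

lemma level_data (hn : 3 ≤ n) (hA : AvoidsForbiddenTriples M)
    (hMax : ∀ M' : Set (Sym2 (ZMod n)), AvoidsForbiddenTriples M' → M ⊆ M' → M' = M) :
    ∀ S : ℤ, ∃ xlo ylo xhi yhi : ℤ,
      inX n M xlo ylo ∧ inX n M xhi yhi ∧ xlo + ylo = S ∧ xhi + yhi = S ∧
      ylo - xlo < yhi - xhi ∧
      (∀ β ∈ M, secantSum β = ((S : ZMod n)) → β = ch n xlo ylo ∨ β = ch n xhi yhi) := by
  intro S
  have hpos : 0 < n := by omega
  obtain ⟨c, d, hcd, hcM, hdM, hck, hdk⟩ := exists_two_in_class hn hA hMax ((S : ZMod n))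
  obtain ⟨xc, yc, hc1, hc2, hc3, hc4⟩ := arc_exists hpos c S hck.symm
  obtain ⟨xd, yd, hd1, hd2, hd3, hd4⟩ := arc_exists hpos d S hdk.symm
  have hwne : yc - xc ≠ yd - xd := by
    intro h
    have hx : xc = xd := by omega
    have hy : yc = yd := by omega
    exact hcd (by rw [← hc4, ← hd4, hx, hy])
  have hclose : ∀ β ∈ M, secantSum β = ((S : ZMod n)) → β = ch n xc yc ∨ β = ch n xd yd := by
    intro β hβ hβk
    by_contra hno
    push_neg at hno
    rw [hc4, hd4] at hno
    exact sameClass_contra hpos hA hβ hcM hdM hno.1 hno.2 hcd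
      (hβk.trans hck.symm) (hck.trans hdk.symm)
  rcases lt_or_gt_of_ne hwne with h | h
  · exact ⟨xc, yc, xd, yd, ⟨hc1, hc2, by rw [hc4]; exact hcM⟩,
      ⟨hd1, hd2, by rw [hd4]; exact hdM⟩, hc3, hd3, h, hclose⟩
  · refine ⟨xd, yd, xc, yc, ⟨hd1, hd2, by rw [hd4]; exact hdM⟩,
      ⟨hc1, hc2, by rw [hc4]; exact hcM⟩, hd3, hc3, h, ?_⟩
    intro β hβ hβk
    exact (hclose β hβ hβk).symm

/-- Construction of the secant walk for a maximal avoiding set. -/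
lemma walk_exists (hn : 3 ≤ n) (hA : AvoidsForbiddenTriples M)
    (hMax : ∀ M' : Set (Sym2 (ZMod n)), AvoidsForbiddenTriples M' → M ⊆ M' → M' = M) :
    ∃ f : Sym2 (ZMod n) → Sym2 (ZMod n),
      Set.MapsTo f M M ∧ Set.InjOn f M ∧ ∀ α ∈ M, IsToRightOf (f α) α := by
  haveI : NeZero n := ⟨by omega⟩
  have hpos : 0 < n := by omega
  choose xl yl xh yh hlo hhi hlosum hhisum hwlt hclose using level_data hn hA hMax
  -- widths have the parity of the level, and are within [0, n]
  have hlo1 : ∀ S, xl S ≤ yl S := fun S => (hlo S).1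
  have hlo2 : ∀ S, yl S ≤ xl S + n := fun S => (hlo S).2.1
  have hhi1 : ∀ S, xh S ≤ yh S := fun S => (hhi S).1
  have hhi2 : ∀ S, yh S ≤ xh S + n := fun S => (hhi S).2.1
  -- same-level strict containment of lo in hi (coordinates)
  have hlohi : ∀ S, xh S < xl S ∧ yl S < yh S := by
    intro S
    have h1 := hlosum S; have h2 := hhisum S; have h3 := hwlt S
    constructor <;> omega
  -- Lipschitz for hi widths
  have hiLip : ∀ S, (yh (S+1) - xh (S+1)) - (yh S - xh S) = 1 ∨
      (yh (S+1) - xh (S+1)) - (yh S - xh S) = -1 := by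
    intro S
    have p1 := hlosum S; have p2 := hhisum S; have p3 := hwlt S
    have q1 := hlosum (S+1); have q2 := hhisum (S+1); have q3 := hwlt (S+1)
    have hb1 : ¬ ((yh (S+1) - xh (S+1)) - (yh S - xh S) ≥ 3) := by
      intro hge
      exact avoidX hpos hA (hlo S) (hhi S) (hhi (S+1))
        (by omega) (by omega) (by omega) (by omega)
    have hb2 : ¬ ((yh (S+1) - xh (S+1)) - (yh S - xh S) ≤ -3) := by
      intro hge
      exact avoidX hpos hA (hlo (S+1)) (hhi (S+1)) (hhi S)
        (by omega) (by omega) (by omega) (by omega)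
    omega
  -- Lipschitz for lo widths
  have loLip : ∀ S, (yl (S+1) - xl (S+1)) - (yl S - xl S) = 1 ∨
      (yl (S+1) - xl (S+1)) - (yl S - xl S) = -1 := by
    intro S
    have p1 := hlosum S; have p2 := hhisum S; have p3 := hwlt S
    have q1 := hlosum (S+1); have q2 := hhisum (S+1); have q3 := hwlt (S+1)
    have hb1 : ¬ ((yl (S+1) - xl (S+1)) - (yl S - xl S) ≥ 3) := by
      intro hge
      exact avoidX hpos hA (hlo S) (hlo (S+1)) (hhi (S+1))
        (by omega) (by omega) (by omega) (by omega)
    have hb2 : ¬ ((yl (S+1) - xl (S+1)) - (yl S - xl S) ≤ -3) := by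
      intro hge
      exact avoidX hpos hA (hlo (S+1)) (hlo S) (hhi S)
        (by omega) (by omega) (by omega) (by omega)
    omega
  -- the lo and hi chords at a level differ
  have hlhne : ∀ S, ch n (xl S) (yl S) ≠ ch n (xh S) (yh S) := by
    intro S h
    have := arc_unique hpos (hlo1 S) (hlo2 S) (hhi1 S) (hhi2 S)
      (by rw [hlosum S, hhisum S]) h
    have := hwlt S
    omega
  -- the level of a chord
  set Sof : Sym2 (ZMod n) → ℤ := fun β => ((secantSum β).val : ℤ) with hSof
  have hSofcast : ∀ β, (((Sof β : ℤ)) : ZMod n) = secantSum β := by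
    intro β
    rw [hSof]
    push_cast
    rw [ZMod.natCast_val, ZMod.cast_id]
  refine ⟨fun β => if β = ch n (xl (Sof β)) (yl (Sof β))
      then ch n (xl (Sof β + 1)) (yl (Sof β + 1))
      else ch n (xh (Sof β + 1)) (yh (Sof β + 1)), ?_, ?_, ?_⟩
  · -- MapsTo
    intro β hβ
    show (if β = ch n (xl (Sof β)) (yl (Sof β))
      then ch n (xl (Sof β + 1)) (yl (Sof β + 1))
      else ch n (xh (Sof β + 1)) (yh (Sof β + 1))) ∈ M
    by_cases h : β = ch n (xl (Sof β)) (yl (Sof β))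
    · rw [if_pos h]; exact (hlo (Sof β + 1)).2.2
    · rw [if_neg h]; exact (hhi (Sof β + 1)).2.2
  · -- InjOn
    have hsum : ∀ δ : Sym2 (ZMod n),
        secantSum (if δ = ch n (xl (Sof δ)) (yl (Sof δ))
          then ch n (xl (Sof δ + 1)) (yl (Sof δ + 1))
          else ch n (xh (Sof δ + 1)) (yh (Sof δ + 1))) = ((Sof δ : ℤ) : ZMod n) + 1 := by
      intro δ
      by_cases h : δ = ch n (xl (Sof δ)) (yl (Sof δ))
      · rw [if_pos h, sum_ch, hlosum (Sof δ + 1)]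
        push_cast
        ring
      · rw [if_neg h, sum_ch, hhisum (Sof δ + 1)]
        push_cast
        ring
    intro β hβ γ hγ hfeq
    have hfeq' : (if β = ch n (xl (Sof β)) (yl (Sof β))
          then ch n (xl (Sof β + 1)) (yl (Sof β + 1))
          else ch n (xh (Sof β + 1)) (yh (Sof β + 1))) =
        (if γ = ch n (xl (Sof γ)) (yl (Sof γ))
          then ch n (xl (Sof γ + 1)) (yl (Sof γ + 1))
          else ch n (xh (Sof γ + 1)) (yh (Sof γ + 1))) := hfeq
    have hsumeq : secantSum β = secantSum γ := by
      have h1 := hsum β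
      have h2 := hsum γ
      rw [hfeq', h2] at h1
      have h3 : ((Sof β : ℤ) : ZMod n) = ((Sof γ : ℤ) : ZMod n) := add_right_cancel h1.symm
      rw [hSofcast β, hSofcast γ] at h3
      exact h3
    have hSeq : Sof β = Sof γ := by
      show ((secantSum β).val : ℤ) = ((secantSum γ).val : ℤ)
      rw [hsumeq]
    obtain ⟨S, hS⟩ : ∃ S, S = Sof γ := ⟨_, rfl⟩
    rw [hSeq, ← hS] at hfeq'
    by_cases h1 : β = ch n (xl S) (yl S) <;> by_cases h2 : γ = ch n (xl S) (yl S)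
    · exact h1.trans h2.symm
    · rw [if_pos h1, if_neg h2] at hfeq'
      exact absurd hfeq' (hlhne (S + 1))
    · rw [if_neg h1, if_pos h2] at hfeq'
      exact absurd hfeq'.symm (hlhne (S + 1))
    · have hβ' := hclose S β hβ (by rw [hS, ← hSeq, hSofcast β])
      have hγ' := hclose S γ hγ (by rw [hS, hSofcast γ])
      rcases hβ' with h | h
      · exact absurd h h1
      · rcases hγ' with h' | h'
        · exact absurd h' h2
        · exact h.trans h'.symm
  · -- rightness
    intro β hβ
    show IsToRightOf (if β = ch n (xl (Sof β)) (yl (Sof β))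
      then ch n (xl (Sof β + 1)) (yl (Sof β + 1))
      else ch n (xh (Sof β + 1)) (yh (Sof β + 1))) β
    obtain ⟨S, hS⟩ : ∃ S, S = Sof β := ⟨_, rfl⟩
    rw [← hS]
    by_cases h : β = ch n (xl S) (yl S)
    · rw [if_pos h, h]
      apply right_of_arcs hpos
      have hL := loLip S
      have p1 := hlosum S; have q1 := hlosum (S + 1)
      rcases hL with hL | hL
      · left; constructor <;> omega
      · right; constructor <;> omega
    · rw [if_neg h]
      have hβ' := hclose S β hβ (by rw [hS, hSofcast β])
      rcases hβ' with h' | h'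
      · exact absurd h' h
      · rw [h']
        apply right_of_arcs hpos
        have hL := hiLip S
        have p1 := hhisum S; have q1 := hhisum (S + 1)
        rcases hL with hL | hL
        · left; constructor <;> omega
        · right; constructor <;> omega

end Walk
end MsaftProof

/-- A set of secants is an Msaft iff it contains exactly two secants from each
parallel family and admits a secant walk: an injective self-map sending each secant
to one to its right. -/
theorem msaft_iff_secant_walk {n : ℕ} (hn : 3 ≤ n) (M : Set (Sym2 (ZMod n))) :
    IsMsaft M ↔
      (∀ k : ZMod n, {α ∈ M | secantSum α = k}.ncard = 2) ∧
        ∃ f : Sym2 (ZMod n) → Sym2 (ZMod n),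
          Set.MapsTo f M M ∧ Set.InjOn f M ∧ ∀ α ∈ M, IsToRightOf (f α) α := by
  haveI : NeZero n := ⟨by omega⟩
  have hpos : 0 < n := by omega
  constructor
  · rintro ⟨hA, hMax⟩
    refine ⟨?_, MsaftProof.walk_exists hn hA hMax⟩
    intro k
    obtain ⟨xlo, ylo, xhi, yhi, hlo, hhi, hlos, hhis, hwlt, hclose⟩ :=
      MsaftProof.level_data hn hA hMax ((k.val : ℤ))
    have hkc : (((k.val : ℤ)) : ZMod n) = k := by
      push_cast; rw [ZMod.natCast_val, ZMod.cast_id]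
    have hne : MsaftProof.ch n xlo ylo ≠ MsaftProof.ch n xhi yhi := by
      intro h
      have := MsaftProof.arc_unique hpos hlo.1 hlo.2.1 hhi.1 hhi.2.1 (by omega) h
      omega
    have hset : {α ∈ M | secantSum α = k} =
        {MsaftProof.ch n xlo ylo, MsaftProof.ch n xhi yhi} := by
      ext β
      constructor
      · rintro ⟨hβ, hk⟩
        have := hclose β hβ (by rw [hkc]; exact hk)
        rcases this with h | h
        · left; exact h
        · right; exact h
      · rintro (rfl | rfl)
        · exact ⟨hlo.2.2, by rw [MsaftProof.sum_ch, hlos, hkc]⟩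
        · exact ⟨hhi.2.2, by rw [MsaftProof.sum_ch, hhis, hkc]⟩
    rw [hset, Set.ncard_pair hne]
  · rintro ⟨h2, f, hm, hi, hr⟩
    exact ⟨MsaftProof.backward_avoid hpos h2 hm hi hr, MsaftProof.backward_maximal hpos h2⟩
end

section
/- Let n ≥ 1 and let i, j be natural numbers with i ≤ ⌊n/2⌋ and j ≤ ⌊n/2⌋. The number of functions s : Fin n → ℤ such that (a) s k ∈ {1, −1} for every k, (b) for every k with 0 ≤ k ≤ n the partial height −2i + ∑_{l < k} s l lies in the interval [−n, 0], and (c) the final height satisfies −2i + ∑_{l < n} s l = −n + 2j, equals C(n, i + j) − C(n, j − i − 1) − C(n, i − j − 1), where i, j are cast to ℤ in the arguments of C. (This counts lattice paths from (0, −2i) to (n, −n + 2j) with steps (1, ±1) staying in the horizontal strip −n ≤ y ≤ 0.) -/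
/-- The extended binomial coefficient `C n m` for `n : ℕ` and `m : ℤ`: equal to
`n.choose m.toNat` when `0 ≤ m ≤ n`, and `0` otherwise. -/
def C (n : ℕ) (m : ℤ) : ℤ :=
  if 0 ≤ m ∧ m ≤ (n : ℤ) then (n.choose m.toNat : ℤ) else 0

lemma C_of_neg {n : ℕ} {m : ℤ} (h : m < 0) : C n m = 0 :=
  if_neg fun h' => absurd h'.1 (by omega)

lemma C_of_gt {n : ℕ} {m : ℤ} (h : (n : ℤ) < m) : C n m = 0 :=
  if_neg fun h' => absurd h'.2 (by omega)

lemma C_of_mem {n : ℕ} {m : ℤ} (h1 : 0 ≤ m) (h2 : m ≤ (n : ℤ)) :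
    C n m = (n.choose m.toNat : ℤ) := if_pos ⟨h1, h2⟩

lemma C_pascal (n : ℕ) (m : ℤ) : C (n + 1) m = C n (m - 1) + C n m := by
  rcases lt_or_ge m 0 with h | h
  · rw [C_of_neg h, C_of_neg (by omega), C_of_neg (by omega)]; ring
  rcases eq_or_lt_of_le h with rfl | h0
  · rw [C_of_neg (show (0:ℤ) - 1 < 0 by omega), C_of_mem le_rfl (by push_cast; omega),
      C_of_mem le_rfl (by omega)]
    simp
  rcases lt_or_ge (n : ℤ) m with h2 | h2
  · rcases eq_or_lt_of_le (show (n:ℤ) + 1 ≤ m by omega) with h3 | h3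
    · rw [C_of_gt h2, C_of_mem (by omega) (by push_cast; omega),
        C_of_mem (by omega) (by omega)]
      have e1 : m.toNat = n + 1 := by omega
      have e2 : (m - 1).toNat = n := by omega
      simp [e1, e2]
    · rw [C_of_gt (by push_cast; omega), C_of_gt h2, C_of_gt (by omega)]; ring
  · rw [C_of_mem (by omega) (by push_cast; omega), C_of_mem (by omega) (by omega),
      C_of_mem (by omega) (by omega)]
    obtain ⟨k, rfl⟩ : ∃ k : ℕ, m = (k : ℤ) + 1 := ⟨(m - 1).toNat, by omega⟩
    have e1 : ((k : ℤ) + 1).toNat = k + 1 := by omega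
    have e2 : ((k : ℤ) + 1 - 1).toNat = k := by omega
    rw [e1, e2, Nat.choose_succ_succ]
    push_cast; ring

lemma C_symm (n : ℕ) (m : ℤ) : C n m = C n ((n : ℤ) - m) := by
  rcases lt_or_ge m 0 with h | h
  · rw [C_of_neg h, C_of_gt (by omega)]
  rcases lt_or_ge (n : ℤ) m with h2 | h2
  · rw [C_of_gt h2, C_of_neg (by omega)]
  · rw [C_of_mem h h2, C_of_mem (by omega) (by omega)]
    have h3 : ((n : ℤ) - m).toNat = n - m.toNat := by omega
    rw [h3, Nat.choose_symm (by omega)]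

open Classical in
/-- Paths of `n` ±1-steps starting at height `a`, staying in `[-d, 0]`, ending at `b`. -/
noncomputable def strip (n : ℕ) (d a b : ℤ) : Finset (Fin n → ℤ) :=
  (Fintype.piFinset fun _ : Fin n => ({1, -1} : Finset ℤ)).filter fun s =>
    (∀ k : ℕ, k ≤ n →
        -d ≤ a + ∑ l : Fin n, (if (l : ℕ) < k then s l else 0) ∧
          a + ∑ l : Fin n, (if (l : ℕ) < k then s l else 0) ≤ 0) ∧
      a + ∑ l, s l = b

lemma mem_strip {n : ℕ} {d a b : ℤ} {s : Fin n → ℤ} :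
    s ∈ strip n d a b ↔
      (∀ k, s k = 1 ∨ s k = -1) ∧
      (∀ k : ℕ, k ≤ n →
        -d ≤ a + ∑ l : Fin n, (if (l : ℕ) < k then s l else 0) ∧
          a + ∑ l : Fin n, (if (l : ℕ) < k then s l else 0) ≤ 0) ∧
      a + ∑ l, s l = b := by
  simp [strip, Fintype.mem_piFinset, and_assoc]

lemma sum_if_total {n : ℕ} (s : Fin n → ℤ) :
    ∑ l : Fin n, (if (l : ℕ) < n then s l else 0) = ∑ l, s l :=
  Finset.sum_congr rfl fun l _ => if_pos l.isLt

lemma sum_if_snoc {n : ℕ} (t : Fin n → ℤ) (v : ℤ) {k : ℕ} (hk : k ≤ n) :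
    ∑ l : Fin (n + 1), (if (l : ℕ) < k then Fin.snoc t v l else 0) =
      ∑ l : Fin n, (if (l : ℕ) < k then t l else 0) := by
  rw [Fin.sum_univ_castSucc]
  simp only [Fin.snoc_castSucc, Fin.coe_castSucc, Fin.snoc_last, Fin.val_last]
  rw [if_neg (by omega), add_zero]

lemma sum_snoc_total {n : ℕ} (t : Fin n → ℤ) (v : ℤ) :
    ∑ l : Fin (n + 1), Fin.snoc t v l = (∑ l, t l) + v := by
  rw [Fin.sum_univ_castSucc]; simp

lemma snoc_mem_strip {n : ℕ} {d a c : ℤ} {t : Fin n → ℤ} (ht : t ∈ strip n d a c)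
    {v : ℤ} (hv : v = 1 ∨ v = -1) (h1 : -d ≤ c + v) (h2 : c + v ≤ 0) :
    Fin.snoc t v ∈ strip (n + 1) d a (c + v) := by
  obtain ⟨htv, hcon, hend⟩ := mem_strip.1 ht
  refine mem_strip.2 ⟨?_, ?_, ?_⟩
  · intro k
    refine Fin.lastCases ?_ ?_ k
    · simpa using hv
    · intro m; simpa using htv m
  · intro k hk
    rcases Nat.lt_or_ge k (n + 1) with hk' | hk'
    · rw [sum_if_snoc t v (by omega)]
      exact hcon k (by omega)
    · have hk2 : k = n + 1 := by omega
      subst hk2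
      rw [sum_if_total, sum_snoc_total, ← add_assoc, hend]
      exact ⟨h1, h2⟩
  · rw [sum_snoc_total, ← add_assoc, hend]

lemma strip_succ_card (n : ℕ) (d a b : ℤ) (hb : -d ≤ b) (hb0 : b ≤ 0) :
    (strip (n + 1) d a b).card = (strip n d a (b - 1)).card + (strip n d a (b + 1)).card := by
  have himg : strip (n + 1) d a b =
      ((strip n d a (b - 1)).image fun t => Fin.snoc t 1) ∪
        ((strip n d a (b + 1)).image fun t => Fin.snoc t (-1)) := by
    ext s
    constructor
    · intro hs
      obtain ⟨hsv, hcon, hend⟩ := mem_strip.1 hs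
      set v := s (Fin.last n) with hvdef
      have hv : v = 1 ∨ v = -1 := hsv _
      have hsnoc : Fin.snoc (Fin.init s) v = s := Fin.snoc_init_self s
      have htmem : Fin.init s ∈ strip n d a (b - v) := by
        refine mem_strip.2 ⟨fun k => hsv _, ?_, ?_⟩
        · intro k hk
          have := hcon k (by omega)
          rwa [← hsnoc, sum_if_snoc _ _ hk] at this
        · have : a + ∑ l, Fin.snoc (Fin.init s) v l = b := by rw [hsnoc]; exact hend
          rw [sum_snoc_total] at this
          omega
      rcases hv with hv1 | hv1
      · apply Finset.mem_union_left
        refine Finset.mem_image.2 ⟨Fin.init s, ?_, ?_⟩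
        · rw [hv1] at htmem; exact htmem
        · rw [← hv1, hsnoc]
      · apply Finset.mem_union_right
        refine Finset.mem_image.2 ⟨Fin.init s, ?_, ?_⟩
        · have hbv : b - v = b + 1 := by omega
          rw [hbv] at htmem; exact htmem
        · rw [← hv1, hsnoc]
    · intro hs
      rcases Finset.mem_union.1 hs with hs1 | hs1
      · obtain ⟨t, ht, rfl⟩ := Finset.mem_image.1 hs1
        have := snoc_mem_strip ht (Or.inl rfl) (show -d ≤ (b-1) + 1 by omega)
          (show (b-1) + 1 ≤ 0 by omega)
        rwa [show b - 1 + 1 = b by ring] at this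
      · obtain ⟨t, ht, rfl⟩ := Finset.mem_image.1 hs1
        have := snoc_mem_strip ht (Or.inr rfl) (show -d ≤ (b+1) + -1 by omega)
          (show (b+1) + -1 ≤ 0 by omega)
        rwa [show b + 1 + -1 = b by ring] at this
  have hinj : ∀ v : ℤ, Function.Injective fun t : Fin n → ℤ => (Fin.snoc t v : Fin (n+1) → ℤ) := by
    intro v t1 t2 h
    have := congrArg Fin.init h
    simpa [Fin.init_snoc] using this
  rw [himg, Finset.card_union_of_disjoint, Finset.card_image_of_injective _ (hinj 1),
    Finset.card_image_of_injective _ (hinj (-1))]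
  · rw [Finset.disjoint_left]
    rintro s hs1 hs2
    obtain ⟨t1, _, rfl⟩ := Finset.mem_image.1 hs1
    obtain ⟨t2, _, h⟩ := Finset.mem_image.1 hs2
    have := congrFun h (Fin.last n)
    simp [Fin.snoc_last] at this

lemma strip_empty_of_pos {n : ℕ} {d a b : ℤ} (hb : 0 < b) : strip n d a b = ∅ := by
  ext s
  simp only [Finset.notMem_empty, iff_false]
  intro hs
  obtain ⟨_, hcon, hend⟩ := mem_strip.1 hs
  have := (hcon n le_rfl).2
  rw [sum_if_total] at this
  omega

lemma strip_empty_of_lt {n : ℕ} {d a b : ℤ} (hb : b < -d) : strip n d a b = ∅ := by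
  ext s
  simp only [Finset.notMem_empty, iff_false]
  intro hs
  obtain ⟨_, hcon, hend⟩ := mem_strip.1 hs
  have := (hcon n le_rfl).1
  rw [sum_if_total] at this
  omega

lemma strip_zero (d a b : ℤ) (ha : -d ≤ a) (ha0 : a ≤ 0) :
    (strip 0 d a b).card = if a = b then 1 else 0 := by
  split_ifs with h
  · rw [Finset.card_eq_one]
    refine ⟨fun l => l.elim0, ?_⟩
    ext s
    simp only [Finset.mem_singleton]
    constructor
    · intro _; funext l; exact l.elim0
    · rintro rfl
      refine mem_strip.2 ⟨fun k => k.elim0, ?_, ?_⟩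
      · intro k hk; simpa using ⟨ha, ha0⟩
      · simpa using h
  · rw [Finset.card_eq_zero]
    ext s
    simp only [Finset.notMem_empty, iff_false]
    intro hs
    obtain ⟨_, _, hend⟩ := mem_strip.1 hs
    simp only [Finset.univ_eq_empty, Finset.sum_empty, add_zero] at hend
    exact h hend

lemma strip_card (d a : ℤ) (ha : -d ≤ a) (ha0 : a ≤ 0) :
    ∀ n : ℕ, (n : ℤ) ≤ d → ∀ b u : ℤ, -d - 1 ≤ b → b ≤ 1 → 2 * u = (n : ℤ) + b - a →
    ((strip n d a b).card : ℤ) = C n u - C n (u + a - 1) - C n (u - b - d - 1) := by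
  intro n
  induction n with
  | zero =>
    intro _ b u hb1 hb2 hu
    rw [strip_zero d a b ha ha0, C_of_neg (show u + a - 1 < 0 by omega),
      C_of_neg (show u - b - d - 1 < 0 by omega)]
    split_ifs with h
    · rw [C_of_mem (show (0:ℤ) ≤ u by omega) (show u ≤ ((0:ℕ):ℤ) by simp; omega)]
      have : u = 0 := by omega
      simp [this]
    · rcases lt_or_ge u 0 with h' | h'
      · rw [C_of_neg h']; simp
      · rw [C_of_gt (show ((0:ℕ):ℤ) < u by simp; omega)]; simp
  | succ n IH =>
    intro hd b u hb1 hb2 hu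
    rcases lt_or_ge 0 b with hbpos | hble
    · have hb : b = 1 := by omega
      subst hb
      rw [strip_empty_of_pos (by omega)]
      have e1 : u + a - 1 = ((n + 1 : ℕ) : ℤ) - u := by push_cast; push_cast at hu; omega
      rw [e1, ← C_symm, C_of_neg (show u - 1 - d - 1 < 0 by push_cast at hu; omega)]
      simp
    rcases lt_or_ge b (-d) with hbneg | hbge
    · have hb : b = -d - 1 := by omega
      subst hb
      rw [strip_empty_of_lt (by omega)]
      have e1 : u - (-d - 1) - d - 1 = u := by ring
      rw [e1, C_of_neg (show u + a - 1 < 0 by push_cast at hu; omega)]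
      simp
    · rw [strip_succ_card n d a b hbge hble]
      push_cast
      rw [IH (by omega) (b - 1) (u - 1) (by omega) (by omega) (by push_cast at hu ⊢; omega),
        IH (by omega) (b + 1) u (by omega) (by omega) (by push_cast at hu ⊢; omega),
        C_pascal n u, C_pascal n (u + a - 1), C_pascal n (u - b - d - 1)]
      have e1 : u - 1 + a - 1 = u + a - 1 - 1 := by ring
      have e2 : u - 1 - (b - 1) - d - 1 = u - b - d - 1 := by ring
      have e3 : u - (b + 1) - d - 1 = u - b - d - 1 - 1 := by ring
      rw [e1, e2, e3]
      ring

/-- The number of lattice paths of `n` diagonal steps `(1, ±1)` from `(0, -2i)` to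
`(n, -n + 2j)` staying in the horizontal strip `-n ≤ y ≤ 0` equals
`C n (i+j) - C n (j-i-1) - C n (i-j-1)`. -/
theorem count_paths_in_strip (n : ℕ) (hn : 1 ≤ n) (i j : ℕ)
    (hi : i ≤ n / 2) (hj : j ≤ n / 2) :
    ({s : Fin n → ℤ | (∀ k, s k = 1 ∨ s k = -1) ∧
        (∀ k : ℕ, k ≤ n →
          -(n : ℤ) ≤ -2 * (i : ℤ) + ∑ l : Fin n, (if (l : ℕ) < k then s l else 0) ∧
            -2 * (i : ℤ) + ∑ l : Fin n, (if (l : ℕ) < k then s l else 0) ≤ 0) ∧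
        -2 * (i : ℤ) + ∑ l, s l = -(n : ℤ) + 2 * (j : ℤ)} : Set (Fin n → ℤ)).ncard =
      C n ((i : ℤ) + j) - C n ((j : ℤ) - i - 1) - C n ((i : ℤ) - j - 1) := by
  have hset : ({s : Fin n → ℤ | (∀ k, s k = 1 ∨ s k = -1) ∧
        (∀ k : ℕ, k ≤ n →
          -(n : ℤ) ≤ -2 * (i : ℤ) + ∑ l : Fin n, (if (l : ℕ) < k then s l else 0) ∧
            -2 * (i : ℤ) + ∑ l : Fin n, (if (l : ℕ) < k then s l else 0) ≤ 0) ∧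
        -2 * (i : ℤ) + ∑ l, s l = -(n : ℤ) + 2 * (j : ℤ)} : Set (Fin n → ℤ)) =
      ↑(strip n (n : ℤ) (-2 * (i : ℤ)) (-(n : ℤ) + 2 * (j : ℤ))) :=
    Set.ext fun s => Iff.symm (Finset.mem_coe.trans mem_strip)
  rw [hset, Set.ncard_coe_finset]
  have h2i : 2 * i ≤ n := by omega
  have h2j : 2 * j ≤ n := by omega
  have h := strip_card (n : ℤ) (-2 * (i : ℤ)) (by push_cast; omega) (by push_cast; omega)
    n le_rfl (-(n : ℤ) + 2 * (j : ℤ)) ((i : ℤ) + j) (by push_cast; omega) (by push_cast; omega)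
    (by push_cast; ring)
  rw [h, show (i : ℤ) + j + (-2 * (i : ℤ)) - 1 = (j : ℤ) - i - 1 by ring,
    show (i : ℤ) + j - (-(n : ℤ) + 2 * (j : ℤ)) - (n : ℤ) - 1 = (i : ℤ) - j - 1 by ring]
end

section
/- For every positive integer n, the following identity holds in ℤ: 2·∑_{i=0}^{⌊n/2⌋} ∑_{j=0}^{⌊n/2⌋} [ (C(n, i+j) − C(n, i−j−1) − C(n, j−i−1))² − C(n, 2i)·C(n, 2j) ] = (n+2)·C(2n, n) − 3·2^{2n−1}, where in the arguments of C the indices i, j are cast to ℤ. -/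
open Finset


namespace BinAux

lemma C_coe (n k : ℕ) (hk : k ≤ n) : C n (k : ℤ) = (n.choose k : ℤ) := by
  simp [C, hk, Int.toNat_natCast]

lemma C_neg (n : ℕ) (m : ℤ) (hm : m < 0) : C n m = 0 := by
  unfold C
  rw [if_neg]
  rintro ⟨h0, _⟩; omega

/-- partial sum of squares of binomials -/
def Tr (n m : ℕ) : ℤ := ∑ u ∈ range m, (n.choose u : ℤ) ^ 2

lemma Tr_succ (n m : ℕ) : Tr n (m + 1) = Tr n m + (n.choose m : ℤ) ^ 2 :=
  Finset.sum_range_succ _ m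

/-- Vandermonde as a range sum, cast to ℤ -/
lemma vdm (n s : ℕ) :
    ∑ p ∈ range (s + 1), (n.choose p : ℤ) * (n.choose (s - p) : ℤ)
      = ((n + n).choose s : ℤ) := by
  rw [Nat.add_choose_eq, Finset.Nat.sum_antidiagonal_eq_sum_range_succ_mk]
  push_cast
  rfl

lemma Tr_full (n : ℕ) : Tr n (n + 1) = ((n + n).choose n : ℤ) := by
  rw [← vdm n n, Tr]
  refine Finset.sum_congr rfl fun u hu => ?_
  rw [mem_range] at hu
  rw [Nat.choose_symm (by omega), sq]

lemma Tr_shift (n m M : ℕ) :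
    Tr n (m + M) = Tr n m + ∑ j ∈ range M, (n.choose (m + j) : ℤ) ^ 2 := by
  rw [Tr, Finset.sum_range_add]; rfl

lemma Tr_pair (n m : ℕ) (hm : m ≤ n + 1) :
    Tr n m + Tr n (n + 1 - m) = ((n + n).choose n : ℤ) := by
  have h1 : Tr n (n + 1) = Tr n m + ∑ j ∈ range (n + 1 - m), (n.choose (m + j) : ℤ) ^ 2 := by
    rw [← Tr_shift, show m + (n + 1 - m) = n + 1 from by omega]
  have h2 : ∑ j ∈ range (n + 1 - m), (n.choose (m + j) : ℤ) ^ 2 = Tr n (n + 1 - m) := by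
    rw [Tr, ← Finset.sum_range_reflect]
    refine Finset.sum_congr rfl fun j hj => ?_
    rw [mem_range] at hj
    rw [show m + (n + 1 - m - 1 - j) = n - j from by omega, Nat.choose_symm (by omega)]
  rw [← h2, ← h1, Tr_full]

lemma split_parity (f : ℕ → ℤ) (N : ℕ) :
    ∑ k ∈ range (2 * N + 1), f k
      = ∑ m ∈ range (N + 1), f (2 * m) + ∑ m ∈ range N, f (2 * m + 1) := by
  induction N with
  | zero => simp
  | succ N ih =>
    rw [show 2 * (N + 1) + 1 = (2 * N + 1) + 1 + 1 from by ring,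
      Finset.sum_range_succ, Finset.sum_range_succ, ih,
      Finset.sum_range_succ (fun m => f (2 * m)) (N + 1),
      Finset.sum_range_succ (fun m => f (2 * m + 1)) N]
    ring_nf

/-- sum of even-index binomial coefficients of `n` is `2^(n-1)` -/
lemma even_sum (n : ℕ) (hn : 1 ≤ n) :
    ∑ i ∈ range (n / 2 + 1), (n.choose (2 * i) : ℤ) = 2 ^ (n - 1) := by
  have htot : ∑ k ∈ range (n + 1), (n.choose k : ℤ) = 2 ^ n := by
    exact_mod_cast Nat.sum_range_choose n
  have halt : ∑ k ∈ range (n + 1), (-1 : ℤ) ^ k * (n.choose k : ℤ) = 0 :=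
    Int.alternating_sum_range_choose_of_ne (by omega)
  set h := n / 2 with hh
  set E := ∑ i ∈ range (h + 1), (n.choose (2 * i) : ℤ) with hE
  rcases Nat.even_or_odd n with ⟨m, hm⟩ | ⟨m, hm⟩
  · have hn2 : n = 2 * h := by omega
    have t1 := split_parity (fun k => (n.choose k : ℤ)) h
    have t2 := split_parity (fun k => (-1 : ℤ) ^ k * (n.choose k : ℤ)) h
    rw [← hn2] at t1 t2
    have t2' : ∑ k ∈ range (n + 1), (-1 : ℤ) ^ k * (n.choose k : ℤ)
        = E - ∑ m ∈ range h, (n.choose (2 * m + 1) : ℤ) := by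
      rw [t2, hE]
      rw [Finset.sum_congr rfl (fun m _ => by
            rw [pow_mul]; norm_num : ∀ m ∈ range (h+1),
            (-1 : ℤ) ^ (2*m) * (n.choose (2*m) : ℤ) = (n.choose (2*m) : ℤ)),
          Finset.sum_congr rfl (fun m _ => by
            rw [pow_succ, pow_mul]; norm_num : ∀ m ∈ range h,
            (-1 : ℤ) ^ (2*m+1) * (n.choose (2*m+1) : ℤ) = -(n.choose (2*m+1) : ℤ))]
      rw [Finset.sum_neg_distrib]
      ring
    have h2E : 2 * E = 2 ^ n := by
      have := htot
      rw [t1] at this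
      rw [t2'] at halt
      linarith
    have : (2 : ℤ) ^ n = 2 * 2 ^ (n - 1) := by
      rw [← pow_succ']
      congr 1
      omega
    linarith
  · have hn2 : n = 2 * h + 1 := by omega
    have t1 := split_parity (fun k => (n.choose k : ℤ)) h
    have t2 := split_parity (fun k => (-1 : ℤ) ^ k * (n.choose k : ℤ)) h
    have e1 : ∑ k ∈ range (n + 1), (n.choose k : ℤ)
        = E + (∑ m ∈ range h, (n.choose (2 * m + 1) : ℤ) + (n.choose (2 * h + 1) : ℤ)) := by
      rw [show n + 1 = (2 * h + 1) + 1 from by omega, Finset.sum_range_succ, t1, hE]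
      ring
    have e2 : ∑ k ∈ range (n + 1), (-1 : ℤ) ^ k * (n.choose k : ℤ)
        = E - (∑ m ∈ range h, (n.choose (2 * m + 1) : ℤ) + (n.choose (2 * h + 1) : ℤ)) := by
      rw [show n + 1 = (2 * h + 1) + 1 from by omega, Finset.sum_range_succ, t2, hE]
      rw [Finset.sum_congr rfl (fun m _ => by
            rw [pow_mul]; norm_num : ∀ m ∈ range (h + 1),
            (-1 : ℤ) ^ (2 * m) * (n.choose (2 * m) : ℤ) = (n.choose (2 * m) : ℤ)),
          Finset.sum_congr rfl (fun m _ => by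
            rw [pow_succ, pow_mul]; norm_num : ∀ m ∈ range h,
            (-1 : ℤ) ^ (2 * m + 1) * (n.choose (2 * m + 1) : ℤ) = -(n.choose (2 * m + 1) : ℤ))]
      rw [Finset.sum_neg_distrib, pow_succ, pow_mul]
      ring_nf
    have h2E : 2 * E = 2 ^ n := by
      rw [e1] at htot
      rw [e2] at halt
      linarith
    have hp : (2 : ℤ) ^ n = 2 * 2 ^ (n - 1) := by
      rw [← pow_succ']
      congr 1
      omega
    linarith

/-- sum of odd-index binomial coefficients of `2N` is `2^(2N-1)` -/
lemma odd_sum2 (N : ℕ) (hN : 1 ≤ N) :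
    ∑ m ∈ Finset.range N, ((2 * N).choose (2 * m + 1) : ℤ) = 2 ^ (2 * N - 1) := by
  have htot : ∑ k ∈ Finset.range (2 * N + 1), ((2 * N).choose k : ℤ) = 2 ^ (2 * N) := by
    exact_mod_cast Nat.sum_range_choose (2 * N)
  have halt : ∑ k ∈ Finset.range (2 * N + 1), (-1 : ℤ) ^ k * ((2 * N).choose k : ℤ) = 0 :=
    Int.alternating_sum_range_choose_of_ne (by omega)
  rw [split_parity] at htot
  rw [split_parity] at halt
  have e2 : ∑ m ∈ Finset.range (N + 1), (-1 : ℤ) ^ (2 * m) * ((2 * N).choose (2 * m) : ℤ)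
      = ∑ m ∈ Finset.range (N + 1), ((2 * N).choose (2 * m) : ℤ) :=
    Finset.sum_congr rfl (fun m _ => by rw [pow_mul]; norm_num)
  have e3 : ∑ m ∈ Finset.range N, (-1 : ℤ) ^ (2 * m + 1) * ((2 * N).choose (2 * m + 1) : ℤ)
      = -∑ m ∈ Finset.range N, ((2 * N).choose (2 * m + 1) : ℤ) := by
    rw [← Finset.sum_neg_distrib]
    exact Finset.sum_congr rfl (fun m _ => by rw [pow_succ, pow_mul]; norm_num)
  rw [e2, e3] at halt
  have hp : (2 : ℤ) ^ (2 * N) = 2 * 2 ^ (2 * N - 1) := by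
    rw [← pow_succ']
    congr 1
    omega
  linarith

/-- the partial odd-index sum up to `n/2` terms -/
lemma Ohalf (n : ℕ) (hn : 1 ≤ n) :
    2 * ∑ i ∈ Finset.range (n / 2), ((2 * n).choose (2 * i + 1) : ℤ)
      = 2 ^ (2 * n - 1) - (n % 2 : ℕ) * ((2 * n).choose n : ℤ) := by
  set h := n / 2 with hh
  have key0 := Finset.sum_range_add (fun m => ((2 * n).choose (2 * m + 1) : ℤ)) (n - h) h
  rw [show (n - h) + h = n from by omega] at key0
  have key1 : ∑ j ∈ Finset.range h, ((2 * n).choose (2 * ((n - h) + j) + 1) : ℤ)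
      = ∑ i ∈ Finset.range h, ((2 * n).choose (2 * i + 1) : ℤ) := by
    rw [← Finset.sum_range_reflect]
    refine Finset.sum_congr rfl fun i hi => ?_
    rw [Finset.mem_range] at hi
    rw [show 2 * ((n - h) + (h - 1 - i)) + 1 = 2 * n - (2 * i + 1) from by omega,
      Nat.choose_symm (by omega)]
  have key : ∑ m ∈ Finset.range n, ((2 * n).choose (2 * m + 1) : ℤ)
      = ∑ m ∈ Finset.range (n - h), ((2 * n).choose (2 * m + 1) : ℤ)
        + ∑ i ∈ Finset.range h, ((2 * n).choose (2 * i + 1) : ℤ) := by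
    rw [key0, key1]
  have hsplit : ∑ m ∈ Finset.range (n - h), ((2 * n).choose (2 * m + 1) : ℤ)
      = ∑ m ∈ Finset.range h, ((2 * n).choose (2 * m + 1) : ℤ)
        + (n % 2 : ℕ) * ((2 * n).choose n : ℤ) := by
    rcases Nat.even_or_odd n with ⟨m, hm⟩ | ⟨m, hm⟩
    · rw [show n - h = h from by omega, show n % 2 = 0 from by omega]
      push_cast
      ring
    · rw [show n - h = h + 1 from by omega, Finset.sum_range_succ,
        show 2 * h + 1 = n from by omega, show n % 2 = 1 from by omega]
      push_cast
      ring
  have := odd_sum2 n hn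
  rw [key, hsplit] at this
  linarith

lemma sB (n h i : ℕ) (h2h : 2 * h ≤ n) (hi : i ≤ h) :
    ∑ j ∈ range (h + 1), (C n ((i : ℤ) - (j : ℕ) - 1)) ^ 2 = Tr n i := by
  have key := Finset.sum_range_add (fun j => (C n ((i : ℤ) - (j : ℕ) - 1)) ^ 2) i (h + 1 - i)
  rw [show i + (h + 1 - i) = h + 1 from by omega] at key
  rw [key]
  have z2 : ∑ j ∈ range (h + 1 - i), (C n ((i : ℤ) - ((i + j : ℕ) : ℤ) - 1)) ^ 2 = 0 := by
    refine Finset.sum_eq_zero fun j _ => ?_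
    rw [C_neg n _ (by push_cast; omega)]
    ring
  rw [z2, add_zero]
  have e1 : ∀ j ∈ range i, (C n ((i : ℤ) - (j : ℕ) - 1)) ^ 2 = (n.choose (i - 1 - j) : ℤ) ^ 2 := by
    intro j hj
    rw [mem_range] at hj
    rw [show (i : ℤ) - (j : ℕ) - 1 = ((i - 1 - j : ℕ) : ℤ) from by omega,
      C_coe n _ (by omega)]
  rw [Finset.sum_congr rfl e1, Finset.sum_range_reflect (fun u => (n.choose u : ℤ) ^ 2) i]
  rfl

lemma sC (n h i : ℕ) (h2h : 2 * h ≤ n) (hi : i ≤ h) :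
    ∑ j ∈ range (h + 1), (C n ((j : ℕ) - (i : ℤ) - 1)) ^ 2 = Tr n (h - i) := by
  have key := Finset.sum_range_add (fun j => (C n ((j : ℕ) - (i : ℤ) - 1)) ^ 2) (i + 1) (h - i)
  rw [show (i + 1) + (h - i) = h + 1 from by omega] at key
  rw [key]
  have z1 : ∑ j ∈ range (i + 1), (C n ((j : ℕ) - (i : ℤ) - 1)) ^ 2 = 0 := by
    refine Finset.sum_eq_zero fun j hj => ?_
    rw [mem_range] at hj
    rw [C_neg n _ (by push_cast; omega)]
    ring
  rw [z1, zero_add]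
  refine Finset.sum_congr rfl fun j hj => ?_
  rw [mem_range] at hj
  rw [show (((i + 1 + j : ℕ)) : ℤ) - (i : ℤ) - 1 = ((j : ℕ) : ℤ) from by push_cast; ring,
    C_coe n j (by omega)]

lemma sA (n h i : ℕ) (h2h : 2 * h ≤ n) (hi : i ≤ h) :
    ∑ j ∈ range (h + 1), (C n ((i : ℤ) + (j : ℕ))) ^ 2 = Tr n (i + h + 1) - Tr n i := by
  have key : Tr n (i + (h + 1)) = Tr n i + ∑ j ∈ range (h + 1), (n.choose (i + j) : ℤ) ^ 2 := by
    rw [Tr, Finset.sum_range_add]; rfl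
  have e1 : ∀ j ∈ range (h + 1), (C n ((i : ℤ) + (j : ℕ))) ^ 2 = (n.choose (i + j) : ℤ) ^ 2 := by
    intro j hj
    rw [mem_range] at hj
    rw [show (i : ℤ) + (j : ℕ) = ((i + j : ℕ) : ℤ) from by push_cast; ring,
      C_coe n _ (by omega)]
  rw [Finset.sum_congr rfl e1, show i + h + 1 = i + (h + 1) from by ring, key]
  ring

lemma innerX (n h i : ℕ) (h2h : 2 * h ≤ n) (hi : i ≤ h) :
    ∑ j ∈ range (h + 1), C n ((i : ℤ) + (j : ℕ)) * C n ((i : ℤ) - (j : ℕ) - 1)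
      = ∑ j ∈ range i, (n.choose (i + j) : ℤ) * (n.choose (i - 1 - j) : ℤ) := by
  have key := Finset.sum_range_add
    (fun j => C n ((i : ℤ) + (j : ℕ)) * C n ((i : ℤ) - (j : ℕ) - 1)) i (h + 1 - i)
  rw [show i + (h + 1 - i) = h + 1 from by omega] at key
  rw [key]
  have z2 : ∑ j ∈ range (h + 1 - i),
      C n ((i : ℤ) + ((i + j : ℕ) : ℤ)) * C n ((i : ℤ) - ((i + j : ℕ) : ℤ) - 1) = 0 := by
    refine Finset.sum_eq_zero fun j _ => ?_
    rw [C_neg n ((i : ℤ) - ((i + j : ℕ) : ℤ) - 1) (by push_cast; omega)]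
    ring
  rw [z2, add_zero]
  refine Finset.sum_congr rfl fun j hj => ?_
  rw [mem_range] at hj
  rw [show (i : ℤ) + (j : ℕ) = ((i + j : ℕ) : ℤ) from by push_cast; ring,
    show (i : ℤ) - (j : ℕ) - 1 = ((i - 1 - j : ℕ) : ℤ) from by omega,
    C_coe n _ (by omega), C_coe n _ (by omega)]

lemma two_V (n i : ℕ) :
    2 * ∑ j ∈ range (i + 1), (n.choose (i + 1 + j) : ℤ) * (n.choose (i - j) : ℤ)
      = ((n + n).choose (2 * i + 1) : ℤ) := by
  have refl1 := Finset.sum_range_reflect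
    (fun j => (n.choose (i + 1 + j) : ℤ) * (n.choose (i - j) : ℤ)) (i + 1)
  have e1 : ∀ j ∈ range (i + 1),
      (n.choose (i + 1 + (i + 1 - 1 - j)) : ℤ) * (n.choose (i - (i + 1 - 1 - j)) : ℤ)
        = (n.choose j : ℤ) * (n.choose (2 * i + 1 - j) : ℤ) := by
    intro j hj
    rw [mem_range] at hj
    rw [show i + 1 + (i + 1 - 1 - j) = 2 * i + 1 - j from by omega,
      show i - (i + 1 - 1 - j) = j from by omega, mul_comm]
  rw [Finset.sum_congr rfl e1] at refl1
  have key := Finset.sum_range_add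
    (fun p => (n.choose p : ℤ) * (n.choose (2 * i + 1 - p) : ℤ)) (i + 1) (i + 1)
  rw [show (i + 1) + (i + 1) = (2 * i + 1) + 1 from by ring] at key
  have e2 : ∀ j ∈ range (i + 1),
      (n.choose (i + 1 + j) : ℤ) * (n.choose (2 * i + 1 - (i + 1 + j)) : ℤ)
        = (n.choose (i + 1 + j) : ℤ) * (n.choose (i - j) : ℤ) := by
    intro j hj
    rw [mem_range] at hj
    rw [show 2 * i + 1 - (i + 1 + j) = i - j from by omega]
  rw [Finset.sum_congr rfl e2] at key
  have hv := vdm n (2 * i + 1)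
  rw [key] at hv
  linarith [refl1]

lemma pairsum (n h : ℕ) (hh : h = n / 2) :
    2 * ∑ i ∈ range (h + 1), (Tr n (i + h + 1) + Tr n (h - i))
      = (2 * (h : ℤ) + 2 - (n % 2 : ℕ)) * ((n + n).choose n : ℤ) := by
  rcases Nat.even_or_odd n with ⟨m, hm⟩ | ⟨m, hm⟩
  · have hn2 : n = 2 * h := by omega
    have e : ∀ i ∈ range (h + 1),
        Tr n (i + h + 1) + Tr n (h - i) = ((n + n).choose n : ℤ) := by
      intro i hi
      rw [mem_range] at hi
      have t1 := Tr_pair n (h - i) (by omega)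
      rw [show n + 1 - (h - i) = i + h + 1 from by omega] at t1
      linarith
    rw [Finset.sum_congr rfl e, Finset.sum_const, card_range,
      show n % 2 = 0 from by omega, nsmul_eq_mul]
    push_cast
    ring
  · have hn2 : n = 2 * h + 1 := by omega
    have e : ∀ i ∈ range (h + 1), Tr n (i + h + 1) + Tr n (h - i)
        = ((n + n).choose n : ℤ) - (n.choose (h + 1 + i) : ℤ) ^ 2 := by
      intro i hi
      rw [mem_range] at hi
      have t1 := Tr_pair n (h - i) (by omega)
      rw [show n + 1 - (h - i) = (i + h + 1) + 1 from by omega, Tr_succ] at t1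
      rw [show h + 1 + i = i + h + 1 from by ring]
      linarith
    rw [Finset.sum_congr rfl e, Finset.sum_sub_distrib, Finset.sum_const, card_range]
    have t2 := Tr_shift n (h + 1) (h + 1)
    rw [show h + 1 + (h + 1) = n + 1 from by omega, Tr_full] at t2
    have t3 := Tr_pair n (h + 1) (by omega)
    rw [show n + 1 - (h + 1) = h + 1 from by omega] at t3
    rw [show n % 2 = 1 from by omega, nsmul_eq_mul]
    push_cast
    linarith

end BinAux


open BinAux in
/-- The binomial identity: twice the double sum of
`(C n (i+j) - C n (i-j-1) - C n (j-i-1))² - C n (2i) * C n (2j)` over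
`0 ≤ i, j ≤ ⌊n/2⌋` equals `(n+2) * C (2n) n - 3 * 2^(2n-1)`. -/
theorem binomial_identity (n : ℕ) (hn : 1 ≤ n) :
    2 * ∑ i ∈ Finset.range (n / 2 + 1), ∑ j ∈ Finset.range (n / 2 + 1),
        ((C n ((i : ℤ) + j) - C n ((i : ℤ) - j - 1) - C n ((j : ℤ) - i - 1)) ^ 2 -
          C n (2 * (i : ℤ)) * C n (2 * (j : ℤ))) =
      ((n : ℤ) + 2) * C (2 * n) n - 3 * 2 ^ (2 * n - 1) := by
  have hh2 : 2 * (n / 2) ≤ n := by omega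
  set h := n / 2 with hh
  -- expand the summand
  have expand : ∀ i ∈ range (h + 1), ∀ j ∈ range (h + 1),
      ((C n ((i : ℤ) + j) - C n ((i : ℤ) - j - 1) - C n ((j : ℤ) - i - 1)) ^ 2 -
          C n (2 * (i : ℤ)) * C n (2 * (j : ℤ)))
        = ((C n ((i : ℤ) + j)) ^ 2 + (C n ((i : ℤ) - j - 1)) ^ 2 + (C n ((j : ℤ) - i - 1)) ^ 2)
          - 2 * (C n ((i : ℤ) + j) * C n ((i : ℤ) - j - 1))
          - 2 * (C n ((i : ℤ) + j) * C n ((j : ℤ) - i - 1))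
          - (n.choose (2 * i) : ℤ) * (n.choose (2 * j) : ℤ) := by
    intro i hi j hj
    rw [mem_range] at hi hj
    have hbd : C n ((i : ℤ) - j - 1) * C n ((j : ℤ) - i - 1) = 0 := by
      rcases le_or_gt (i : ℤ) (j : ℤ) with hle | hlt
      · rw [C_neg n ((i : ℤ) - j - 1) (by omega), zero_mul]
      · rw [C_neg n ((j : ℤ) - i - 1) (by omega), mul_zero]
    have hci : C n (2 * (i : ℤ)) = (n.choose (2 * i) : ℤ) := by
      rw [show 2 * (i : ℤ) = ((2 * i : ℕ) : ℤ) from by push_cast; ring, C_coe n _ (by omega)]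
    have hcj : C n (2 * (j : ℤ)) = (n.choose (2 * j) : ℤ) := by
      rw [show 2 * (j : ℤ) = ((2 * j : ℕ) : ℤ) from by push_cast; ring, C_coe n _ (by omega)]
    rw [hci, hcj]
    linear_combination 2 * hbd
  rw [Finset.sum_congr rfl fun i hi => Finset.sum_congr rfl fun j hj => expand i hi j hj]
  simp only [Finset.sum_sub_distrib, ← Finset.mul_sum]
  -- T1 : the sum of three squares
  have e1 : ∑ i ∈ range (h + 1), ∑ j ∈ range (h + 1),
      ((C n ((i : ℤ) + j)) ^ 2 + (C n ((i : ℤ) - j - 1)) ^ 2 + (C n ((j : ℤ) - i - 1)) ^ 2)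
        = ∑ i ∈ range (h + 1), (Tr n (i + h + 1) + Tr n (h - i)) := by
    refine Finset.sum_congr rfl fun i hi => ?_
    rw [mem_range] at hi
    rw [Finset.sum_add_distrib, Finset.sum_add_distrib,
      sA n h i hh2 (by omega), sB n h i hh2 (by omega), sC n h i hh2 (by omega)]
    ring
  -- T2 : the cross sum
  have e2 : ∑ i ∈ range (h + 1), ∑ j ∈ range (h + 1),
      C n ((i : ℤ) + j) * C n ((i : ℤ) - j - 1)
        = ∑ i ∈ range (h + 1), ∑ j ∈ range i,
            (n.choose (i + j) : ℤ) * (n.choose (i - 1 - j) : ℤ) :=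
    Finset.sum_congr rfl fun i hi => innerX n h i hh2 (by rw [mem_range] at hi; omega)
  have e2' : ∑ i ∈ range (h + 1), ∑ j ∈ range i,
      (n.choose (i + j) : ℤ) * (n.choose (i - 1 - j) : ℤ)
        = ∑ i ∈ range h, ∑ j ∈ range (i + 1),
            (n.choose (i + 1 + j) : ℤ) * (n.choose (i + 1 - 1 - j) : ℤ) := by
    rw [Finset.sum_range_succ']
    simp
  have SumV : 2 * (∑ i ∈ range h, ∑ j ∈ range (i + 1),
      (n.choose (i + 1 + j) : ℤ) * (n.choose (i + 1 - 1 - j) : ℤ))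
        = ∑ i ∈ range h, (((2 * n).choose (2 * i + 1) : ℕ) : ℤ) := by
    rw [Finset.mul_sum]
    refine Finset.sum_congr rfl fun i _ => ?_
    have hv := two_V n i
    rw [show n + n = 2 * n from by ring] at hv
    rw [← hv]
    congr 1
  have O := Ohalf n hn
  rw [← hh] at O
  -- T3 equals T2
  have e4 : ∑ i ∈ range (h + 1), ∑ j ∈ range (h + 1),
      C n ((i : ℤ) + j) * C n ((j : ℤ) - i - 1)
        = ∑ i ∈ range (h + 1), ∑ j ∈ range (h + 1),
            C n ((i : ℤ) + j) * C n ((i : ℤ) - j - 1) := by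
    rw [Finset.sum_comm]
    exact Finset.sum_congr rfl fun x _ => Finset.sum_congr rfl fun y _ => by
      rw [add_comm ((y : ℤ)) ((x : ℤ))]
  -- T4
  have hE : ∑ i ∈ range (h + 1), (n.choose (2 * i) : ℤ) = 2 ^ (n - 1) := by
    rw [hh]
    exact even_sum n hn
  have e5 : ∑ i ∈ range (h + 1), ((n.choose (2 * i) : ℤ)
        * ∑ j ∈ range (h + 1), (n.choose (2 * j) : ℤ))
      = (2 : ℤ) ^ (n - 1) * 2 ^ (n - 1) := by
    rw [← Finset.sum_mul, hE]
  -- assembly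
  have p := pairsum n h hh
  rw [show n + n = 2 * n from by ring] at p
  rw [e1, e2, e2', e4, e2, e2', e5]
  have q : 4 * (∑ i ∈ range h, ∑ j ∈ range (i + 1),
      (n.choose (i + 1 + j) : ℤ) * (n.choose (i + 1 - 1 - j) : ℤ))
        = 2 ^ (2 * n - 1) - ((n % 2 : ℕ) : ℤ) * ((2 * n).choose n : ℤ) := by
    linarith [SumV, O]
  have hCn : C (2 * n) (n : ℤ) = ((2 * n).choose n : ℤ) := C_coe (2 * n) n (by omega)
  rw [hCn]
  have hpow1 : (2 : ℤ) ^ (n - 1) * 2 ^ (n - 1) * 2 = 2 ^ (2 * n - 1) := by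
    rw [← pow_add, ← pow_succ]
    congr 1
    omega
  have hcast : (n : ℤ) = 2 * (h : ℤ) + ((n % 2 : ℕ) : ℤ) := by omega
  linear_combination p - 2 * q - hpow1 - ((2 * n).choose n : ℤ) * hcast
end
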